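/- arXiv:1801.07307 — 6 statements merged into one kernel-verified Lean document; each statement's English description precedes it below -/
import Mathlib

section
/- If G is a finite simple graph of maximum average degree d with d ≥ 4, then its fractional DP-chromatic number satisfies χ*_DP(G) ≥ d/(2 ln d). -/
open scoped Classical

/-- A cover (in the sense of DP-coloring) of a simple graph `G`: a graph `H` on a finite
vertex set `W`, together with an assignment `L` of "lists" `L u ⊆ W` to the vertices of `G`,
such that the lists partition `W`, each list spans a clique, edges between distinct lists only
occur between lists of adjacent vertices, and for each edge `u v` of `G` the edges of `H`
between `L u` and `L v` form a (possibly empty) matching. -/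
structure DPCover {V : Type} (G : SimpleGraph V) where
  W : Type
  Wfin : Fintype W
  H : SimpleGraph W
  L : V → Set W
  part : ∀ x : W, ∃! u : V, x ∈ L u
  clique : ∀ u : V, ∀ x ∈ L u, ∀ y ∈ L u, x ≠ y → H.Adj x y
  cross : ∀ u v : V, u ≠ v → (∃ x ∈ L u, ∃ y ∈ L v, H.Adj x y) → G.Adj u v
  matching : ∀ u v : V, G.Adj u v → ∀ x ∈ L u, ∀ y ∈ L v, ∀ y' ∈ L v,
      H.Adj x y → H.Adj x y' → y = y'

namespace DPCover


lemma perm_count {k s : ℕ} (P Q : Finset (Fin k)) (hP : P.card = s) (hQ : Q.card = s) :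
    (Finset.univ.filter fun σ : Equiv.Perm (Fin k) => ∀ i ∈ P, σ i ∉ Q).card
      ≤ (k - s).factorial * ((k - s).descFactorial s) := by
  classical
  set bad := Finset.univ.filter fun σ : Equiv.Perm (Fin k) => ∀ i ∈ P, σ i ∉ Q with hbad
  have hcardP : Fintype.card {x : Fin k // x ∈ P} = s := by
    simpa [Fintype.card_coe] using hP
  have hcardPc : Fintype.card {x : Fin k // x ∉ P} = k - s := by
    rw [Fintype.card_subtype_compl, hcardP, Fintype.card_fin]
  have hcardQc : Fintype.card {x : Fin k // x ∉ Q} = k - s := by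
    rw [Fintype.card_subtype_compl]
    simpa [Fintype.card_coe, Fintype.card_fin] using congrArg (fun t => k - t) hQ
  set φ : Equiv.Perm (Fin k) → ({x : Fin k // x ∈ P} → Fin k) := fun σ x => σ x.1 with hφ
  have hmain := Finset.card_le_mul_card_image (f := φ) bad ((k - s).factorial) ?_
  · refine hmain.trans (Nat.mul_le_mul_left _ ?_)
    -- image bound
    rw [← Fintype.card_coe (bad.image φ)]
    have : Fintype.card ({x : Fin k // x ∈ P} ↪ {y : Fin k // y ∉ Q})
        = (k - s).descFactorial s := by
      rw [Fintype.card_embedding_eq, hcardP, hcardQc]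
    rw [← this]
    refine Fintype.card_le_of_injective (fun f => ?_) ?_
    · refine ⟨fun x => ⟨f.1 x, ?_⟩, ?_⟩
      · obtain ⟨σ, hσ, hσf⟩ := Finset.mem_image.1 f.2
        have hσ' : ∀ i ∈ P, σ i ∉ Q := by
          simpa [hbad] using hσ
        rw [← hσf]
        exact hσ' x.1 x.2
      · intro a b hab
        obtain ⟨σ, hσ, hσf⟩ := Finset.mem_image.1 f.2
        have hab' : f.1 a = f.1 b := congrArg Subtype.val hab
        rw [← hσf] at hab'
        exact Subtype.ext (σ.injective hab')
    · intro f g hfg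
      apply Subtype.ext
      funext x
      exact congrArg Subtype.val (DFunLike.congr_fun hfg x)
  · -- fiber bound
    intro f hf
    rw [← Fintype.card_coe]
    have hcard : Fintype.card ({x : Fin k // x ∉ P} ↪ {y : Fin k // y ∉ Finset.univ.image f})
        = (k - s).factorial := by
      rw [Fintype.card_embedding_eq, hcardPc]
      obtain ⟨σ₀, hσ₀, rfl⟩ := Finset.mem_image.1 hf
      have hinj : Function.Injective (φ σ₀) := fun a b hab => Subtype.ext (σ₀.injective hab)
      have : (Finset.univ.image (φ σ₀)).card = s := by
        rw [Finset.card_image_of_injective _ hinj, Finset.card_univ, hcardP]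
      rw [Fintype.card_subtype_compl, Fintype.card_coe, this, Fintype.card_fin,
        Nat.descFactorial_self]
    rw [← hcard]
    refine Fintype.card_le_of_injective (fun σ => ?_) ?_
    · obtain ⟨σ, hσ⟩ := σ
      have hmem := Finset.mem_filter.1 hσ
      have hφσ : φ σ = f := hmem.2
      refine ⟨fun x => ⟨σ x.1, ?_⟩, ?_⟩
      · intro hmemR
        obtain ⟨y, _, hy⟩ := Finset.mem_image.1 hmemR
        rw [← hφσ] at hy
        have : y.1 = x.1 := σ.injective hy
        exact x.2 (this ▸ y.2)
      · intro a b hab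
        exact Subtype.ext (σ.injective (congrArg Subtype.val hab))
    · rintro ⟨σ, hσ⟩ ⟨τ, hτ⟩ h
      apply Subtype.ext
      apply Equiv.ext
      intro x
      by_cases hx : x ∈ P
      · have h1 : φ σ = f := (Finset.mem_filter.1 hσ).2
        have h2 : φ τ = f := (Finset.mem_filter.1 hτ).2
        exact (congrFun h1 ⟨x, hx⟩).trans (congrFun h2 ⟨x, hx⟩).symm
      · exact congrArg Subtype.val (DFunLike.congr_fun h ⟨x, hx⟩)

variable {V : Type} {G : SimpleGraph V}

/-- A cover is `k`-fold if every list has exactly `k` elements. -/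
def IsKFold (C : DPCover G) (k : ℕ) : Prop := ∀ u : V, (C.L u).ncard = k

/-- A set of vertices of the cover graph is quasi-independent if it spans no cross-edges,
i.e. any edge of `H` inside `S` lies within a single list. -/
def QuasiIndep (C : DPCover G) (S : Set C.W) : Prop :=
  ∀ x ∈ S, ∀ y ∈ S, C.H.Adj x y → ∃ u : V, x ∈ C.L u ∧ y ∈ C.L u

/-- `G` has an `(η, 𝓗)`-coloring: a quasi-independent set meeting each list `L u`
in at least `η * |L u|` elements. -/
def HasFracColoring (C : DPCover G) (η : ℝ) : Prop :=
  ∃ S : Set C.W, C.QuasiIndep S ∧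
    ∀ u : V, η * ((C.L u).ncard : ℝ) ≤ ((C.L u ∩ S).ncard : ℝ)

/-- `G` has an `𝓗`-coloring: an independent set of `H` meeting every list in exactly
one vertex (equivalently, an independent set of size `|V(G)|`). -/
def HasColoring (C : DPCover G) : Prop :=
  ∃ S : Set C.W, (∀ x ∈ S, ∀ y ∈ S, ¬ C.H.Adj x y) ∧ ∀ u : V, (C.L u ∩ S).ncard = 1

end DPCover

/-- `θ_DP(G, k)`: the largest `η ∈ [0,1]` such that `G` admits an `(η, 𝓗)`-coloring for
every `k`-fold cover `𝓗` of `G`. -/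
noncomputable def thetaDP {V : Type} (G : SimpleGraph V) (k : ℕ) : ℝ :=
  sSup {η : ℝ | 0 ≤ η ∧ η ≤ 1 ∧
    ∀ C : DPCover G, C.IsKFold k → C.HasFracColoring η}

/-- The fractional DP-chromatic number `χ*_DP(G) = inf_{k ≥ 1} θ_DP(G, k)⁻¹`,
as an extended nonnegative real (so that `θ_DP(G,k) = 0` contributes `∞`). -/
noncomputable def chiDPStar {V : Type} (G : SimpleGraph V) : ENNReal :=
  ⨅ k ∈ {k : ℕ | 1 ≤ k}, (ENNReal.ofReal (thetaDP G k))⁻¹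

/-- A directed path of length `n` from `u` to `v` in the digraph given by the relation `D`:
a list of `n+1` distinct vertices starting at `u`, ending at `v`, with consecutive vertices
related by `D`. -/
def DirPath {V : Type} (D : V → V → Prop) (u v : V) (n : ℕ) : Prop :=
  ∃ l : List V, l.Chain' D ∧ l.Nodup ∧ l.head? = some u ∧ l.getLast? = some v ∧
    l.length = n + 1


variable {V : Type}

/-- Adjacency of the adversarial cover graph. -/
def cAdj (E : Set (Sym2 V)) (k : ℕ) (F : Sym2 V → (Fin k ≃ Fin k))
    (p q : V × Fin k) : Prop :=
  (p.1 = q.1 ∧ p.2 ≠ q.2) ∨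
    (p.1 ≠ q.1 ∧ ∃ e ∈ E, ((e.out = (p.1, q.1) ∧ q.2 = F e p.2) ∨
      (e.out = (q.1, p.1) ∧ p.2 = F e q.2)))

lemma cAdj_symm (E : Set (Sym2 V)) (k : ℕ) (F : Sym2 V → (Fin k ≃ Fin k)) :
    Symmetric (cAdj E k F) := by
  rintro p q (⟨h1, h2⟩ | ⟨h1, e, he, h2⟩)
  · exact Or.inl ⟨h1.symm, h2.symm⟩
  · exact Or.inr ⟨h1.symm, e, he, h2.symm⟩

lemma cAdj_irrefl (E : Set (Sym2 V)) (k : ℕ) (F : Sym2 V → (Fin k ≃ Fin k)) :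
    ∀ p, ¬ cAdj E k F p p := by
  rintro p (⟨_, h2⟩ | ⟨h1, _⟩) <;> simp_all

/-- The adversarial cover. -/
noncomputable def mkCover [Fintype V] (G : SimpleGraph V) (E : Set (Sym2 V))
    (hE : E ⊆ G.edgeSet) (k : ℕ) (F : Sym2 V → (Fin k ≃ Fin k)) : DPCover G where
  W := V × Fin k
  Wfin := inferInstance
  H := ⟨cAdj E k F, ⟨fun _ _ h => cAdj_symm E k F h⟩, ⟨cAdj_irrefl E k F⟩⟩
  L := fun u => {p | p.1 = u}
  part := fun p => ⟨p.1, rfl, fun y hy => hy.symm⟩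
  clique := by
    rintro u x hx y hy hxy
    refine Or.inl ⟨hx.trans hy.symm, fun h2 => hxy ?_⟩
    exact Prod.ext (hx.trans hy.symm) h2
  cross := by
    rintro u v huv ⟨x, hx, y, hy, (⟨h1, _⟩ | ⟨h1, e, he, hcase⟩)⟩
    · exact absurd (hx ▸ hy ▸ h1) huv
    · have hee : e ∈ G.edgeSet := hE he
      rcases hcase with ⟨hout, _⟩ | ⟨hout, _⟩
      · have : e = s(u, v) := by
          rw [← e.out_eq, hout, hx, hy]
        rw [this] at hee
        exact (G.mem_edgeSet).1 hee
      · have : e = s(v, u) := by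
          rw [← e.out_eq, hout, hx, hy]
        rw [this] at hee
        exact ((G.mem_edgeSet).1 hee).symm
  matching := by
    rintro u v huv x hx y hy y' hy' hadj hadj'
    have hne : x.1 ≠ y.1 := by rw [hx, hy]; exact G.ne_of_adj huv
    have hne' : x.1 ≠ y'.1 := by rw [hx, hy']; exact G.ne_of_adj huv
    rcases hadj with ⟨h1, _⟩ | ⟨_, e, he, hc⟩
    · exact absurd h1 hne
    rcases hadj' with ⟨h1, _⟩ | ⟨_, e', he', hc'⟩
    · exact absurd h1 hne'
    -- both e, e' equal s(u,v) essentially; unify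
    have hyy' : y.1 = y'.1 := hy.trans hy'.symm
    have hee' : e = e' := by
      rcases hc with ⟨hout, _⟩ | ⟨hout, _⟩ <;> rcases hc' with ⟨hout', _⟩ | ⟨hout', _⟩ <;>
        rw [← e.out_eq, ← e'.out_eq, hout, hout'] <;>
        simp [Sym2.mk, hyy', Sym2.eq_swap] <;> try exact Sym2.eq_swap
    subst hee'
    rcases hc with ⟨hout, heq⟩ | ⟨hout, heq⟩ <;> rcases hc' with ⟨hout', heq'⟩ | ⟨hout', heq'⟩
    · exact Prod.ext hyy' (heq.trans heq'.symm)
    · exfalso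
      have : (x.1, y.1) = (y'.1, x.1) := hout ▸ hout'
      have h1 := congrArg Prod.fst this
      simp only at h1
      exact hne' h1
    · exfalso
      have : (y.1, x.1) = (x.1, y'.1) := hout ▸ hout'
      have h1 := congrArg Prod.fst this
      simp only at h1
      exact hne h1.symm
    · refine Prod.ext hyy' ?_
      have := heq.symm.trans heq'
      exact (F e).injective this

lemma ncard_list (u : V) (k : ℕ) : ({p : V × Fin k | p.1 = u}).ncard = k := by
  have h : {p : V × Fin k | p.1 = u} = (fun i => (u, i)) '' Set.univ := by
    ext p
    constructor
    · rintro rfl0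
      exact ⟨p.2, trivial, by rw [← rfl0]⟩
    · rintro ⟨i, _, rfl⟩; rfl
  rw [h, Set.ncard_image_of_injective _ (fun a b hab => (Prod.ext_iff.1 hab).2),
    Set.ncard_univ, Nat.card_eq_fintype_card, Fintype.card_fin]

lemma mkCover_isKFold [Fintype V] (G : SimpleGraph V) (E : Set (Sym2 V))
    (hE : E ⊆ G.edgeSet) (k : ℕ) (F : Sym2 V → (Fin k ≃ Fin k)) :
    (mkCover G E hE k F).IsKFold k := fun u => ncard_list u k
lemma count_core {ι κ : Type} [Fintype ι] [Fintype κ] (k s : ℕ)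
    (E' : Finset ι) (ends : ι → κ × κ)
    (B : (ι → (Fin k ≃ Fin k)) → κ → Finset (Fin k))
    (hBcard : ∀ F u, (B F u).card = s)
    (hcompat : ∀ F, ∀ e ∈ E', ∀ i ∈ B F (ends e).1, (F e) i ∉ B F (ends e).2) :
    k.factorial ^ (Fintype.card ι) ≤
      ((k - s).factorial * (k - s).descFactorial s) ^ E'.card
        * k.factorial ^ (Fintype.card ι - E'.card)
        * (k.choose s) ^ (Fintype.card κ) := by
  classical
  have hkfact : Fintype.card (Fin k ≃ Fin k) = k.factorial := by
    simpa [Fintype.card_fin] using Fintype.card_perm (α := Fin k)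
  have hΩ : Fintype.card (ι → (Fin k ≃ Fin k)) = k.factorial ^ Fintype.card ι := by
    rw [Fintype.card_fun, hkfact]
  set K := ((k - s).factorial * (k - s).descFactorial s) ^ E'.card
        * k.factorial ^ (Fintype.card ι - E'.card) with hK
  have hmain : (Finset.univ : Finset (ι → (Fin k ≃ Fin k))).card
      ≤ K * (Finset.univ.image B).card := by
    apply Finset.card_le_mul_card_image
    intro b hb
    -- fiber bound
    set T : ι → Finset (Fin k ≃ Fin k) := fun e =>
      if e ∈ E' then Finset.univ.filter (fun σ => ∀ i ∈ b (ends e).1, σ i ∉ b (ends e).2)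
      else Finset.univ with hT
    have hsub : (Finset.univ.filter fun F => B F = b) ⊆ Fintype.piFinset T := by
      intro F hF
      have hBF : B F = b := (Finset.mem_filter.1 hF).2
      rw [Fintype.mem_piFinset]
      intro e
      by_cases he : e ∈ E'
      · simp only [hT, he, if_pos, Finset.mem_filter, Finset.mem_univ, true_and]
        rw [← hBF]
        exact hcompat F e he
      · simp [hT, he]
    refine (Finset.card_le_card hsub).trans ?_
    rw [Fintype.card_piFinset, hK]
    rw [← Finset.prod_mul_prod_compl E' (fun e => (T e).card)]
    apply Nat.mul_le_mul
    · apply Finset.prod_le_pow_card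
      intro e he
      simp only [hT, he, if_pos]
      obtain ⟨F₀, _, hF₀⟩ := Finset.mem_image.1 hb
      exact DPCover.perm_count _ _ (by rw [← hF₀]; exact hBcard F₀ _) (by rw [← hF₀]; exact hBcard F₀ _)
    · have hcc : E'ᶜ.card = Fintype.card ι - E'.card := Finset.card_compl E'
      rw [← hcc]
      apply Finset.prod_le_pow_card
      intro e he
      have : e ∉ E' := by simpa using he
      simp [hT, this, hkfact]
  have himg : (Finset.univ.image B).card ≤ (k.choose s) ^ (Fintype.card κ) := by
    have hsub : Finset.univ.image B ⊆
        Fintype.piFinset (fun _ : κ => Finset.powersetCard s Finset.univ) := by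
      intro b hb
      obtain ⟨F₀, _, hF₀⟩ := Finset.mem_image.1 hb
      rw [Fintype.mem_piFinset]
      intro u
      rw [Finset.mem_powersetCard_univ, ← hF₀]
      exact hBcard F₀ u
    refine (Finset.card_le_card hsub).trans ?_
    rw [Fintype.card_piFinset]
    rw [Finset.prod_const]
    rw [Finset.card_powersetCard, Finset.card_univ, Fintype.card_fin, Finset.card_univ]
  calc k.factorial ^ (Fintype.card ι) = (Finset.univ : Finset (ι → (Fin k ≃ Fin k))).card := by
        rw [Finset.card_univ, hΩ]
    _ ≤ K * (Finset.univ.image B).card := hmain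
    _ ≤ K * (k.choose s) ^ (Fintype.card κ) := Nat.mul_le_mul_left _ himg
lemma two_log_d_ge_e {d : ℝ} (hd : 4 ≤ d) : Real.exp 1 ≤ 2 * Real.log d := by
  have h4 : Real.log 4 ≤ Real.log d := Real.log_le_log (by norm_num) hd
  have h2 : Real.log 4 = 2 * Real.log 2 := by
    rw [show (4:ℝ) = 2 ^ 2 by norm_num, Real.log_pow]
    push_cast; ring
  have hl2 : (0.6931471803 : ℝ) < Real.log 2 := Real.log_two_gt_d9
  have he : Real.exp 1 < 2.7182818286 := Real.exp_one_lt_d9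
  nlinarith

set_option maxHeartbeats 2000000 in
lemma analytic (d η : ℝ) (k s n m : ℕ) (hd : 4 ≤ d)
    (hs1 : 1 ≤ s) (hsk : s ≤ k) (hn : 1 ≤ n) (hm : 1 ≤ m)
    (hηk : η * k ≤ s) (hηgt : 2 * Real.log d / d < η)
    (h2m : 2 * (m:ℝ) = d * n)
    (hineq : ((k.factorial : ℝ)) ^ m ≤
      (((k - s).factorial : ℝ) * ((k - s).descFactorial s : ℝ)) ^ m
        * ((k.choose s : ℝ)) ^ n) :
    False := by
  have hd0 : (0:ℝ) < d := by linarith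
  have hlogd : 0 < Real.log d := Real.log_pos (by linarith)
  have hη0 : 0 < η := lt_trans (by positivity) hηgt
  by_cases h2s : k < 2 * s
  · have hz : (k - s).descFactorial s = 0 := Nat.descFactorial_eq_zero_iff_lt.2 (by omega)
    rw [hz] at hineq
    push_cast at hineq
    rw [mul_zero, zero_pow (by omega : m ≠ 0), zero_mul] at hineq
    have h1 : (0:ℝ) < (k.factorial:ℝ)^m := by positivity
    linarith
  push_neg at h2s
  have hsk' : s < k := by omega
  have hK0 : (0:ℝ) < (k:ℝ) := by exact_mod_cast (by omega : 0 < k)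
  have hS0 : (0:ℝ) < (s:ℝ) := by exact_mod_cast (by omega : 0 < s)
  have hKS0 : (0:ℝ) < (k:ℝ) - (s:ℝ) := by
    have : (s:ℝ) < (k:ℝ) := by exact_mod_cast hsk'
    linarith
  have hCpos : (0:ℝ) < (k.choose s : ℝ) := by exact_mod_cast Nat.choose_pos hsk
  have hFspos : (0:ℝ) < (s.factorial : ℝ) := by exact_mod_cast s.factorial_pos
  have hF0pos : (0:ℝ) < ((k-s).factorial : ℝ) := by exact_mod_cast (k-s).factorial_pos
  have hD1pos : (0:ℝ) < (k.descFactorial s : ℝ) := by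
    have : k.descFactorial s ≠ 0 := fun h =>
      absurd (Nat.descFactorial_eq_zero_iff_lt.1 h) (not_lt.2 hsk)
    exact_mod_cast Nat.pos_of_ne_zero this
  have hD0pos : (0:ℝ) < ((k-s).descFactorial s : ℝ) := by
    have : (k-s).descFactorial s ≠ 0 := fun h =>
      absurd (Nat.descFactorial_eq_zero_iff_lt.1 h) (by omega)
    exact_mod_cast Nat.pos_of_ne_zero this
  -- factorization of k!
  have hkf : (k.factorial : ℝ)
      = (k.choose s:ℝ) * (s.factorial:ℝ) * ((k-s).factorial:ℝ) := by
    exact_mod_cast congrArg (Nat.cast : ℕ → ℝ) (Nat.choose_mul_factorial_mul_factorial hsk).symm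
  have hD1C : (k.descFactorial s : ℝ) = (s.factorial : ℝ) * (k.choose s : ℝ) := by
    exact_mod_cast congrArg (Nat.cast : ℕ → ℝ) (Nat.descFactorial_eq_factorial_mul_choose k s)
  -- cancel (k-s)! from the main inequality
  have hq : ((k.choose s:ℝ) * (s.factorial:ℝ))^m
      ≤ ((k-s).descFactorial s:ℝ)^m * (k.choose s:ℝ)^n := by
    have h := hineq
    rw [hkf] at h
    have h2 : ((k.choose s:ℝ) * (s.factorial:ℝ))^m * ((k-s).factorial:ℝ)^m
        ≤ (((k-s).descFactorial s:ℝ)^m * (k.choose s:ℝ)^n) * ((k-s).factorial:ℝ)^m := by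
      calc ((k.choose s:ℝ) * (s.factorial:ℝ))^m * ((k-s).factorial:ℝ)^m
          = ((k.choose s:ℝ) * (s.factorial:ℝ) * ((k-s).factorial:ℝ))^m :=
            (mul_pow _ _ m).symm
        _ ≤ (((k-s).factorial:ℝ) * ((k-s).descFactorial s:ℝ))^m * ((k.choose s:ℝ))^n := h
        _ = (((k-s).descFactorial s:ℝ)^m * (k.choose s:ℝ)^n) * ((k-s).factorial:ℝ)^m := by
            rw [mul_pow]; ring
    exact le_of_mul_le_mul_right h2 (by positivity)
  -- termwise product bound
  have htw : ((k-s).descFactorial s : ℝ) * (k:ℝ)^s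
      ≤ (k.descFactorial s : ℝ) * ((k:ℝ) - (s:ℝ))^s := by
    have e0 : ((k-s).descFactorial s : ℝ) = ∏ i ∈ Finset.range s, ((k:ℝ) - (s:ℝ) - (i:ℝ)) := by
      rw [Nat.descFactorial_eq_prod_range, Nat.cast_prod]
      refine Finset.prod_congr rfl fun i hi => ?_
      have hi' : i < s := Finset.mem_range.1 hi
      rw [Nat.cast_sub (by omega), Nat.cast_sub hsk]
    have e1 : (k.descFactorial s : ℝ) = ∏ i ∈ Finset.range s, ((k:ℝ) - (i:ℝ)) := by
      rw [Nat.descFactorial_eq_prod_range, Nat.cast_prod]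
      refine Finset.prod_congr rfl fun i hi => ?_
      have hi' : i < s := Finset.mem_range.1 hi
      rw [Nat.cast_sub (by omega)]
    rw [e0, e1, show ((k:ℝ))^s = ∏ _i ∈ Finset.range s, (k:ℝ) from by
        rw [Finset.prod_const, Finset.card_range],
      show (((k:ℝ) - (s:ℝ)))^s = ∏ _i ∈ Finset.range s, ((k:ℝ) - (s:ℝ)) from by
        rw [Finset.prod_const, Finset.card_range],
      ← Finset.prod_mul_distrib, ← Finset.prod_mul_distrib]
    refine Finset.prod_le_prod (fun i hi => ?_) (fun i hi => ?_)
    · have hi' : i < s := Finset.mem_range.1 hi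
      have hiS : (i:ℝ) ≤ (s:ℝ) - 1 := by
        have : (i:ℝ) + 1 ≤ (s:ℝ) := by exact_mod_cast hi'
        linarith
      have h2s' : 2*(s:ℝ) ≤ (k:ℝ) := by exact_mod_cast h2s
      have : 0 ≤ (k:ℝ) - (s:ℝ) - (i:ℝ) := by linarith
      positivity
    · have hi' : i < s := Finset.mem_range.1 hi
      have hi0 : (0:ℝ) ≤ (i:ℝ) := by positivity
      nlinarith [mul_nonneg hi0 hS0.le]
  -- pass to logarithms
  have lA : (m:ℝ) * Real.log ((k.choose s:ℝ) * (s.factorial:ℝ))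
      ≤ (m:ℝ) * Real.log ((k-s).descFactorial s : ℝ) + (n:ℝ) * Real.log (k.choose s:ℝ) := by
    have h := Real.log_le_log (by positivity) hq
    rw [Real.log_pow,
      Real.log_mul (by positivity : ((((k-s).descFactorial s : ℕ):ℝ)^m) ≠ 0)
        (by positivity : (((k.choose s : ℕ):ℝ)^n) ≠ 0),
      Real.log_pow, Real.log_pow] at h
    linarith
  have lB : Real.log ((k-s).descFactorial s : ℝ) + (s:ℝ) * Real.log (k:ℝ)
      ≤ Real.log (k.descFactorial s : ℝ) + (s:ℝ) * Real.log ((k:ℝ) - (s:ℝ)) := by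
    have := Real.log_le_log (by positivity) htw
    rw [Real.log_mul (by positivity) (by positivity),
      Real.log_mul (by positivity) (by positivity), Real.log_pow, Real.log_pow] at this
    linarith
  have lC : Real.log (k.descFactorial s : ℝ)
      = Real.log (s.factorial:ℝ) + Real.log (k.choose s:ℝ) := by
    rw [hD1C, Real.log_mul (by positivity) (by positivity)]
  have lD : Real.log (k.descFactorial s : ℝ) ≤ (s:ℝ) * Real.log (k:ℝ) := by
    have h1 : (k.descFactorial s : ℝ) ≤ (k:ℝ)^s := by
      exact_mod_cast Nat.descFactorial_le_pow k s
    have := Real.log_le_log hD1pos h1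
    rwa [Real.log_pow] at this
  have lE : (s:ℝ) * Real.log (s:ℝ) ≤ (s:ℝ) + Real.log (s.factorial:ℝ) := by
    have h1 : ((s:ℝ))^s / (s.factorial:ℝ) ≤ Real.exp (s:ℝ) :=
      Real.pow_div_factorial_le_exp ((s:ℝ)) (by positivity) s
    have h2 : ((s:ℝ))^s ≤ Real.exp (s:ℝ) * (s.factorial:ℝ) := by
      rw [div_le_iff₀ hFspos] at h1; linarith
    have := Real.log_le_log (by positivity) h2
    rwa [Real.log_pow, Real.log_mul (Real.exp_ne_zero _) (by positivity),
      Real.log_exp] at this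
  have lF : Real.log ((k:ℝ) - (s:ℝ)) ≤ Real.log (k:ℝ) - (s:ℝ)/(k:ℝ) := by
    have h1 : Real.log (((k:ℝ) - (s:ℝ))/(k:ℝ)) ≤ ((k:ℝ) - (s:ℝ))/(k:ℝ) - 1 :=
      Real.log_le_sub_one_of_pos (by positivity)
    rw [Real.log_div (by positivity) (by positivity)] at h1
    have h2 : ((k:ℝ) - (s:ℝ))/(k:ℝ) - 1 = -((s:ℝ)/(k:ℝ)) := by field_simp; ring
    rw [h2] at h1; linarith
  -- assemble
  have hm0 : (0:ℝ) < (m:ℝ) := by exact_mod_cast (by omega : 0 < m)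
  have hn0 : (0:ℝ) < (n:ℝ) := by exact_mod_cast (by omega : 0 < n)
  have hC2 : (m:ℝ) * Real.log (k.descFactorial s : ℝ)
      = (m:ℝ) * Real.log (s.factorial:ℝ) + (m:ℝ) * Real.log (k.choose s:ℝ) := by
    rw [lC]; ring
  have hB2 := mul_le_mul_of_nonneg_left lB hm0.le
  have hlogmul : Real.log ((k.choose s:ℝ) * (s.factorial:ℝ))
      = Real.log (k.choose s:ℝ) + Real.log (s.factorial:ℝ) :=
    Real.log_mul (by positivity) (by positivity)
  rw [hlogmul] at lA
  have step1 : 0 ≤ (m:ℝ) * (s:ℝ) * (Real.log ((k:ℝ)-(s:ℝ)) - Real.log (k:ℝ))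
      + (n:ℝ) * Real.log (k.choose s:ℝ) := by linarith [lA, hB2, hC2]
  have step2 : Real.log (k.choose s:ℝ)
      ≤ (s:ℝ) * Real.log (k:ℝ) - (s:ℝ) * Real.log (s:ℝ) + (s:ℝ) := by
    linarith [lC, lD, lE]
  have step2n := mul_le_mul_of_nonneg_left step2 hn0.le
  have step3 : (m:ℝ) * (s:ℝ) * (Real.log ((k:ℝ)-(s:ℝ)) - Real.log (k:ℝ))
      ≤ (m:ℝ) * (s:ℝ) * (-((s:ℝ)/(k:ℝ))) := by
    have h1 : Real.log ((k:ℝ)-(s:ℝ)) - Real.log (k:ℝ) ≤ -((s:ℝ)/(k:ℝ)) := by linarith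
    exact mul_le_mul_of_nonneg_left h1 (by positivity)
  have lmain : 0 ≤ (m:ℝ) * (s:ℝ) * (-((s:ℝ)/(k:ℝ)))
      + (n:ℝ) * ((s:ℝ) * Real.log (k:ℝ) - (s:ℝ) * Real.log (s:ℝ) + (s:ℝ)) := by
    linarith [step1, step3, step2n]
  -- substitute m = d n / 2 and factor out n * s
  have hm2 : (m:ℝ) = d * (n:ℝ) / 2 := by linarith
  have key : (m:ℝ) * (s:ℝ) * (-((s:ℝ)/(k:ℝ)))
      + (n:ℝ) * ((s:ℝ) * Real.log (k:ℝ) - (s:ℝ) * Real.log (s:ℝ) + (s:ℝ))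
      = ((n:ℝ)*(s:ℝ)) * (1 + Real.log (k:ℝ) - Real.log (s:ℝ)
          - (d/2) * ((s:ℝ)/(k:ℝ))) := by
    rw [hm2]; ring
  rw [key] at lmain
  have hns : (0:ℝ) < (n:ℝ)*(s:ℝ) := by positivity
  have hfin : 0 ≤ 1 + Real.log (k:ℝ) - Real.log (s:ℝ) - (d/2) * ((s:ℝ)/(k:ℝ)) :=
    nonneg_of_mul_nonneg_right lmain hns
  -- but the RHS is negative
  have ht : η ≤ (s:ℝ)/(k:ℝ) := by
    rw [le_div_iff₀ hK0]; linarith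
  have hlogt : Real.log η ≤ Real.log (s:ℝ) - Real.log (k:ℝ) := by
    have h := Real.log_le_log hη0 ht
    rwa [Real.log_div (by positivity) (by positivity)] at h
  have hdt : Real.log d < (d/2) * ((s:ℝ)/(k:ℝ)) := by
    have h1 : Real.log d < (d/2) * η := by
      rw [div_lt_iff₀ hd0] at hηgt
      nlinarith
    have h2 : (d/2) * η ≤ (d/2) * ((s:ℝ)/(k:ℝ)) :=
      mul_le_mul_of_nonneg_left ht (by linarith)
    linarith
  have hηe : 1 - Real.log d ≤ Real.log η := by
    have he2 : Real.exp 1 ≤ 2 * Real.log d := two_log_d_ge_e hd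
    have hed : Real.exp 1 / d ≤ η := by
      rw [div_le_iff₀ hd0]
      rw [div_lt_iff₀ hd0] at hηgt
      linarith
    have h := Real.log_le_log (by positivity) hed
    rwa [Real.log_div (Real.exp_ne_zero 1) (by positivity), Real.log_exp] at h
  linarith
set_option maxHeartbeats 2000000 in
lemma main_contra {V : Type} [Fintype V] (G : SimpleGraph V) (d : ℝ) (hd : 4 ≤ d)
    (U : Set V) (hUne : U.Nonempty)
    (hUeq : 2 * (({e ∈ G.edgeSet | ∀ x ∈ e, x ∈ U}).ncard : ℝ) = d * (U.ncard : ℝ))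
    (k : ℕ) (hk : 1 ≤ k) (η : ℝ) (hη1 : η ≤ 1)
    (hηgt : 2 * Real.log d / d < η)
    (hcol : ∀ C : DPCover G, C.IsKFold k → C.HasFracColoring η) : False := by
  classical
  have hd0 : (0:ℝ) < d := by linarith
  have hlogd : 0 < Real.log d := Real.log_pos (by linarith)
  have hη0 : 0 < η := lt_trans (by positivity) hηgt
  set E : Set (Sym2 V) := {e ∈ G.edgeSet | ∀ x ∈ e, x ∈ U} with hEdef
  have hEsub : E ⊆ G.edgeSet := fun e he => he.1
  set E' : Finset (Sym2 V) := E.toFinset with hE'def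
  set m := E'.card with hmdef
  set n := U.ncard with hndef
  have hn1 : 1 ≤ n := (Set.ncard_pos (Set.toFinite U)).2 hUne
  have hmncard : E.ncard = m := Set.ncard_eq_toFinset_card' E
  have h2m : 2 * (m:ℝ) = d * (n:ℝ) := by rw [← hmncard]; exact_mod_cast hUeq
  have hm1 : 1 ≤ m := by
    by_contra hm0
    have : m = 0 := by omega
    rw [this] at h2m
    have hnn : (1:ℝ) ≤ (n:ℝ) := by exact_mod_cast hn1
    push_cast at h2m
    nlinarith
  set s := ⌈η * (k:ℝ)⌉₊ with hsdef
  have hk1 : (1:ℝ) ≤ (k:ℝ) := by exact_mod_cast hk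
  have hs1 : 1 ≤ s := Nat.ceil_pos.2 (by positivity)
  have hsk : s ≤ k := by
    apply Nat.ceil_le.2
    nlinarith
  have hηk : η * (k:ℝ) ≤ (s:ℝ) := Nat.le_ceil _
  -- choose colorings for every cover in the family
  choose SS hQI hcc using fun F : Sym2 V → (Fin k ≃ Fin k) =>
    hcol (mkCover G E hEsub k F) (mkCover_isKFold G E hEsub k F)
  -- the trace of the coloring on each list
  set A : (Sym2 V → (Fin k ≃ Fin k)) → V → Finset (Fin k) :=
    fun F u => Finset.univ.filter (fun i : Fin k => ((u,i) : V × Fin k) ∈ SS F) with hAdef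
  have hAcard : ∀ F u, s ≤ (A F u).card := by
    intro F u
    have h1 := hcc F u
    have hL : (mkCover G E hEsub k F).L u = {p : V × Fin k | p.1 = u} := rfl
    have hLn : ((mkCover G E hEsub k F).L u).ncard = k := ncard_list u k
    have himg : ((mkCover G E hEsub k F).L u ∩ SS F)
        = (fun i : Fin k => ((u,i) : V × Fin k)) '' ↑(A F u) := by
      rw [hL]
      ext p
      constructor
      · rintro ⟨hp1, hp2⟩
        refine ⟨p.2, ?_, ?_⟩
        · simp only [hAdef, Finset.coe_filter, Set.mem_setOf_eq, Finset.mem_univ, true_and]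
          have : ((u : V), p.2) = p := by
            rw [← hp1]; exact Prod.mk.eta
          rw [this]; exact hp2
        · have : ((u : V), p.2) = p := by rw [← hp1]; exact Prod.mk.eta
          exact this
      · rintro ⟨i, hi, rfl⟩
        simp only [hAdef, Finset.coe_filter, Set.mem_setOf_eq, Finset.mem_univ, true_and] at hi
        exact ⟨rfl, hi⟩
    have hinj : Function.Injective (fun i : Fin k => ((u,i) : V × Fin k)) :=
      fun a b hab => (Prod.ext_iff.1 hab).2
    have hcard2 : ((mkCover G E hEsub k F).L u ∩ SS F).ncard = (A F u).card := by
      rw [himg]; exact (Set.ncard_image_of_injective _ hinj).trans (Set.ncard_coe_finset _)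
    rw [hLn, hcard2] at h1
    exact Nat.ceil_le.2 h1
  -- shrink to exactly s elements
  choose B hBsub hBcard using fun (F : Sym2 V → (Fin k ≃ Fin k)) (u : ↥U) =>
    Finset.exists_subset_card_eq (hAcard F u.1)
  -- endpoints of edges, as elements of U
  have hmem1 : ∀ e, e ∈ E' → e.out.1 ∈ U := fun e he =>
    (Set.mem_toFinset.1 he).2 _ (Sym2.out_fst_mem e)
  have hmem2 : ∀ e, e ∈ E' → e.out.2 ∈ U := fun e he =>
    (Set.mem_toFinset.1 he).2 _ (Sym2.out_snd_mem e)
  obtain ⟨u0, hu0⟩ := hUne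
  set ends : Sym2 V → ↥U × ↥U := fun e =>
    if h : e ∈ E' then (⟨e.out.1, hmem1 e h⟩, ⟨e.out.2, hmem2 e h⟩)
    else (⟨u0, hu0⟩, ⟨u0, hu0⟩) with hendsdef
  -- compatibility from quasi-independence
  have hcompat : ∀ F, ∀ e ∈ E', ∀ i ∈ B F (ends e).1, (F e) i ∉ B F (ends e).2 := by
    intro F e he i hi hcontra
    have hends : ends e = (⟨e.out.1, hmem1 e he⟩, ⟨e.out.2, hmem2 e he⟩) := dif_pos he
    rw [hends] at hi hcontra
    have heE : e ∈ E := Set.mem_toFinset.1 he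
    have hne : e.out.1 ≠ e.out.2 := by
      intro h
      apply G.not_isDiag_of_mem_edgeSet (hEsub heE)
      rw [← e.out_eq, Sym2.mk_isDiag_iff]
      exact h
    have hiA : i ∈ A F e.out.1 := hBsub F _ hi
    have hjA : (F e) i ∈ A F e.out.2 := hBsub F _ hcontra
    have hiS : ((e.out.1, i) : V × Fin k) ∈ SS F := by
      simpa [hAdef] using hiA
    have hjS : ((e.out.2, (F e) i) : V × Fin k) ∈ SS F := by
      simpa [hAdef] using hjA
    have hadj : (mkCover G E hEsub k F).H.Adj (e.out.1, i) (e.out.2, (F e) i) := by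
      refine Or.inr ⟨hne, e, heE, Or.inl ⟨?_, rfl⟩⟩
      exact Prod.mk.eta.symm
    obtain ⟨w, hw1, hw2⟩ := hQI F (e.out.1, i) hiS (e.out.2, (F e) i) hjS hadj
    have h1 : e.out.1 = w := hw1
    have h2 : e.out.2 = w := hw2
    exact hne (h1.trans h2.symm)
  -- counting
  have hcount := count_core (ι := Sym2 V) (κ := ↥U) k s E' ends B
    (fun F u => hBcard F u) hcompat
  set M := Fintype.card (Sym2 V) with hMdef
  have hcardU : Fintype.card ↥U = n := by
    rw [hndef, ← Nat.card_coe_set_eq, Nat.card_eq_fintype_card]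
  rw [hcardU] at hcount
  have hmM : m ≤ M := by
    rw [hmdef, hMdef]
    exact le_trans (Finset.card_le_univ E') (le_of_eq (Finset.card_univ))
  have hsplit : k.factorial ^ M = k.factorial ^ m * k.factorial ^ (M - m) := by
    rw [← pow_add]
    congr 1
    omega
  have hrearr : ((k - s).factorial * (k - s).descFactorial s) ^ m * k.factorial ^ (M - m)
        * (k.choose s) ^ n
      = (((k - s).factorial * (k - s).descFactorial s) ^ m * (k.choose s) ^ n)
        * k.factorial ^ (M - m) := by ring
  rw [hsplit, hrearr] at hcount
  have hfinN : k.factorial ^ m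
      ≤ ((k - s).factorial * (k - s).descFactorial s) ^ m * (k.choose s) ^ n :=
    Nat.le_of_mul_le_mul_right hcount (pow_pos k.factorial_pos _)
  have hcast : ((k.factorial : ℝ)) ^ m ≤
      (((k - s).factorial : ℝ) * ((k - s).descFactorial s : ℝ)) ^ m
        * ((k.choose s : ℝ)) ^ n := by
    exact_mod_cast hfinN
  exact analytic d η k s n m hd hs1 hsk hn1 hm1 hηk hηgt h2m hcast

/-- If `G` is a finite simple graph of maximum average degree `d ≥ 4`
(i.e. every nonempty vertex subset `U` spans at most `d * |U| / 2` edges, with equality for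
some `U`), then `χ*_DP(G) ≥ d / (2 * ln d)`. -/
theorem stmt3 {V : Type} [Fintype V] (G : SimpleGraph V) (d : ℝ) (hd : 4 ≤ d)
    (hmad_le : ∀ U : Set V, U.Nonempty →
      2 * (({e ∈ G.edgeSet | ∀ x ∈ e, x ∈ U}).ncard : ℝ) ≤ d * (U.ncard : ℝ))
    (hmad_eq : ∃ U : Set V, U.Nonempty ∧
      2 * (({e ∈ G.edgeSet | ∀ x ∈ e, x ∈ U}).ncard : ℝ) = d * (U.ncard : ℝ)) :
    ENNReal.ofReal (d / (2 * Real.log d)) ≤ chiDPStar G := by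
  obtain ⟨U, hUne, hUeq⟩ := hmad_eq
  have hlogd : 0 < Real.log d := Real.log_pos (by linarith)
  have hβ : 0 < 2 * Real.log d / d := by positivity
  rw [chiDPStar]
  refine le_iInf₂ fun k hk => ?_
  have hθ : thetaDP G k ≤ 2 * Real.log d / d := by
    apply Real.sSup_le _ hβ.le
    rintro η ⟨hη0, hη1, hcol⟩
    by_contra hgt
    push_neg at hgt
    exact main_contra G d hd U hUne hUeq k hk η hη1 hgt hcol
  calc ENNReal.ofReal (d / (2 * Real.log d))
      = (ENNReal.ofReal (2 * Real.log d / d))⁻¹ := by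
        rw [← ENNReal.ofReal_inv_of_pos hβ, inv_div]
    _ ≤ (ENNReal.ofReal (thetaDP G k))⁻¹ :=
        ENNReal.inv_le_inv' (ENNReal.ofReal_le_ofReal hθ)
end

section
/- Let G be a finite simple graph whose average degree 2|E(G)|/|V(G)| equals d, where d ≥ 4 is a real number. Then for every integer k ≥ 1 there exists a k-fold cover 𝓗 of G such that G admits no (η, 𝓗)-coloring with η = ⌈(2 ln d / d)·k⌉ / k; consequently θ_DP(G, k) < 2 ln d / d for every k ≥ 1. -/
open scoped Classical

open scoped Nat


lemma two_log_le_self {d : ℝ} (hd : 4 ≤ d) : 2 * Real.log d ≤ d := by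
  have hd0 : (0:ℝ) < d := by linarith
  have hs : (0:ℝ) < Real.sqrt d := Real.sqrt_pos.2 hd0
  have h1 : Real.log d = 2 * Real.log (Real.sqrt d) := by
    rw [Real.log_sqrt hd0.le]; ring
  have h2 : Real.log (Real.sqrt d) ≤ Real.sqrt d - 1 :=
    Real.log_le_sub_one_of_pos hs
  have h4 : Real.sqrt d ^ 2 = d := Real.sq_sqrt hd0.le
  nlinarith [sq_nonneg (Real.sqrt d - 2)]

lemma exp_one_lt_two_log {d : ℝ} (hd : 4 ≤ d) : Real.exp 1 < 2 * Real.log d := by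
  have h2 : (0.6931471803 : ℝ) < Real.log 2 := Real.log_two_gt_d9
  have h4 : Real.log 4 ≤ Real.log d := Real.log_le_log (by norm_num) hd
  have h44 : Real.log 4 = 2 * Real.log 2 := by
    rw [show (4:ℝ) = 2^2 by norm_num, Real.log_pow]; push_cast; ring
  have he : Real.exp 1 < 2.7182818286 := Real.exp_one_lt_d9
  nlinarith

lemma analytic_key (d : ℝ) (hd : 4 ≤ d) (k m n E : ℕ) (hk : 1 ≤ k) (hE : 1 ≤ E) (hn : 1 ≤ n)
    (hm_lb : (2 * Real.log d / d) * k ≤ m) (hm_ub : m ≤ k)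
    (hEd : 2 * (E:ℝ) = d * n) :
    ((k.choose m : ℕ):ℝ)^n * (((k-m).descFactorial m * (k-m)! : ℕ) : ℝ)^E
      < ((k ! : ℕ):ℝ)^E := by
  have hd0 : (0:ℝ) < d := by linarith
  have hd1 : (1:ℝ) < d := by linarith
  have hlogd : 0 < Real.log d := Real.log_pos hd1
  set c : ℝ := 2 * Real.log d / d with hc_def
  have hc0 : 0 < c := by positivity
  have hk0 : (0:ℝ) < k := by exact_mod_cast hk
  have hm0 : (0:ℝ) < m := lt_of_lt_of_le (by positivity) hm_lb
  have hfacpos : (0:ℝ) < ((k ! : ℕ):ℝ)^E := by positivity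
  by_cases hhalf : k - m < m
  · have hz : (k-m).descFactorial m = 0 := Nat.descFactorial_eq_zero_iff_lt.2 hhalf
    rw [hz]
    rw [show ((0 * (k-m)! : ℕ):ℝ) = 0 by push_cast; ring]
    rw [zero_pow (by omega : E ≠ 0), mul_zero]
    exact hfacpos
  push_neg at hhalf
  have h2m : m + m ≤ k := by omega
  have hmk : (m:ℝ) ≤ k := by exact_mod_cast hm_ub
  set α : ℝ := m * (1 + Real.log ((k:ℝ)/m)) with hα
  set β : ℝ := (m:ℝ)^2 / k with hβ
  -- Step 1 : binomial bound
  have step1 : ((k.choose m : ℕ):ℝ) ≤ Real.exp α := by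
    have h1 : ((k.choose m : ℕ):ℝ) ≤ (k:ℝ)^m / (m)! := by
      exact_mod_cast Nat.choose_le_pow_div m k
    have h2 : (m:ℝ)^m / (m)! ≤ Real.exp m := Real.pow_div_factorial_le_exp (m:ℝ) hm0.le m
    have hfm : (0:ℝ) < ((m)! : ℕ) := by exact_mod_cast Nat.factorial_pos m
    have h3 : (k:ℝ)^m / (m)! = ((k:ℝ)/m)^m * ((m:ℝ)^m / (m)!) := by
      rw [div_pow]; field_simp
    have h4 : (((k:ℝ)/m))^m = Real.exp (m * Real.log ((k:ℝ)/m)) := by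
      rw [← Real.log_pow, Real.exp_log (by positivity)]
    calc ((k.choose m : ℕ):ℝ) ≤ (k:ℝ)^m / (m)! := h1
      _ = ((k:ℝ)/m)^m * ((m:ℝ)^m / (m)!) := h3
      _ ≤ Real.exp (m * Real.log ((k:ℝ)/m)) * Real.exp m := by
          rw [h4]
          exact mul_le_mul_of_nonneg_left h2 (Real.exp_nonneg _)
      _ = Real.exp α := by rw [← Real.exp_add, hα]; congr 1; ring
  -- Step 2 : descFactorial bound
  have hprod : ((k-m).descFactorial m : ℝ)
      ≤ (1 - (m:ℝ)/k)^m * (k.descFactorial m : ℝ) := by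
    rw [Nat.descFactorial_eq_prod_range, Nat.descFactorial_eq_prod_range]
    push_cast
    have hpt : ∀ i ∈ Finset.range m,
        ((k - m - i : ℕ):ℝ) ≤ (1 - (m:ℝ)/k) * ((k - i : ℕ):ℝ) := by
      intro i hi
      have him : i < m := Finset.mem_range.1 hi
      have e1 : ((k - m - i : ℕ):ℝ) = (k:ℝ) - m - i := by
        rw [show k - m - i = k - (m + i) by omega, Nat.cast_sub (by omega)]
        push_cast; ring
      have e2 : ((k - i : ℕ):ℝ) = (k:ℝ) - i := by
        rw [Nat.cast_sub (by omega)]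
      rw [e1, e2]
      have hik : (0:ℝ) ≤ (m:ℝ) * i / k := by positivity
      have hexpand : (1 - (m:ℝ)/k) * ((k:ℝ) - i)
          = (k:ℝ) - i - m + (m:ℝ)*i/k := by field_simp; ring
      rw [hexpand]; linarith
    calc ∏ i ∈ Finset.range m, ((k - m - i : ℕ):ℝ)
        ≤ ∏ i ∈ Finset.range m, ((1 - (m:ℝ)/k) * ((k - i : ℕ):ℝ)) := by
          apply Finset.prod_le_prod (fun i _ => by positivity) hpt
      _ = (1 - (m:ℝ)/k)^m * ∏ i ∈ Finset.range m, ((k - i : ℕ):ℝ) := by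
          rw [Finset.prod_mul_distrib, Finset.prod_const, Finset.card_range]
  have hkey : (k.descFactorial m : ℝ) * (((k-m)! : ℕ) : ℝ) = ((k ! : ℕ):ℝ) := by
    have h' : (((k-m)! * k.descFactorial m : ℕ):ℝ) = ((k ! : ℕ):ℝ) := by
      exact_mod_cast congrArg (fun t : ℕ => (t:ℝ)) (Nat.factorial_mul_descFactorial hm_ub)
    push_cast at h' ⊢
    linarith
  have step2 : (((k-m).descFactorial m * (k-m)! : ℕ) : ℝ)
      ≤ (1 - (m:ℝ)/k)^m * ((k ! : ℕ):ℝ) := by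
    push_cast
    calc ((k-m).descFactorial m : ℝ) * (((k-m)! : ℕ) : ℝ)
        ≤ ((1 - (m:ℝ)/k)^m * (k.descFactorial m : ℝ)) * (((k-m)! : ℕ) : ℝ) := by
          apply mul_le_mul_of_nonneg_right hprod (by positivity)
      _ = (1 - (m:ℝ)/k)^m * ((k.descFactorial m : ℝ) * (((k-m)! : ℕ) : ℝ)) := by ring
      _ = (1 - (m:ℝ)/k)^m * ((k ! : ℕ):ℝ) := by rw [hkey]
  -- Step 3
  have step3 : (1 - (m:ℝ)/k)^m ≤ Real.exp (-β) := by
    have h1 : 1 - (m:ℝ)/k ≤ Real.exp (-((m:ℝ)/k)) := by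
      have := Real.add_one_le_exp (-((m:ℝ)/k)); linarith
    have h0 : (0:ℝ) ≤ 1 - (m:ℝ)/k := by
      have : (m:ℝ)/k ≤ 1 := by rw [div_le_one hk0]; exact hmk
      linarith
    calc (1 - (m:ℝ)/k)^m ≤ (Real.exp (-((m:ℝ)/k)))^m := pow_le_pow_left₀ h0 h1 m
      _ = Real.exp (-β) := by
          rw [← Real.exp_nat_mul, hβ]; congr 1; ring
  -- exponent inequality
  have hcore : 1 + Real.log ((k:ℝ)/m) < d * m / (2 * k) := by
    have hdm : 2 * Real.log d * k ≤ d * m := by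
      have h := mul_le_mul_of_nonneg_right hm_lb hd0.le
      calc 2 * Real.log d * k = (c * k) * d := by rw [hc_def]; field_simp
        _ ≤ (m:ℝ) * d := h
        _ = d * m := by ring
    have hA : Real.log d ≤ d * m / (2 * k) := by
      rw [le_div_iff₀ (by positivity)]; linarith
    have hB : Real.log ((k:ℝ)/m) ≤ Real.log d - Real.log (2 * Real.log d) := by
      have hlkm : Real.log ((k:ℝ)/m) = Real.log k - Real.log m :=
        Real.log_div (ne_of_gt hk0) (ne_of_gt hm0)
      have hmge : Real.log (c * k) ≤ Real.log m :=
        Real.log_le_log (by positivity) hm_lb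
      have hck : Real.log (c * k) = Real.log c + Real.log k :=
        Real.log_mul (ne_of_gt hc0) (ne_of_gt hk0)
      have hlc : Real.log c = Real.log (2 * Real.log d) - Real.log d := by
        rw [hc_def, Real.log_div (by positivity) (ne_of_gt hd0)]
      linarith
    have hC : 1 < Real.log (2 * Real.log d) := by
      rw [show (1:ℝ) = Real.log (Real.exp 1) by rw [Real.log_exp]]
      exact Real.log_lt_log (Real.exp_pos 1) (exp_one_lt_two_log hd)
    linarith
  have hexp_neg : (n:ℝ) * α + (E:ℝ) * (-β) < 0 := by
    have hE' : (E:ℝ) = d * n / 2 := by linarith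
    have hnm : (0:ℝ) < (n:ℝ) * m := by
      have : (0:ℝ) < n := by exact_mod_cast hn
      positivity
    have h1 : (n:ℝ) * α < (n:ℝ) * m * (d * m / (2 * k)) := by
      calc (n:ℝ) * α = ((n:ℝ) * m) * (1 + Real.log ((k:ℝ)/m)) := by rw [hα]; ring
        _ < ((n:ℝ) * m) * (d * m / (2 * k)) := by
            exact mul_lt_mul_of_pos_left hcore hnm
    have h2 : (n:ℝ) * m * (d * m / (2 * k)) = (E:ℝ) * β := by
      rw [hE', hβ]; field_simp
    linarith
  -- assemble
  calc ((k.choose m : ℕ):ℝ)^n * (((k-m).descFactorial m * (k-m)! : ℕ) : ℝ)^E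
      ≤ (Real.exp α)^n * (Real.exp (-β) * ((k ! : ℕ):ℝ))^E := by
        apply mul_le_mul
        · exact pow_le_pow_left₀ (by positivity) step1 n
        · apply pow_le_pow_left₀ (by positivity)
          exact le_trans step2 (mul_le_mul_of_nonneg_right step3 (by positivity))
        · positivity
        · positivity
    _ = Real.exp ((n:ℝ) * α + (E:ℝ) * (-β)) * ((k ! : ℕ):ℝ)^E := by
        rw [mul_pow, ← Real.exp_nat_mul, ← Real.exp_nat_mul, Real.exp_add]; ring
    _ < 1 * ((k ! : ℕ):ℝ)^E := by
        apply mul_lt_mul_of_pos_right _ hfacpos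
        exact Real.exp_lt_one_iff.2 hexp_neg
    _ = ((k ! : ℕ):ℝ)^E := one_mul _


lemma fiber_count {k m : ℕ} (A T : Finset (Fin k)) (hA : A.card = m) (hT : T.card = m) :
    Fintype.card {π : Equiv.Perm (Fin k) // A.image π = T}
      ≤ m ! * (k - m)! := by
  classical
  let Φ : {π : Equiv.Perm (Fin k) // A.image π = T} →
      ({x // x ∈ A} ↪ {x // x ∈ T}) ×
      ({x // x ∈ (Aᶜ : Finset (Fin k))} ↪ {x // x ∈ (Tᶜ : Finset (Fin k))}) :=
    fun p => match p with
    | ⟨π, hπ⟩ =>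
      ⟨⟨fun a => ⟨π a, hπ ▸ Finset.mem_image_of_mem _ a.2⟩,
        fun a b hab => Subtype.ext (π.injective (congrArg Subtype.val hab))⟩,
       ⟨fun a => ⟨π a, by
          rw [Finset.mem_compl, ← hπ, Finset.mem_image]
          rintro ⟨b, hb, hba⟩
          exact absurd (π.injective hba ▸ hb) (Finset.mem_compl.1 a.2)⟩,
        fun a b hab => Subtype.ext (π.injective (congrArg Subtype.val hab))⟩⟩
  have hΦ : Function.Injective Φ := by
    rintro ⟨π, hπ⟩ ⟨ρ, hρ⟩ hpq
    have h1 := congrArg Prod.fst hpq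
    have h2 := congrArg Prod.snd hpq
    apply Subtype.ext
    apply Equiv.ext
    intro x
    by_cases hx : x ∈ A
    · exact congrArg Subtype.val (DFunLike.congr_fun h1 ⟨x, hx⟩)
    · exact congrArg Subtype.val (DFunLike.congr_fun h2 ⟨x, Finset.mem_compl.2 hx⟩)
  calc Fintype.card {π : Equiv.Perm (Fin k) // A.image π = T}
      ≤ _ := Fintype.card_le_of_injective Φ hΦ
    _ = m ! * (k - m)! := by
        rw [Fintype.card_prod, Fintype.card_embedding_eq, Fintype.card_embedding_eq]
        simp [Finset.card_compl, hA, hT, Nat.descFactorial_self]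

lemma perm_count {k m : ℕ} (A B : Finset (Fin k)) (hA : A.card = m) (hB : B.card = m) :
    Fintype.card {π : Equiv.Perm (Fin k) // ∀ i ∈ A, π i ∉ B}
      ≤ (k - m).descFactorial m * (k - m)! := by
  classical
  rw [Fintype.card_subtype]
  have hfib : ∀ π ∈ Finset.univ.filter (fun π : Equiv.Perm (Fin k) => ∀ i ∈ A, π i ∉ B),
      A.image π ∈ Finset.powersetCard m (Bᶜ) := by
    intro π hπ
    rw [Finset.mem_filter] at hπ
    rw [Finset.mem_powersetCard]
    constructor
    · intro x hx
      rw [Finset.mem_image] at hx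
      obtain ⟨a, ha, rfl⟩ := hx
      exact Finset.mem_compl.2 (hπ.2 a ha)
    · rw [Finset.card_image_of_injective _ π.injective, hA]
  rw [Finset.card_eq_sum_card_fiberwise hfib]
  have hbound : ∀ T ∈ Finset.powersetCard m (Bᶜ),
      (Finset.filter (fun π : Equiv.Perm (Fin k) => A.image ⇑π = T)
        (Finset.filter (fun π : Equiv.Perm (Fin k) => ∀ i ∈ A, π i ∉ B) Finset.univ)).card
        ≤ m ! * (k - m)! := by
    intro T hT
    rw [Finset.mem_powersetCard] at hT
    refine le_trans (Finset.card_le_card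
      (Finset.filter_subset_filter _ (Finset.filter_subset _ _))) ?_
    rw [← Fintype.card_subtype]
    exact fiber_count A T hA hT.2
  refine le_trans (Finset.sum_le_sum hbound) ?_
  rw [Finset.sum_const, smul_eq_mul, Finset.card_powersetCard, Finset.card_compl, hB,
    Fintype.card_fin, Nat.descFactorial_eq_factorial_mul_choose]
  ring_nf
  exact le_rfl

lemma exists_good {V : Type} [Fintype V] (R : V → V → Prop) (k m : ℕ)
    (hlt : Nat.choose k m ^ (Fintype.card V) *
       ((k-m).descFactorial m * (k-m)!) ^ (Nat.card {p : V × V // R p.1 p.2})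
       < (k !) ^ (Nat.card {p : V × V // R p.1 p.2})) :
    ∃ σ : V × V → Equiv.Perm (Fin k),
      ∀ A : V → Finset (Fin k), (∀ u, (A u).card = m) →
        ∃ p : V × V, R p.1 p.2 ∧ ∃ i ∈ A p.1, (σ p) i ∈ A p.2 := by
  classical
  rw [Nat.card_eq_fintype_card] at hlt
  by_contra hcon
  push_neg at hcon
  choose F hF1 hF2 using hcon
  -- the family type
  set Fam := {A : V → Finset (Fin k) // ∀ u, (A u).card = m} with hFam
  set E := Fintype.card {p : V × V // R p.1 p.2} with hE
  set N := Fintype.card (V × V) with hN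
  set Dfac := (k-m).descFactorial m * (k-m)! with hDfac
  clear_value E N Dfac
  let Φ : (V × V → Equiv.Perm (Fin k)) →
      Σ A : Fam, {σ : V × V → Equiv.Perm (Fin k) //
        ∀ p : V × V, R p.1 p.2 → ∀ i ∈ A.1 p.1, σ p i ∉ A.1 p.2} :=
    fun σ => ⟨⟨F σ, hF1 σ⟩, ⟨σ, hF2 σ⟩⟩
  have hΦ : Function.Injective Φ := by
    have h : ∀ σ, (Φ σ).2.1 = σ := fun σ => rfl
    intro σ τ hh
    rw [← h σ, ← h τ, hh]
  have hcard := Fintype.card_le_of_injective Φ hΦ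
  rw [Fintype.card_sigma] at hcard
  have hfull : Fintype.card (V × V → Equiv.Perm (Fin k)) = (k !) ^ N := by
    rw [Fintype.card_fun, Fintype.card_perm, Fintype.card_fin, hN]
  have hEN : E ≤ N := by
    rw [hE, hN, Fintype.card_subtype]
    exact le_trans (Finset.card_le_card (Finset.filter_subset _ _)) (le_of_eq (by simp))
  have hfiber : ∀ A : Fam,
      Fintype.card {σ : V × V → Equiv.Perm (Fin k) //
        ∀ p : V × V, R p.1 p.2 → ∀ i ∈ A.1 p.1, σ p i ∉ A.1 p.2}
      ≤ Dfac ^ E * (k !) ^ (N - E) := by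
    intro A
    have hequiv : {σ : V × V → Equiv.Perm (Fin k) //
        ∀ p : V × V, R p.1 p.2 → ∀ i ∈ A.1 p.1, σ p i ∉ A.1 p.2}
        ≃ ∀ p : V × V, {π : Equiv.Perm (Fin k) // R p.1 p.2 → ∀ i ∈ A.1 p.1, π i ∉ A.1 p.2} :=
      Equiv.subtypePiEquivPi
        (p := fun (q : V × V) (π : Equiv.Perm (Fin k)) => R q.1 q.2 → ∀ i ∈ A.1 q.1, π i ∉ A.1 q.2)
    rw [Fintype.card_congr hequiv, Fintype.card_pi]
    have hpt : ∀ p : V × V,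
        Fintype.card {π : Equiv.Perm (Fin k) // R p.1 p.2 → ∀ i ∈ A.1 p.1, π i ∉ A.1 p.2}
        ≤ if R p.1 p.2 then Dfac else k ! := by
      intro p
      by_cases hp : R p.1 p.2
      · rw [if_pos hp]
        have he : {π : Equiv.Perm (Fin k) // R p.1 p.2 → ∀ i ∈ A.1 p.1, π i ∉ A.1 p.2}
            ≃ {π : Equiv.Perm (Fin k) // ∀ i ∈ A.1 p.1, π i ∉ A.1 p.2} :=
          Equiv.subtypeEquivRight (fun π => by simp [hp])
        rw [Fintype.card_congr he, hDfac]
        exact perm_count _ _ (A.2 p.1) (A.2 p.2)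
      · rw [if_neg hp]
        have he : {π : Equiv.Perm (Fin k) // R p.1 p.2 → ∀ i ∈ A.1 p.1, π i ∉ A.1 p.2}
            ≃ Equiv.Perm (Fin k) :=
          Equiv.subtypeUnivEquiv (fun π => by simp [hp])
        rw [Fintype.card_congr he, Fintype.card_perm, Fintype.card_fin]
    refine le_trans (Finset.prod_le_prod' (fun p _ => hpt p)) ?_
    rw [Finset.prod_ite (fun _ => Dfac) (fun _ => k !), Finset.prod_const, Finset.prod_const]
    have h1 : (Finset.univ.filter (fun p : V × V => R p.1 p.2)).card = E := by
      rw [hE, Fintype.card_subtype]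
    have h2 : (Finset.univ.filter (fun p : V × V => ¬ R p.1 p.2)).card = N - E := by
      have := Finset.card_filter_add_card_filter_not
        (s := (Finset.univ : Finset (V × V))) (p := fun p : V × V => R p.1 p.2)
      rw [h1] at this
      rw [Finset.card_univ, ← hN] at this
      exact Nat.eq_sub_of_add_eq' this
    rw [h1, h2]
  have hFamCard : Fintype.card Fam = (Nat.choose k m) ^ (Fintype.card V) := by
    have he : Fam ≃ ∀ _u : V, {s : Finset (Fin k) // s.card = m} :=
      Equiv.subtypePiEquivPi (p := fun (_ : V) (s : Finset (Fin k)) => s.card = m)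
    rw [Fintype.card_congr he, Fintype.card_pi]
    simp [Fintype.card_finset_len]
  have hsum : ∑ A : Fam, Fintype.card {σ : V × V → Equiv.Perm (Fin k) //
        ∀ p : V × V, R p.1 p.2 → ∀ i ∈ A.1 p.1, σ p i ∉ A.1 p.2}
      ≤ Fintype.card Fam * (Dfac ^ E * (k !) ^ (N - E)) := by
    refine le_trans (Finset.sum_le_card_nsmul _ _ _ (fun A _ => hfiber A)) ?_
    simp [smul_eq_mul]
  have hstrict : Fintype.card Fam * (Dfac ^ E * (k !) ^ (N - E)) < (k !) ^ N := by
    rw [hFamCard]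
    calc Nat.choose k m ^ Fintype.card V * (Dfac ^ E * (k !) ^ (N - E))
        = (Nat.choose k m ^ Fintype.card V * Dfac ^ E) * (k !) ^ (N - E) := by ring
      _ < (k !) ^ E * (k !) ^ (N - E) :=
          mul_lt_mul_of_pos_right hlt (pow_pos (Nat.factorial_pos k) _)
      _ = (k !) ^ N := by rw [← pow_add, Nat.add_sub_cancel' hEN]
  rw [hfull] at hcard
  exact absurd (lt_of_le_of_lt (le_trans hcard hsum) hstrict) (lt_irrefl _)

-- edge counting
lemma edge_count {V : Type} [Fintype V] (G : SimpleGraph V) (r : V → V → Prop)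
    (hasym : ∀ u v, u ≠ v → (r u v ↔ ¬ r v u)) :
    Nat.card {p : V × V // G.Adj p.1 p.2 ∧ r p.1 p.2} = G.edgeSet.ncard := by
  classical
  have hfin : G.edgeSet.Finite := Set.toFinite _
  let f : {p : V × V // G.Adj p.1 p.2 ∧ r p.1 p.2} → G.edgeSet :=
    fun p => ⟨s(p.1.1, p.1.2), p.2.1⟩
  have hinj : Function.Injective f := by
    rintro ⟨⟨a, b⟩, hab, rab⟩ ⟨⟨c, e⟩, hce, rce⟩ h
    have h' : s(a, b) = s(c, e) := congrArg Subtype.val h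
    rw [Sym2.eq_iff] at h'
    rcases h' with ⟨rfl, rfl⟩ | ⟨rfl, rfl⟩
    · rfl
    · exact absurd rce ((hasym a b (G.ne_of_adj hce).symm).1 rab)
  have hsurj : Function.Surjective f := by
    rintro ⟨e, he⟩
    induction e with
    | _ u v =>
      have hadj : G.Adj u v := he
      by_cases hr : r u v
      · exact ⟨⟨(u, v), hadj, hr⟩, rfl⟩
      · have hr' : r v u := by
          by_contra hr2
          exact hr ((hasym u v (G.ne_of_adj hadj)).2 hr2)
        exact ⟨⟨(v, u), hadj.symm, hr'⟩, Subtype.ext (Sym2.eq_swap)⟩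
  rw [Nat.card_eq_of_bijective f ⟨hinj, hsurj⟩, Nat.card_coe_set_eq]



/-- Let `G` be a finite simple graph whose average degree
`2|E(G)|/|V(G)|` equals a real number `d ≥ 4`. Then for every integer `k ≥ 1` there exists
a `k`-fold cover `𝓗` of `G` such that `G` admits no `(η, 𝓗)`-coloring with
`η = ⌈(2 ln d / d) * k⌉ / k`; consequently `θ_DP(G, k) < 2 ln d / d` for every `k ≥ 1`. -/

theorem stmt4 {V : Type} [Fintype V] [Nonempty V] (G : SimpleGraph V) (d : ℝ) (hd : 4 ≤ d)
    (havg : 2 * (G.edgeSet.ncard : ℝ) = d * (Fintype.card V : ℝ)) :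
    ∀ k : ℕ, 1 ≤ k →
      (∃ C : DPCover G, C.IsKFold k ∧
        ¬ C.HasFracColoring ((⌈(2 * Real.log d / d) * (k : ℝ)⌉₊ : ℝ) / (k : ℝ))) ∧
      thetaDP G k < 2 * Real.log d / d := by
  intro k hk
  have hd0 : (0:ℝ) < d := by linarith
  have hlogd : 0 < Real.log d := Real.log_pos (by linarith)
  set c : ℝ := 2 * Real.log d / d with hc
  have hc0 : 0 < c := by rw [hc]; positivity
  have hc1 : c ≤ 1 := by rw [hc, div_le_one hd0]; exact two_log_le_self hd
  set m := ⌈c * (k:ℝ)⌉₊ with hm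
  have hk0 : (0:ℝ) < k := by exact_mod_cast hk
  have hm_lb : c * k ≤ (m:ℝ) := Nat.le_ceil _
  have hm_ub : m ≤ k := Nat.ceil_le.2 (by nlinarith)
  have hm1 : 1 ≤ m := Nat.one_le_iff_ne_zero.2 (by
    intro h
    have := hm_lb
    rw [h] at this
    push_cast at this
    nlinarith)
  set n := Fintype.card V with hn
  have hn1 : 1 ≤ n := Fintype.card_pos
  have hn0 : (1:ℝ) ≤ n := by exact_mod_cast hn1
  -- the linear order on V
  let e0 : V ≃ Fin n := Fintype.equivFin V
  let lt : V → V → Prop := fun u v => e0 u < e0 v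
  have hasym : ∀ u v : V, u ≠ v → (lt u v ↔ ¬ lt v u) := by
    intro u v huv
    constructor
    · intro h h'
      exact absurd (h.trans h') (lt_irrefl _)
    · intro h
      rcases lt_or_gt_of_ne (fun he : e0 u = e0 v => huv (e0.injective he)) with h1 | h1
      · exact h1
      · exact absurd h1 h
  set Ec := G.edgeSet.ncard with hEc
  have hEcard : Nat.card {p : V × V // G.Adj p.1 p.2 ∧ lt p.1 p.2} = Ec :=
    edge_count G lt hasym
  have hE1 : 1 ≤ Ec := by
    by_contra h
    push_neg at h
    have hz : Ec = 0 := by omega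
    rw [hz] at havg
    push_cast at havg
    nlinarith
  have hnat : Nat.choose k m ^ n * ((k-m).descFactorial m * (k-m)!) ^ Ec < (k !) ^ Ec := by
    have h := analytic_key d hd k m n Ec hk hE1 hn1 hm_lb hm_ub havg
    exact_mod_cast h
  obtain ⟨σ, hσ⟩ := exists_good (fun u v => G.Adj u v ∧ lt u v) k m (by
    show Nat.choose k m ^ n * ((k-m).descFactorial m * (k-m)!) ^
        (Nat.card {p : V × V // G.Adj p.1 p.2 ∧ lt p.1 p.2})
      < (k !) ^ (Nat.card {p : V × V // G.Adj p.1 p.2 ∧ lt p.1 p.2})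
    rw [hEcard]
    exact hnat)
  -- the matchings
  let M : V → V → Equiv.Perm (Fin k) := fun u v => if lt u v then σ (u, v) else (σ (v, u)).symm
  have hMsymm : ∀ u v : V, u ≠ v → ∀ i j : Fin k, M u v i = j → M v u j = i := by
    intro u v huv i j
    by_cases h : lt u v
    · have h' : ¬ lt v u := fun h2 => absurd (h.trans h2) (lt_irrefl _)
      simp only [M, if_pos h, if_neg h']
      intro hh
      rw [← hh, Equiv.symm_apply_apply]
    · have h' : lt v u := by
        rcases lt_or_gt_of_ne (fun he : e0 u = e0 v => huv (e0.injective he)) with h1 | h1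
        · exact absurd h1 h
        · exact h1
      simp only [M, if_neg h, if_pos h']
      intro hh
      rw [← hh, Equiv.apply_symm_apply]
  -- the cover graph
  let H : SimpleGraph (V × Fin k) := SimpleGraph.fromRel
    (fun x y => x.1 = y.1 ∨ (G.Adj x.1 y.1 ∧ M x.1 y.1 x.2 = y.2))
  have hHadj : ∀ x y : V × Fin k, H.Adj x y ↔ x ≠ y ∧
      ((x.1 = y.1 ∨ (G.Adj x.1 y.1 ∧ M x.1 y.1 x.2 = y.2)) ∨
       (y.1 = x.1 ∨ (G.Adj y.1 x.1 ∧ M y.1 x.1 y.2 = x.2))) := by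
    intro x y
    exact SimpleGraph.fromRel_adj _ x y
  -- the cover
  let C : DPCover G :=
    { W := V × Fin k
      Wfin := inferInstance
      H := H
      L := fun u => {x : V × Fin k | x.1 = u}
      part := fun x => ⟨x.1, rfl, fun u hu => hu.symm⟩
      clique := by
        intro u x hx y hy hxy
        rw [hHadj]
        exact ⟨hxy, Or.inl (Or.inl ((show x.1 = u from hx).trans (show y.1 = u from hy).symm))⟩
      cross := by
        rintro u v huv ⟨x, hx, y, hy, hadj⟩
        rw [hHadj] at hadj
        have hxu : x.1 = u := hx
        have hyv : y.1 = v := hy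
        rcases hadj.2 with (h | h) | (h | h)
        · exact absurd (hxu ▸ hyv ▸ h) huv
        · rw [← hxu, ← hyv]; exact h.1
        · exact absurd (hxu ▸ hyv ▸ h.symm) huv
        · rw [← hxu, ← hyv]; exact h.1.symm
      matching := by
        rintro u v huv x hx y hy y' hy' h1 h2
        have hxu : x.1 = u := hx
        have hyv : y.1 = v := hy
        have hyv' : y'.1 = v := hy'
        have hne : u ≠ v := huv.ne
        have key : ∀ z : V × Fin k, z.1 = v → H.Adj x z → M u v x.2 = z.2 := by
          intro z hzv hadj
          rw [hHadj] at hadj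
          rcases hadj.2 with (h | h) | (h | h)
          · exact absurd (hxu ▸ hzv ▸ h) hne
          · rw [← hxu, ← hzv]; exact h.2
          · exact absurd (hxu ▸ hzv ▸ h.symm) hne
          · have := hMsymm z.1 x.1 (by rw [hzv, hxu]; exact Ne.symm hne) z.2 x.2 h.2
            rw [← hxu, ← hzv]; exact this
        have k1 := key y hyv h1
        have k2 := key y' hyv' h2
        have : y.2 = y'.2 := by rw [← k1, ← k2]
        exact Prod.ext (hyv.trans hyv'.symm) this }
  -- k-fold
  have hkfold : C.IsKFold k := by
    intro u
    show ({x : V × Fin k | x.1 = u}).ncard = k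
    have himg : {x : V × Fin k | x.1 = u} = (fun i => (u, i)) '' Set.univ := by
      ext ⟨a, b⟩
      constructor
      · rintro rfl
        exact ⟨b, trivial, rfl⟩
      · rintro ⟨i, -, hi⟩
        rw [← hi]
        rfl
    rw [himg, Set.ncard_image_of_injective _ (fun i j h => (Prod.ext_iff.1 h).2),
      Set.ncard_univ, Nat.card_eq_fintype_card, Fintype.card_fin]
  -- no fractional coloring
  have hnocol : ¬ C.HasFracColoring ((m:ℝ)/k) := by
    rintro ⟨S, hq, hge⟩
    have hA : ∀ u : V, m ≤ (Finset.univ.filter (fun i : Fin k => (u, i) ∈ S)).card := by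
      intro u
      have h1 := hge u
      rw [hkfold u] at h1
      have h3 : ((m:ℝ)/k) * k = m := by field_simp
      rw [h3] at h1
      have h4 : (C.L u ∩ S).ncard = (Finset.univ.filter (fun i : Fin k => (u, i) ∈ S)).card := by
        have himg : C.L u ∩ S = (fun i => (u, i)) '' {i : Fin k | (u, i) ∈ S} := by
          ext ⟨a, b⟩
          constructor
          · rintro ⟨ha, hb⟩
            have hau : a = u := ha
            subst hau
            exact ⟨b, hb, rfl⟩
          · rintro ⟨i, hi, heq⟩
            rw [← heq]
            exact ⟨rfl, hi⟩
        rw [himg, Set.ncard_image_of_injective _ (fun i j h => (Prod.ext_iff.1 h).2),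
          show {i : Fin k | (u, i) ∈ S} = ↑(Finset.univ.filter (fun i : Fin k => (u, i) ∈ S))
            by ext i; simp, Set.ncard_coe_finset]
      rw [h4] at h1
      exact_mod_cast h1
    have hB : ∀ u : V, ∃ B : Finset (Fin k),
        B ⊆ Finset.univ.filter (fun i : Fin k => (u, i) ∈ S) ∧ B.card = m :=
      fun u => Finset.exists_subset_card_eq (hA u)
    choose B hB1 hB2 using hB
    obtain ⟨p, hpR, i, hi, hσi⟩ := hσ B hB2
    have hxS : (p.1, i) ∈ S := by
      have := hB1 p.1 hi
      rw [Finset.mem_filter] at this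
      exact this.2
    have hyS : (p.2, σ p i) ∈ S := by
      have := hB1 p.2 hσi
      rw [Finset.mem_filter] at this
      exact this.2
    have hne : p.1 ≠ p.2 := hpR.1.ne
    have hadj : C.H.Adj (p.1, i) (p.2, σ p i) := by
      rw [show C.H = H from rfl, hHadj]
      refine ⟨fun h => hne (congrArg Prod.fst h), Or.inl (Or.inr ⟨hpR.1, ?_⟩)⟩
      show M p.1 p.2 i = σ p i
      simp only [M, if_pos hpR.2]
    obtain ⟨w, hw1, hw2⟩ := hq _ hxS _ hyS hadj
    exact hne ((show p.1 = w from hw1).trans (show p.2 = w from hw2).symm)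
  refine ⟨⟨C, hkfold, hnocol⟩, ?_⟩
  -- theta bound
  have hbound : thetaDP G k ≤ ((m:ℝ) - 1)/k := by
    apply Real.sSup_le
    · rintro η ⟨hη0, hη1, hall⟩
      by_contra hgt
      push_neg at hgt
      obtain ⟨S, hq, hge⟩ := hall C hkfold
      apply hnocol
      refine ⟨S, hq, fun u => ?_⟩
      have h1 := hge u
      rw [hkfold u] at h1 ⊢
      have h2 : ((m:ℝ) - 1) < η * k := by
        have h := mul_lt_mul_of_pos_right hgt hk0
        rwa [div_mul_cancel₀ _ (ne_of_gt hk0)] at h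
      have h3 : ((m:ℝ) - 1) < ((C.L u ∩ S).ncard : ℝ) := lt_of_lt_of_le h2 h1
      have h4 : m ≤ (C.L u ∩ S).ncard := by
        have h5 : (m:ℝ) < ((C.L u ∩ S).ncard : ℝ) + 1 := by linarith
        have h6 : m < (C.L u ∩ S).ncard + 1 := by exact_mod_cast h5
        omega
      calc ((m:ℝ)/k) * k = m := by field_simp
        _ ≤ _ := by exact_mod_cast h4
    · apply div_nonneg _ hk0.le
      have : (1:ℝ) ≤ m := by exact_mod_cast hm1
      linarith
  have hfin : ((m:ℝ) - 1)/k < c := by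
    have hceil : (m:ℝ) < c * k + 1 := by
      have := Nat.ceil_lt_add_one (by positivity : (0:ℝ) ≤ c * k)
      rw [hm]
      exact_mod_cast this
    rw [div_lt_iff₀ hk0]
    nlinarith
  exact lt_of_le_of_lt hbound hfin
end

section
/- If G is a finite simple graph with |E(G)| ≥ |V(G)| + 1, then its fractional DP-chromatic number satisfies χ*_DP(G) > 2. -/
open scoped Classical

section Stmt8Aux



lemma stmt8aux_cube_lt_two_pow {k : ℕ} (hk : 12 ≤ k) : (k+1)^3 < 2^k := by
  induction k, hk using Nat.le_induction with
  | base => norm_num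
  | succ n hn ih =>
    have h0 : 144 ≤ n*n := by calc 144 = 12*12 := by norm_num
                                      _ ≤ n*n := Nat.mul_le_mul hn hn
    have h1 : (n+2)^3 ≤ 2*(n+1)^3 := by nlinarith
    calc (n+1+1)^3 = (n+2)^3 := by ring_nf
    _ ≤ 2*(n+1)^3 := h1
    _ < 2*2^n := by omega
    _ = 2^(n+1) := by ring

lemma stmt8aux_pow_self_le (t : ℕ) : ((t:ℝ))^t ≤ 3^t * (t.factorial : ℝ) := by
  induction t with
  | zero => norm_num
  | succ n ih =>
    rcases Nat.eq_zero_or_pos n with rfl | hn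
    · norm_num
    have hn' : (1:ℝ) ≤ (n:ℝ) := by exact_mod_cast hn
    have hpos : (0:ℝ) < (n:ℝ) := by linarith
    have key : ((n:ℝ)+1)^n ≤ 3 * (n:ℝ)^n := by
      have h1 : ((n:ℝ)+1) ≤ (n:ℝ) * Real.exp (1/n) := by
        have h2 := Real.add_one_le_exp (1/(n:ℝ))
        have h3 : (n:ℝ) * (1/n + 1) ≤ (n:ℝ) * Real.exp (1/n) :=
          mul_le_mul_of_nonneg_left h2 hpos.le
        calc ((n:ℝ)+1) = (n:ℝ) * (1/n + 1) := by field_simp; ring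
        _ ≤ (n:ℝ) * Real.exp (1/n) := h3
      have hexp : (Real.exp (1/(n:ℝ)))^n = Real.exp 1 := by
        rw [← Real.exp_nat_mul]
        congr 1
        field_simp
      calc ((n:ℝ)+1)^n ≤ ((n:ℝ) * Real.exp (1/n))^n :=
            pow_le_pow_left₀ (by positivity) h1 n
      _ = (n:ℝ)^n * (Real.exp (1/n))^n := mul_pow _ _ _
      _ = (n:ℝ)^n * Real.exp 1 := by rw [hexp]
      _ ≤ (n:ℝ)^n * 3 := by
            have := Real.exp_one_lt_d9
            have h9 : Real.exp 1 ≤ 3 := by linarith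
            exact mul_le_mul_of_nonneg_left h9 (by positivity)
      _ = 3 * (n:ℝ)^n := by ring
    have hfact : ((n+1).factorial : ℝ) = ((n:ℝ)+1) * (n.factorial : ℝ) := by
      rw [Nat.factorial_succ]; push_cast; ring
    calc ((n+1:ℕ):ℝ)^(n+1) = ((n:ℝ)+1)^n * ((n:ℝ)+1) := by push_cast; ring
    _ ≤ (3*(n:ℝ)^n) * ((n:ℝ)+1) := mul_le_mul_of_nonneg_right key (by positivity)
    _ ≤ (3*(3^n * (n.factorial:ℝ))) * ((n:ℝ)+1) := by
          have := mul_le_mul_of_nonneg_left ih (by norm_num : (0:ℝ) ≤ 3)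
          exact mul_le_mul_of_nonneg_right this (by positivity)
    _ = 3^(n+1) * (((n+1).factorial : ℝ)) := by rw [hfact]; ring

lemma stmt8aux_ptwise (E : ℕ) (hE : 1 ≤ E) (q : ℝ) (hq : 1024 * (E:ℝ)^2 ≤ q) :
    (3*q)^(2*E) ≤ (2:ℝ)^(q - 1) := by
  have hE1 : (1:ℝ) ≤ (E:ℝ) := by exact_mod_cast hE
  have hq1024 : (1024:ℝ) ≤ q := by nlinarith
  have hq0 : (0:ℝ) < q := by linarith
  have hs32 : 32*(E:ℝ) ≤ Real.sqrt q := by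
    rw [show (32*(E:ℝ)) = Real.sqrt ((32*(E:ℝ))^2) from (Real.sqrt_sq (by positivity)).symm]
    exact Real.sqrt_le_sqrt (by nlinarith)
  have hsq : (Real.sqrt q) * (Real.sqrt q) = q := Real.mul_self_sqrt hq0.le
  have hs0 : (0:ℝ) < Real.sqrt q := Real.sqrt_pos.2 hq0
  have h3q : (0:ℝ) < 3*q := by linarith
  have hlog3q : Real.log (3*q) ≤ 4 * Real.sqrt q := by
    have h1 : Real.log (3*q) = 2 * Real.log (Real.sqrt (3*q)) := by
      rw [Real.log_sqrt h3q.le]; ring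
    have h2 : Real.log (Real.sqrt (3*q)) ≤ Real.sqrt (3*q) - 1 :=
      Real.log_le_sub_one_of_pos (Real.sqrt_pos.2 h3q)
    have h3 : Real.sqrt (3*q) ≤ 2 * Real.sqrt q := by
      have h4 : (3*q) ≤ (2*Real.sqrt q)^2 := by nlinarith
      calc Real.sqrt (3*q) ≤ Real.sqrt ((2*Real.sqrt q)^2) := Real.sqrt_le_sqrt h4
      _ = 2*Real.sqrt q := Real.sqrt_sq (by positivity)
    linarith
  have hlogpos : 0 ≤ Real.log (3*q) := Real.log_nonneg (by linarith)
  have hmain : ((2*E : ℕ):ℝ) * Real.log (3*q) ≤ (q - 1) * Real.log 2 := by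
    have hlog2 : (0.6931471803:ℝ) < Real.log 2 := Real.log_two_gt_d9
    have h5 : ((2*E:ℕ):ℝ) * Real.log (3*q) ≤ (2*(E:ℝ)) * (4 * Real.sqrt q) := by
      push_cast
      apply mul_le_mul (le_refl _) hlog3q hlogpos (by positivity)
    have h6 : (2*(E:ℝ)) * (4 * Real.sqrt q) ≤ (2*(Real.sqrt q/32)) * (4*Real.sqrt q) := by
      have : (E:ℝ) ≤ Real.sqrt q/32 := by linarith
      have h7 : (0:ℝ) ≤ 4*Real.sqrt q := by positivity
      nlinarith
    have h8 : (2*(Real.sqrt q/32)) * (4*Real.sqrt q) = q/4 := by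
      field_simp
      nlinarith [hsq]
    have h9 : q/4 ≤ (q-1)*Real.log 2 := by nlinarith
    calc ((2*E:ℕ):ℝ) * Real.log (3*q) ≤ (2*(E:ℝ)) * (4 * Real.sqrt q) := h5
    _ ≤ q/4 := by rw [← h8]; exact h6
    _ ≤ (q-1)*Real.log 2 := h9
  calc (3*q)^(2*E) = Real.exp (((2*E:ℕ):ℝ) * Real.log (3*q)) := by
        rw [Real.exp_nat_mul, Real.exp_log h3q]
  _ ≤ Real.exp ((q-1) * Real.log 2) := Real.exp_le_exp.2 hmain
  _ = (2:ℝ)^(q-1) := by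
        rw [Real.rpow_def_of_pos (by norm_num : (0:ℝ) < 2), mul_comm]

lemma stmt8aux_core (E k s₀ t : ℕ) (hE : 1 ≤ E) (hs₀ : 1 ≤ s₀) (ht : k = 2*s₀ + t)
    (hM : 2048 * E^2 * t < 2*k) : ((k - s₀).choose s₀)^E < k.choose s₀ := by
  have hks : k - s₀ = s₀ + t := by omega
  have hsymm : (s₀+t).choose s₀ = (s₀+t).choose t := by
    have h := Nat.choose_symm (Nat.le_add_right s₀ t)
    rw [Nat.add_sub_cancel_left] at h
    exact h.symm
  rw [hks, hsymm]
  rcases Nat.eq_zero_or_pos t with rfl | htpos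
  · -- t = 0 case : goal 1 < k.choose s₀ with k = 2*s₀
    rw [Nat.add_zero, Nat.choose_zero_right, one_pow]
    have hk2 : k = 2*s₀ := by omega
    rw [hk2]
    have h2 : 2 ≤ (2*s₀).choose s₀ := by
      have := Nat.two_le_centralBinom s₀ hs₀
      rwa [Nat.centralBinom_eq_two_mul_choose] at this
    omega
  · -- t ≥ 1
    have hE2 : 1 ≤ E^2 := Nat.one_le_pow _ _ hE
    have h2048 : 2048 * t < 2 * k := by
      calc 2048 * t = 2048 * 1 * t := by ring
      _ ≤ 2048 * E^2 * t := by
            exact Nat.mul_le_mul_right t (Nat.mul_le_mul_left 2048 hE2)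
      _ < 2*k := hM
    have hk1024 : 1024 * t < k := by omega
    have hk12 : 12 ≤ k := by nlinarith
    have h3t : 3 * t ≤ k := by nlinarith
    have h3s : k ≤ 3*s₀ := by omega
    have hcube : (k+1)^3 < 2^k := stmt8aux_cube_lt_two_pow hk12
    -- real versions
    have hT0 : (0:ℝ) < (t:ℝ) := by exact_mod_cast htpos
    have hK0 : (0:ℝ) < (k:ℝ) := by
      have : 0 < k := by omega
      exact_mod_cast this
    have hq : 1024 * (E:ℝ)^2 ≤ (k:ℝ)/(t:ℝ) := by
      rw [le_div_iff₀ hT0]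
      have hcast : (2048:ℝ) * (E:ℝ)^2 * (t:ℝ) < 2*(k:ℝ) := by exact_mod_cast hM
      linarith
    have hP := stmt8aux_ptwise E hE ((k:ℝ)/(t:ℝ)) hq
    -- raise to the t-th power
    have hP0 : (0:ℝ) ≤ (3*((k:ℝ)/(t:ℝ)))^(2*E) := by positivity
    have hP2 : ((3*((k:ℝ)/(t:ℝ)))^(2*E))^t ≤ ((2:ℝ)^((k:ℝ)/(t:ℝ)-1))^t :=
      pow_le_pow_left₀ hP0 hP t
    have hrw2 : ((2:ℝ)^((k:ℝ)/(t:ℝ)-1))^t = (2:ℝ)^(2*s₀) := by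
      rw [← Real.rpow_natCast ((2:ℝ)^((k:ℝ)/(t:ℝ)-1)) t,
          ← Real.rpow_mul (by norm_num : (0:ℝ) ≤ 2)]
      have harg : ((k:ℝ)/(t:ℝ)-1) * (t:ℝ) = ((2*s₀ : ℕ):ℝ) := by
        field_simp
        push_cast
        have : (k:ℝ) = 2*(s₀:ℝ) + t := by exact_mod_cast ht
        linarith
      rw [harg, Real.rpow_natCast]
    have hmul : (3*(k:ℝ))^(2*E*t) ≤ (t:ℝ)^(2*E*t) * 2^(2*s₀) := by
      have hfe : (3*((k:ℝ)/(t:ℝ)))^(2*E*t) * (t:ℝ)^(2*E*t) = (3*(k:ℝ))^(2*E*t) := by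
        rw [← mul_pow]
        congr 1
        field_simp
      calc (3*(k:ℝ))^(2*E*t) = (3*((k:ℝ)/(t:ℝ)))^(2*E*t) * (t:ℝ)^(2*E*t) := hfe.symm
      _ = ((3*((k:ℝ)/(t:ℝ)))^(2*E))^t * (t:ℝ)^(2*E*t) := by rw [pow_mul]
      _ ≤ ((2:ℝ)^((k:ℝ)/(t:ℝ)-1))^t * (t:ℝ)^(2*E*t) :=
            mul_le_mul_of_nonneg_right hP2 (by positivity)
      _ = (t:ℝ)^(2*E*t) * 2^(2*s₀) := by rw [hrw2]; ring
    -- unsquare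
    have hA' : (3*(k:ℝ))^(E*t) ≤ (t:ℝ)^(E*t) * 2^s₀ := by
      apply le_of_pow_le_pow_left₀ (two_ne_zero) (by positivity)
      calc ((3*(k:ℝ))^(E*t))^2 = (3*(k:ℝ))^(2*E*t) := by
            rw [← pow_mul]; ring_nf
      _ ≤ (t:ℝ)^(2*E*t) * 2^(2*s₀) := hmul
      _ = ((t:ℝ)^(E*t) * 2^s₀)^2 := by
            rw [mul_pow, ← pow_mul, ← pow_mul]; ring_nf
    -- Step 1 : binomial bound
    have hdesc : ((s₀+t).choose t) * t.factorial ≤ k^t := by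
      rw [mul_comm, ← Nat.descFactorial_eq_factorial_mul_choose]
      exact (Nat.descFactorial_le_pow _ _).trans (Nat.pow_le_pow_left (by omega) t)
    have hstep1 : (((s₀+t).choose t : ℕ):ℝ) * (t:ℝ)^t ≤ (3*(k:ℝ))^t := by
      have hc0 : (0:ℝ) ≤ (((s₀+t).choose t : ℕ):ℝ) := by positivity
      calc (((s₀+t).choose t : ℕ):ℝ) * (t:ℝ)^t
          ≤ (((s₀+t).choose t : ℕ):ℝ) * (3^t * (t.factorial:ℝ)) :=
            mul_le_mul_of_nonneg_left (stmt8aux_pow_self_le t) hc0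
      _ = 3^t * ((((s₀+t).choose t) * t.factorial : ℕ):ℝ) := by push_cast; ring
      _ ≤ 3^t * ((k^t : ℕ):ℝ) := by
            apply mul_le_mul_of_nonneg_left _ (by positivity)
            exact_mod_cast hdesc
      _ = (3*(k:ℝ))^t := by push_cast; rw [mul_pow]
    -- combine to C₂^E ≤ 2^s₀
    have hC2 : (((s₀+t).choose t : ℕ):ℝ)^E ≤ 2^s₀ := by
      have h1 : ((((s₀+t).choose t : ℕ):ℝ) * (t:ℝ)^t)^E ≤ ((3*(k:ℝ))^t)^E :=
        pow_le_pow_left₀ (by positivity) hstep1 E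
      rw [mul_pow, ← pow_mul, ← pow_mul, mul_comm t E] at h1
      have hTpow : (0:ℝ) < (t:ℝ)^(E*t) := by positivity
      have h2 : (((s₀+t).choose t : ℕ):ℝ)^E * (t:ℝ)^(E*t) ≤ ((t:ℝ)^(E*t)) * 2^s₀ :=
        h1.trans hA'
      have h3 : (((s₀+t).choose t : ℕ):ℝ)^E * (t:ℝ)^(E*t) ≤ (2^s₀) * (t:ℝ)^(E*t) := by
        calc _ ≤ ((t:ℝ)^(E*t)) * 2^s₀ := h2
        _ = (2^s₀) * (t:ℝ)^(E*t) := by ring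
      exact le_of_mul_le_mul_right h3 hTpow
    have hK1 : (k:ℝ) + 1 < 2^s₀ := by
      apply lt_of_pow_lt_pow_left₀ 3 (by positivity)
      have e1 : ((k:ℝ)+1)^3 < 2^k := by exact_mod_cast hcube
      have e2 : (2:ℝ)^k ≤ (2:ℝ)^(3*s₀) := by
        apply pow_le_pow_right₀ (by norm_num) h3s
      calc ((k:ℝ)+1)^3 < 2^k := e1
      _ ≤ (2:ℝ)^(3*s₀) := e2
      _ = ((2:ℝ)^s₀)^3 := by rw [← pow_mul]; ring_nf
    have h4 : (4:ℝ)^s₀ ≤ ((k:ℝ)+1) * ((k.choose s₀ : ℕ):ℝ) := by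
      have hnat : 4^s₀ ≤ (k+1) * (k.choose s₀) := by
        calc 4^s₀ ≤ (2*s₀+1) * ((2*s₀).choose s₀) :=
              Nat.four_pow_le_two_mul_add_one_mul_central_binom s₀
        _ ≤ (k+1) * (k.choose s₀) := by
              apply Nat.mul_le_mul (by omega)
              exact Nat.choose_le_choose s₀ (by omega)
      exact_mod_cast hnat
    have hfin : (((s₀+t).choose t : ℕ):ℝ)^E * ((k:ℝ)+1) < 4^s₀ := by
      have hp0 : (0:ℝ) < 2^s₀ := by positivity
      calc (((s₀+t).choose t : ℕ):ℝ)^E * ((k:ℝ)+1) ≤ 2^s₀ * ((k:ℝ)+1) :=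
            mul_le_mul_of_nonneg_right hC2 (by positivity)
      _ < 2^s₀ * 2^s₀ := by
            exact mul_lt_mul_of_pos_left hK1 hp0
      _ = 4^s₀ := by rw [← mul_pow]; norm_num
    have hfinal : (((s₀+t).choose t : ℕ):ℝ)^E < ((k.choose s₀ : ℕ):ℝ) := by
      have hK1pos : (0:ℝ) < (k:ℝ)+1 := by positivity
      have := hfin.trans_le h4
      have h5 : (((s₀+t).choose t : ℕ):ℝ)^E * ((k:ℝ)+1) < ((k.choose s₀ : ℕ):ℝ) * ((k:ℝ)+1) := by
        calc _ < ((k:ℝ)+1) * ((k.choose s₀ : ℕ):ℝ) := this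
        _ = ((k.choose s₀ : ℕ):ℝ) * ((k:ℝ)+1) := by ring
      exact lt_of_mul_lt_mul_right h5 hK1pos.le
    exact_mod_cast hfinal

open Finset

lemma stmt8aux_perm_count {k s₀ : ℕ} (A B : Finset (Fin k)) (hA : A.card = s₀)
    (hB : B.card = s₀) :
    (Finset.univ.filter fun π : Equiv.Perm (Fin k) => Disjoint (A.image π) B).card
      ≤ (k - s₀).choose s₀ * (s₀.factorial * (k - s₀).factorial) := by
  classical
  -- each such π has image π '' A a subset of Bᶜ of size s₀
  have hsub : (Finset.univ.filter fun π : Equiv.Perm (Fin k) => Disjoint (A.image π) B)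
      ⊆ (Bᶜ.powersetCard s₀).biUnion
        (fun T => Finset.univ.filter fun π : Equiv.Perm (Fin k) => A.image π = T) := by
    intro π hπ
    rw [mem_filter] at hπ
    rw [mem_biUnion]
    refine ⟨A.image π, ?_, by simp⟩
    rw [mem_powersetCard]
    constructor
    · intro x hx
      rw [mem_compl]
      exact Finset.disjoint_left.1 hπ.2 hx
    · rw [Finset.card_image_of_injective _ (Equiv.injective π), hA]
  refine (Finset.card_le_card hsub).trans ?_
  refine (Finset.card_biUnion_le).trans ?_
  have hinner : ∀ T ∈ Bᶜ.powersetCard s₀,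
      (Finset.univ.filter fun π : Equiv.Perm (Fin k) => A.image π = T).card
        ≤ s₀.factorial * (k - s₀).factorial := by
    intro T hT
    rw [mem_powersetCard] at hT
    obtain ⟨hTB, hTcard⟩ := hT
    rw [← Fintype.card_subtype]
    have hinj : ∃ f : {π : Equiv.Perm (Fin k) // A.image π = T} →
        ((↥A ↪ ↥T) × (↥(Aᶜ) ↪ ↥(Tᶜ))), Function.Injective f := by
      refine ⟨fun π => (⟨fun a => ⟨π.1 a.1, ?_⟩, ?_⟩, ⟨fun a => ⟨π.1 a.1, ?_⟩, ?_⟩), ?_⟩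
      · have h := Finset.mem_image_of_mem π.1 a.2
        rw [π.2] at h
        exact h
      · intro a b hab
        apply Subtype.ext
        apply π.1.injective
        simpa using hab
      · rw [Finset.mem_compl]
        intro hmem
        have hmem' : π.1 a.1 ∈ A.image π.1 := by rw [π.2]; exact hmem
        rw [Finset.mem_image] at hmem'
        obtain ⟨x, hx, hxe⟩ := hmem'
        have : x = a.1 := π.1.injective hxe
        subst this
        exact absurd hx (Finset.mem_compl.1 a.2)
      · intro a b hab
        apply Subtype.ext
        apply π.1.injective
        simpa using hab
      · intro π π' hpp
        apply Subtype.ext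
        apply Equiv.ext
        intro x
        by_cases hx : x ∈ A
        · have := congrArg Prod.fst hpp
          have h2 := congrFun (congrArg (fun (e : ↥A ↪ ↥T) => (e : ↥A → ↥T)) this) ⟨x, hx⟩
          exact Subtype.ext_iff.1 h2
        · have := congrArg Prod.snd hpp
          have h2 := congrFun (congrArg (fun (e : ↥(Aᶜ) ↪ ↥(Tᶜ)) => (e : ↥(Aᶜ) → ↥(Tᶜ))) this)
            ⟨x, Finset.mem_compl.2 hx⟩
          exact Subtype.ext_iff.1 h2
    obtain ⟨f, hf⟩ := hinj
    calc Fintype.card {π : Equiv.Perm (Fin k) // A.image π = T}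
        ≤ Fintype.card ((↥A ↪ ↥T) × (↥(Aᶜ) ↪ ↥(Tᶜ))) := Fintype.card_le_of_injective f hf
    _ = s₀.factorial * (k - s₀).factorial := by
        rw [Fintype.card_prod, Fintype.card_embedding_eq, Fintype.card_embedding_eq]
        simp only [Fintype.card_coe]
        rw [hA, hTcard, Finset.card_compl, Finset.card_compl, hA, hTcard,
          Fintype.card_fin, Nat.descFactorial_self, Nat.descFactorial_self]
  calc ∑ T ∈ Bᶜ.powersetCard s₀,
        (Finset.univ.filter fun π : Equiv.Perm (Fin k) => A.image π = T).card
      ≤ ∑ _T ∈ Bᶜ.powersetCard s₀, s₀.factorial * (k - s₀).factorial :=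
        Finset.sum_le_sum hinner
  _ = (Bᶜ.powersetCard s₀).card * (s₀.factorial * (k - s₀).factorial) := by
        rw [Finset.sum_const, smul_eq_mul]
  _ = (k - s₀).choose s₀ * (s₀.factorial * (k - s₀).factorial) := by
        rw [Finset.card_powersetCard, Finset.card_compl, hB, Fintype.card_fin]

set_option maxHeartbeats 2000000 in
lemma stmt8aux_exists_sigma {V : Type} [Fintype V] (D : Finset (V × V)) (k s₀ : ℕ)
    (hs₀ : 1 ≤ s₀) (hD : D.Nonempty) (hV : Fintype.card V + 1 ≤ D.card)
    (hnum : 2 * s₀ ≤ k →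
      ((k - s₀).choose s₀) ^ D.card < (k.choose s₀) ^ (D.card - Fintype.card V)) :
    ∃ ω : V × V → Equiv.Perm (Fin k), ∀ A : V → Finset (Fin k),
      (∀ u, s₀ ≤ (A u).card) → ∃ p ∈ D, ¬ Disjoint ((A p.1).image (ω p)) (A p.2) := by
  classical
  rcases lt_or_ge k (2 * s₀) with h2 | h2
  · -- trivial case : two sets of size ≥ s₀ > k/2 must intersect
    obtain ⟨p, hp⟩ := hD
    refine ⟨fun _ => 1, fun A hA => ⟨p, hp, fun hdisj => ?_⟩⟩
    have hdisj' : Disjoint ((A p.1).image ((1 : Equiv.Perm (Fin k)) : Equiv.Perm (Fin k)))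
        (A p.2) := hdisj
    have h1 : s₀ ≤ ((A p.1).image (((1 : Equiv.Perm (Fin k)) : Equiv.Perm (Fin k)))).card := by
      rw [Finset.card_image_of_injective _ (Equiv.injective _)]
      exact hA p.1
    have h2' : s₀ ≤ (A p.2).card := hA p.2
    have hunion := Finset.card_union_of_disjoint hdisj'
    have hle : (((A p.1).image ((1 : Equiv.Perm (Fin k)) : Equiv.Perm (Fin k))) ∪ A p.2).card ≤ k := by
      calc _ ≤ (Finset.univ : Finset (Fin k)).card := Finset.card_le_univ _
      _ = k := by rw [Finset.card_univ, Fintype.card_fin]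
    omega
  · -- main counting case
    by_contra hcon
    push_neg at hcon
    set v := Fintype.card V with hv
    set Ec := D.card with hEc
    set F := k.factorial with hF
    set Cc := k.choose s₀ with hCc
    set C₂ := (k - s₀).choose s₀ with hC2
    set Q := s₀.factorial * (k - s₀).factorial with hQ
    set N := C₂ * Q with hN
    set Fam : Finset (V → Finset (Fin k)) :=
      Finset.univ.filter (fun A => ∀ u, (A u).card = s₀) with hFam
    set Ev : (V → Finset (Fin k)) → Finset (V × V → Equiv.Perm (Fin k)) :=
      fun A => Finset.univ.filter
        (fun ω => ∀ p ∈ D, Disjoint ((A p.1).image (ω p)) (A p.2)) with hEv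
    -- the cover of Ω by the bad events
    have hcover : (Finset.univ : Finset (V × V → Equiv.Perm (Fin k)))
        ⊆ Fam.biUnion Ev := by
      intro ω _
      obtain ⟨A, hAcard, hAdis⟩ := hcon ω
      choose A' hsub hcard using fun u => Finset.exists_subset_card_eq (hAcard u)
      rw [mem_biUnion]
      refine ⟨A', ?_, ?_⟩
      · rw [hFam, mem_filter]
        exact ⟨mem_univ _, hcard⟩
      · rw [hEv, mem_filter]
        refine ⟨mem_univ _, fun p hp => ?_⟩
        exact (hAdis p hp).mono (Finset.image_subset_image (hsub p.1)) (hsub p.2)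
    -- cardinality of each bad event
    have hfilter : ∀ A ∈ Fam, (Ev A).card ≤ N ^ Ec * F ^ (v * v - Ec) := by
      intro A hAmem
      rw [hFam, mem_filter] at hAmem
      have hAc : ∀ u, (A u).card = s₀ := hAmem.2
      rw [hEv, ← Fintype.card_subtype]
      have e1 : {ω : V × V → Equiv.Perm (Fin k) //
            ∀ p, p ∈ D → Disjoint ((A p.1).image (ω p)) (A p.2)}
          ≃ ∀ p : V × V, {π : Equiv.Perm (Fin k) //
            p ∈ D → Disjoint ((A p.1).image π) (A p.2)} :=
        Equiv.subtypePiEquivPi (p := fun (p : V × V) (π : Equiv.Perm (Fin k)) => p ∈ D → Disjoint ((A p.1).image π) (A p.2))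
      rw [Fintype.card_congr e1, Fintype.card_pi]
      have hple : ∀ p : V × V,
          Fintype.card {π : Equiv.Perm (Fin k) //
            p ∈ D → Disjoint ((A p.1).image π) (A p.2)}
          ≤ if p ∈ D then N else F := by
        intro p
        by_cases hp : p ∈ D
        · rw [if_pos hp]
          have e2 : {π : Equiv.Perm (Fin k) // p ∈ D → Disjoint ((A p.1).image π) (A p.2)}
              ≃ {π : Equiv.Perm (Fin k) // Disjoint ((A p.1).image π) (A p.2)} :=
            Equiv.subtypeEquivRight (fun π => by simp [hp])
          rw [Fintype.card_congr e2, Fintype.card_subtype]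
          rw [hN, hC2, hQ]
          exact stmt8aux_perm_count (A p.1) (A p.2) (hAc p.1) (hAc p.2)
        · rw [if_neg hp]
          calc Fintype.card _ ≤ Fintype.card (Equiv.Perm (Fin k)) := Fintype.card_subtype_le _
          _ = F := by rw [Fintype.card_perm, Fintype.card_fin]
      calc ∏ p : V × V, Fintype.card {π : Equiv.Perm (Fin k) //
            p ∈ D → Disjoint ((A p.1).image π) (A p.2)}
          ≤ ∏ p : V × V, (if p ∈ D then N else F) := Finset.prod_le_prod' (fun p _ => hple p)
      _ = N ^ Ec * F ^ (v * v - Ec) := by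
          rw [Finset.prod_ite (fun _ => N) (fun _ => F)]
          have hf1 : Finset.univ.filter (fun p : V × V => p ∈ D) = D :=
            Finset.filter_univ_mem D
          have hf2 : Finset.univ.filter (fun p : V × V => ¬ p ∈ D) = Dᶜ := by
            ext p; simp
          rw [hf1, hf2, Finset.prod_const, Finset.prod_const, Finset.card_compl,
            Fintype.card_prod]
    -- number of families
    have hFamcard : Fam.card = Cc ^ v := by
      rw [hFam, ← Fintype.card_subtype]
      have e3 : {A : V → Finset (Fin k) // ∀ u, (A u).card = s₀}
          ≃ ∀ _u : V, {B : Finset (Fin k) // B.card = s₀} :=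
        Equiv.subtypePiEquivPi (p := fun (_ : V) (B : Finset (Fin k)) => B.card = s₀)
      rw [Fintype.card_congr e3, Fintype.card_pi]
      have hcardlen : ∀ u : V, Fintype.card {B : Finset (Fin k) // B.card = s₀} = Cc := by
        intro _u
        rw [Fintype.card_finset_len, Fintype.card_fin]
      rw [Finset.prod_congr rfl (fun u _ => hcardlen u), Finset.prod_const, Finset.card_univ]
    have htotal : (Finset.univ : Finset (V × V → Equiv.Perm (Fin k))).card = F ^ (v*v) := by
      rw [Finset.card_univ, Fintype.card_fun, Fintype.card_perm, Fintype.card_fin,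
        Fintype.card_prod]
    have hsum : (Finset.univ : Finset (V × V → Equiv.Perm (Fin k))).card
        ≤ Fam.card * (N ^ Ec * F ^ (v*v - Ec)) := by
      calc (Finset.univ : Finset (V × V → Equiv.Perm (Fin k))).card
          ≤ (Fam.biUnion Ev).card := Finset.card_le_card hcover
      _ ≤ ∑ A ∈ Fam, (Ev A).card := Finset.card_biUnion_le
      _ ≤ Fam.card * (N ^ Ec * F ^ (v*v - Ec)) := by
            have := Finset.sum_le_card_nsmul Fam (fun A => (Ev A).card)
              (N ^ Ec * F ^ (v*v - Ec)) hfilter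
            rwa [smul_eq_mul] at this
    have hsk : s₀ ≤ k := by omega
    have hCcpos : 0 < Cc := Nat.choose_pos hsk
    have hQpos : 0 < Q := Nat.mul_pos (Nat.factorial_pos _) (Nat.factorial_pos _)
    have hEcle : Ec ≤ v*v := by
      have h5 := Finset.card_le_univ D
      rwa [Fintype.card_prod] at h5
    have hkey : Cc^v * (N^Ec * F^(v*v - Ec)) < F^(v*v) := by
      have hnum' := hnum h2
      have hFQ : F = Cc * Q := by
        rw [hF, hCc, hQ, ← Nat.choose_mul_factorial_mul_factorial hsk, Nat.mul_assoc]
      have hstep : Cc^v * C₂^Ec < Cc^Ec := by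
        calc Cc^v * C₂^Ec < Cc^v * Cc^(Ec - v) := by
              apply mul_lt_mul_of_pos_left hnum' (Nat.pow_pos hCcpos)
        _ = Cc^Ec := by rw [← pow_add]; congr 1; omega
      calc Cc^v * (N^Ec * F^(v*v - Ec)) = (Cc^v * C₂^Ec) * (Q^Ec * F^(v*v-Ec)) := by
            rw [hN, mul_pow]; ring
      _ < Cc^Ec * (Q^Ec * F^(v*v-Ec)) := by
            apply mul_lt_mul_of_pos_right hstep
            exact Nat.mul_pos (Nat.pow_pos hQpos)
              (Nat.pow_pos (Nat.factorial_pos k))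
      _ = (Cc*Q)^Ec * F^(v*v-Ec) := by rw [mul_pow]; ring
      _ = F^Ec * F^(v*v-Ec) := by rw [hFQ]
      _ = F^(v*v) := by rw [← pow_add]; congr 1; omega
    rw [htotal, hFamcard] at hsum
    exact absurd (hsum.trans_lt hkey) (lt_irrefl _)

@[reducible] noncomputable def stmt8aux_cover {V : Type} [Fintype V] (G : SimpleGraph V) (k : ℕ)
    (ω : V × V → Equiv.Perm (Fin k)) : DPCover G where
  W := V × Fin k
  Wfin := inferInstance
  H := { Adj := fun x y => x ≠ y ∧ (x.1 = y.1 ∨ (G.Adj x.1 y.1 ∧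
            (((Fintype.equivFin V) x.1 < (Fintype.equivFin V) y.1 ∧ y.2 = ω (x.1, y.1) x.2) ∨
             ((Fintype.equivFin V) y.1 < (Fintype.equivFin V) x.1 ∧ x.2 = ω (y.1, x.1) y.2))))
         symm := by
           constructor
           rintro x y ⟨hne, hcase⟩
           refine ⟨fun h => hne h.symm, ?_⟩
           rcases hcase with h | ⟨hadj, hc⟩
           · exact Or.inl h.symm
           · refine Or.inr ⟨hadj.symm, ?_⟩
             rcases hc with ⟨hlt, he⟩ | ⟨hlt, he⟩
             · exact Or.inr ⟨hlt, he⟩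
             · exact Or.inl ⟨hlt, he⟩
         loopless := ⟨fun x h => h.1 rfl⟩ }
  L := fun u => {x | x.1 = u}
  part := fun x => ⟨x.1, rfl, fun u hu => hu.symm⟩
  clique := fun u x hx y hy hne => ⟨hne, Or.inl (hx.trans hy.symm)⟩
  cross := by
    rintro u v huv ⟨x, hx, y, hy, hne, hcase⟩
    rcases hcase with h | h
    · exact absurd ((hx.symm.trans h).trans hy) huv
    · have := h.1
      rw [hx, hy] at this
      exact this
  matching := by
    rintro u v hGuv ⟨x1, x2⟩ hx ⟨y1, y2⟩ hy ⟨y1', y2'⟩ hy' ⟨hne, hc⟩ ⟨hne', hc'⟩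
    have hx1 : x1 = u := hx
    have hy1 : y1 = v := hy
    have hy1' : y1' = v := hy'
    subst hx1; subst hy1; subst hy1'
    have huv := hGuv.ne
    rcases hc with h | ⟨_, hcc⟩
    · exact absurd h huv
    rcases hc' with h | ⟨_, hcc'⟩
    · exact absurd h huv
    rcases hcc with ⟨hlt, he⟩ | ⟨hlt, he⟩ <;> rcases hcc' with ⟨hlt', he'⟩ | ⟨hlt', he'⟩
    · exact congrArg (fun z => (_, z)) (he.trans he'.symm)
    · exact absurd hlt (lt_asymm hlt')
    · exact absurd hlt (lt_asymm hlt')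
    · exact congrArg (fun z => (_, z)) ((ω _).injective (he.symm.trans he'))

lemma stmt8aux_cover_kfold {V : Type} [Fintype V] (G : SimpleGraph V) (k : ℕ)
    (ω : V × V → Equiv.Perm (Fin k)) : (stmt8aux_cover G k ω).IsKFold k := by
  intro u
  show ({x : V × Fin k | x.1 = u}).ncard = k
  have himg : {x : V × Fin k | x.1 = u} = (fun i => (u, i)) '' Set.univ := by
    ext ⟨a, b⟩
    simp only [Set.mem_setOf_eq, Set.image_univ, Set.mem_range, Prod.mk.injEq]
    constructor
    · rintro rfl; exact ⟨b, rfl, rfl⟩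
    · rintro ⟨i, rfl, rfl⟩; rfl
  rw [himg, Set.ncard_image_of_injective _ (fun i j hij => (Prod.ext_iff.1 hij).2),
    Set.ncard_univ, Nat.card_eq_fintype_card, Fintype.card_fin]

noncomputable def stmt8aux_D {V : Type} [Fintype V] (G : SimpleGraph V) : Finset (V × V) :=
  Finset.univ.filter fun p =>
    G.Adj p.1 p.2 ∧ (Fintype.equivFin V) p.1 < (Fintype.equivFin V) p.2

lemma stmt8aux_D_card {V : Type} [Fintype V] (G : SimpleGraph V) :
    (stmt8aux_D G).card = G.edgeSet.ncard := by
  classical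
  have himg : G.edgeSet = Sym2.mk.uncurry '' ((stmt8aux_D G : Finset (V × V)) : Set (V × V)) := by
    ext e
    induction e with
    | _ a b =>
      simp only [Set.mem_image, SimpleGraph.mem_edgeSet, stmt8aux_D, Finset.coe_filter,
        Set.mem_setOf_eq, Finset.mem_univ, true_and]
      constructor
      · intro hab
        rcases lt_trichotomy ((Fintype.equivFin V) a) ((Fintype.equivFin V) b) with hlt | heq | hgt
        · exact ⟨(a, b), ⟨hab, hlt⟩, rfl⟩
        · have : a = b := (Fintype.equivFin V).injective heq
          exact absurd this hab.ne
        · exact ⟨(b, a), ⟨hab.symm, hgt⟩, Sym2.eq_swap⟩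
      · rintro ⟨⟨p1, p2⟩, ⟨hadj, _⟩, hpe⟩
        rw [Function.uncurry_apply_pair, Sym2.eq_iff] at hpe
        rcases hpe with ⟨rfl, rfl⟩ | ⟨rfl, rfl⟩
        · exact hadj
        · exact hadj.symm
  have hinj : Set.InjOn Sym2.mk.uncurry ((stmt8aux_D G : Finset (V × V)) : Set (V × V)) := by
    rintro ⟨p1, p2⟩ hp ⟨q1, q2⟩ hq hpq
    simp only [stmt8aux_D, Finset.coe_filter, Set.mem_setOf_eq, Finset.mem_univ, true_and] at hp hq
    rw [Function.uncurry_apply_pair, Function.uncurry_apply_pair, Sym2.eq_iff] at hpq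
    rcases hpq with ⟨rfl, rfl⟩ | ⟨rfl, rfl⟩
    · rfl
    · exact absurd hp.2 (lt_asymm hq.2)
  rw [himg, Set.ncard_image_of_injOn hinj, Set.ncard_coe_finset]

lemma stmt8aux_theta_le {V : Type} [Fintype V] (G : SimpleGraph V)
    (h : Fintype.card V + 1 ≤ G.edgeSet.ncard) (k : ℕ) (hk : 1 ≤ k) :
    thetaDP G k ≤ 1/2 - 1/(2048 * ((G.edgeSet.ncard : ℝ))^2) := by
  classical
  set Ec := G.edgeSet.ncard with hEc
  have hEc1 : 1 ≤ Ec := by omega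
  set M : ℕ := 2048 * Ec^2 with hM
  have hMnat : 2048 ≤ M := by
    have h1 : 1 ≤ Ec^2 := Nat.one_le_pow _ _ hEc1
    calc 2048 = 2048 * 1 := by norm_num
    _ ≤ 2048 * Ec^2 := Nat.mul_le_mul_left 2048 h1
  have hMreal : (2048:ℝ) ≤ (M:ℝ) := by exact_mod_cast hMnat
  have hM0 : (0:ℝ) < (M:ℝ) := by linarith
  set η : ℝ := 1/2 - 1/(M:ℝ) with hη
  have hinv : 1/(M:ℝ) ≤ 1/2048 := by
    apply one_div_le_one_div_of_le (by norm_num) hMreal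
  have hinv0 : 0 < 1/(M:ℝ) := by positivity
  have hη0 : 0 ≤ η := by rw [hη]; linarith
  have hgoal_eq : (1:ℝ)/2 - 1/(2048 * ((Ec : ℝ))^2) = η := by
    rw [hη, hM]; push_cast; ring_nf
  rw [hgoal_eq]
  apply Real.sSup_le _ hη0
  rintro η' ⟨hη'0, hη'1, hall⟩
  by_contra hgt
  push_neg at hgt
  set s₀ : ℕ := Nat.floor (η * k) + 1 with hs₀def
  have hs₀1 : 1 ≤ s₀ := by omega
  have hs₀gt : η * k < (s₀:ℝ) := by
    rw [hs₀def]
    push_cast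
    exact Nat.lt_floor_add_one _
  have hDcard : (stmt8aux_D G).card = Ec := stmt8aux_D_card G
  have hDne : (stmt8aux_D G).Nonempty := by
    rw [← Finset.card_pos, hDcard]; omega
  have hV' : Fintype.card V + 1 ≤ (stmt8aux_D G).card := by rw [hDcard]; exact h
  have hnum : 2 * s₀ ≤ k →
      ((k - s₀).choose s₀) ^ (stmt8aux_D G).card
        < (k.choose s₀) ^ ((stmt8aux_D G).card - Fintype.card V) := by
    intro h2
    rw [hDcard]
    set t := k - 2*s₀ with htdef
    have ht : k = 2*s₀ + t := by omega
    have hMη : (M:ℝ)*η = (M:ℝ)/2 - 1 := by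
      rw [hη]
      field_simp
    have hcast : (t:ℝ) = (k:ℝ) - 2*(s₀:ℝ) := by
      rw [htdef]
      push_cast [h2]
      ring
    have h2' : (M:ℝ)*(η*(k:ℝ)) < (M:ℝ)*(s₀:ℝ) := mul_lt_mul_of_pos_left hs₀gt hM0
    have h3 : (M:ℝ)*(η*(k:ℝ)) = ((M:ℝ)/2 - 1)*(k:ℝ) := by
      rw [← mul_assoc, hMη]
    have h4 : (M:ℝ)*(t:ℝ) = (M:ℝ)*(k:ℝ) - 2*((M:ℝ)*(s₀:ℝ)) := by
      rw [hcast]; ring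
    have h5 : ((M:ℝ)/2 - 1)*(k:ℝ) < (M:ℝ)*(s₀:ℝ) := by rw [← h3]; exact h2'
    have hMk : (M:ℝ)*(t:ℝ) < 2*(k:ℝ) := by nlinarith [h4, h5]
    have hMtNat : M * t < 2 * k := by exact_mod_cast hMk
    rw [hM] at hMtNat
    have hcore := stmt8aux_core Ec k s₀ t hEc1 hs₀1 ht hMtNat
    have hsk : s₀ ≤ k := by omega
    have hCc1 : 1 ≤ k.choose s₀ := Nat.choose_pos hsk
    calc ((k-s₀).choose s₀)^Ec < k.choose s₀ := hcore
    _ = (k.choose s₀)^1 := (pow_one _).symm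
    _ ≤ (k.choose s₀)^(Ec - Fintype.card V) := Nat.pow_le_pow_right hCc1 (by omega)
  obtain ⟨ω, hω⟩ := stmt8aux_exists_sigma (stmt8aux_D G) k s₀ hs₀1 hDne hV' hnum
  obtain ⟨S, hQI, hmeet⟩ := hall (stmt8aux_cover G k ω) (stmt8aux_cover_kfold G k ω)
  set A : V → Finset (Fin k) := fun u => {i : Fin k | (u, i) ∈ S}.toFinset with hA
  have hAmem : ∀ u i, i ∈ A u ↔ (u, i) ∈ S := by
    intro u i; rw [hA]; exact Set.mem_toFinset
  have hAcard : ∀ u, s₀ ≤ (A u).card := by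
    intro u
    have hL : ((stmt8aux_cover G k ω).L u ∩ S)
        = (fun i => (u, i)) '' {i : Fin k | (u, i) ∈ S} := by
      ext ⟨a, b⟩
      simp only [Set.mem_inter_iff, Set.mem_image, Set.mem_setOf_eq]
      constructor
      · rintro ⟨h1, hmem⟩
        have ha : a = u := h1
        subst ha
        exact ⟨b, hmem, rfl⟩
      · rintro ⟨i, hmem, heq⟩
        injection heq with h1 h2
        subst h1; subst h2
        exact ⟨rfl, hmem⟩
    have hncard : ((stmt8aux_cover G k ω).L u ∩ S).ncard = (A u).card := by
      rw [hL, Set.ncard_image_of_injective _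
        (fun i j hij => (Prod.ext_iff.1 hij).2), hA]
      exact Set.ncard_eq_toFinset_card' _
    have hm := hmeet u
    rw [(stmt8aux_cover_kfold G k ω) u] at hm
    rw [hncard] at hm
    have hk0 : (0:ℝ) < (k:ℝ) := by exact_mod_cast hk
    have hlt2 : η * k < ((A u).card : ℝ) :=
      lt_of_lt_of_le (mul_lt_mul_of_pos_right hgt hk0) hm
    have hfl : Nat.floor (η*k) < (A u).card := by
      rw [Nat.floor_lt (mul_nonneg hη0 (by positivity))]
      exact hlt2
    omega
  obtain ⟨p, hpD, hnd⟩ := hω A hAcard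
  rw [Finset.not_disjoint_iff] at hnd
  obtain ⟨j, hj1, hj2⟩ := hnd
  rw [Finset.mem_image] at hj1
  obtain ⟨i, hi, rfl⟩ := hj1
  have hS1 : (p.1, i) ∈ S := (hAmem p.1 i).1 hi
  have hS2 : (p.2, (ω p) i) ∈ S := (hAmem p.2 _).1 hj2
  have hpD' := hpD
  rw [stmt8aux_D, Finset.mem_filter] at hpD'
  obtain ⟨-, hadj, hlt⟩ := hpD'
  have hadjH : (stmt8aux_cover G k ω).H.Adj (p.1, i) (p.2, (ω p) i) := by
    refine ⟨?_, Or.inr ⟨hadj, Or.inl ⟨hlt, ?_⟩⟩⟩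
    · intro heq
      exact hadj.ne (congrArg Prod.fst heq)
    · show (ω p) i = (ω (p.1, p.2)) i
      rw [Prod.mk.eta]
  obtain ⟨u, hu1, hu2⟩ := hQI _ hS1 _ hS2 hadjH
  exact hadj.ne ((show p.1 = u from hu1).trans (show p.2 = u from hu2).symm)



end Stmt8Aux

/-- If `G` is a finite simple graph with `|E(G)| ≥ |V(G)| + 1`, then
`χ*_DP(G) > 2`. -/
theorem stmt8 {V : Type} [Fintype V] (G : SimpleGraph V)
    (h : Fintype.card V + 1 ≤ G.edgeSet.ncard) :
    2 < chiDPStar G := by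
  classical
  set Ec := G.edgeSet.ncard with hEc
  have hEc1 : 1 ≤ Ec := by omega
  have hEcR : (1:ℝ) ≤ (Ec:ℝ) := by exact_mod_cast hEc1
  set η : ℝ := 1/2 - 1/(2048 * ((Ec : ℝ))^2) with hη
  have hd0 : (0:ℝ) < 1/(2048*((Ec:ℝ))^2) := by positivity
  have hd1 : 1/(2048*((Ec:ℝ))^2) ≤ 1/2048 := by
    apply one_div_le_one_div_of_le (by norm_num)
    nlinarith
  have hη0 : 0 < η := by rw [hη]; linarith
  have hηlt : η < 1/2 := by rw [hη]; linarith
  have hkey : (ENNReal.ofReal η)⁻¹ ≤ chiDPStar G := by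
    rw [chiDPStar]
    apply le_iInf₂
    intro k hk
    have hth := stmt8aux_theta_le G h k hk
    rw [← hη] at hth
    exact ENNReal.inv_le_inv' (ENNReal.ofReal_le_ofReal hth)
  refine lt_of_lt_of_le ?_ hkey
  have h2 : ENNReal.ofReal η < 2⁻¹ := by
    have he : (2⁻¹ : ENNReal) = ENNReal.ofReal (1/2) := by
      rw [one_div, ENNReal.ofReal_inv_of_pos (by norm_num : (0:ℝ) < 2)]
      norm_num
    rw [he]
    exact (ENNReal.ofReal_lt_ofReal_iff (by norm_num)).2 hηlt
  calc (2:ENNReal) = (2⁻¹)⁻¹ := by rw [inv_inv]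
  _ < (ENNReal.ofReal η)⁻¹ := ENNReal.inv_lt_inv.2 h2
end

section
/- If G is a cycle of even length n ≥ 4, then its fractional DP-chromatic number satisfies χ*_DP(G) = 2. -/
open scoped Classical

open Function Finset
open Fin.NatCast

variable {W : Type} [DecidableEq W]

lemma iter_mem {c : W → W} {s : Finset W} (hmap : ∀ x ∈ s, c x ∈ s)
    {x : W} (hx : x ∈ s) (j : ℕ) : c^[j] x ∈ s := by
  induction j with
  | zero => simpa
  | succ j ih => rw [iterate_succ_apply']; exact hmap _ ih

lemma iter_cancel {c : W → W} {s : Finset W} (hmap : ∀ x ∈ s, c x ∈ s)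
    (hinj : Set.InjOn c ↑s) {x : W} (hx : x ∈ s) :
    ∀ i d : ℕ, c^[i] x = c^[i + d] x → x = c^[d] x := by
  intro i
  induction i with
  | zero => intro d h; simpa using h
  | succ i ih =>
    intro d h
    apply ih
    have h1 : c^[i + 1] x = c^[(i + d) + 1] x := by
      rw [show (i+d)+1 = (i+1)+d by omega]; exact h
    rw [iterate_succ_apply', iterate_succ_apply'] at h1
    exact hinj (iter_mem hmap hx i) (iter_mem hmap hx (i + d)) h1

lemma mem_periodic {c : W → W} {s : Finset W} (hmap : ∀ x ∈ s, c x ∈ s)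
    (hinj : Set.InjOn c ↑s) {x : W} (hx : x ∈ s) : x ∈ periodicPts c := by
  obtain ⟨i, hi, j, hj, hne, heq⟩ :=
    Finset.exists_ne_map_eq_of_card_lt_of_maps_to (s := Finset.range (s.card + 1))
      (t := s) (by simp) (fun j _ => iter_mem hmap hx j)
  rcases Ne.lt_or_gt hne with h | h
  · have := iter_cancel hmap hinj hx i (j - i) (by rw [Nat.add_sub_cancel' h.le]; exact heq)
    exact mk_mem_periodicPts (n := j - i) (by omega) this.symm
  · have := iter_cancel hmap hinj hx j (i - j) (by rw [Nat.add_sub_cancel' h.le]; exact heq.symm)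
    exact mk_mem_periodicPts (n := i - j) (by omega) this.symm

lemma core (c : W → W) : ∀ (N : ℕ) (s : Finset W), s.card ≤ N →
    (∀ x ∈ s, c x ∈ s) → Set.InjOn c ↑s → ∀ m, m ≤ s.card →
    ∃ A B : Finset W, A ⊆ s ∧ B ⊆ s ∧ Disjoint A B ∧ (∀ x ∈ B, c x ∉ A) ∧
      A.card = m ∧ s.card ≤ B.card + m + 1 := by
  intro N
  induction N with
  | zero =>
    intro s hs _ _ m hm
    have hm0 : m = 0 := by omega
    subst hm0
    exact ⟨∅, ∅, by simp, by simp, by simp, by simp, by simp, by simp; omega⟩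
  | succ N ih =>
    intro s hs hmap hinj m hm
    rcases s.eq_empty_or_nonempty with rfl | ⟨x, hx⟩
    · have hm0 : m = 0 := by simpa using hm
      subst hm0
      exact ⟨∅, ∅, by simp, by simp, by simp, by simp, by simp, by simp⟩
    set ℓ := minimalPeriod c x with hℓdef
    have hℓ : 0 < ℓ := minimalPeriod_pos_of_mem_periodicPts (mem_periodic hmap hinj hx)
    set e : ℕ → W := fun j => c^[j] x with he
    have einj : ∀ i < ℓ, ∀ j < ℓ, e i = e j → i = j := by
      intro i hi j hj hij
      exact iterate_injOn_Iio_minimalPeriod (f := c) (x := x) hi hj hij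
    set O : Finset W := (Finset.range ℓ).image e with hO
    have hOs : O ⊆ s := by
      intro y hy
      simp only [hO, mem_image, mem_range] at hy
      obtain ⟨j, _, rfl⟩ := hy
      exact iter_mem hmap hx j
    have hOcard : O.card = ℓ := by
      rw [hO, Finset.card_image_of_injOn, Finset.card_range]
      intro i hi j hj hij
      exact einj i (by simpa using hi) j (by simpa using hj) hij
    have hmemO : ∀ j, e j ∈ O := by
      intro j
      have : e j = e (j % ℓ) := (iterate_mod_minimalPeriod_eq).symm
      rw [this]
      simp only [hO, mem_image, mem_range]
      exact ⟨j % ℓ, Nat.mod_lt _ hℓ, rfl⟩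
    have hOclosed : ∀ y ∈ O, c y ∈ O := by
      intro y hy
      simp only [hO, mem_image, mem_range] at hy
      obtain ⟨j, hj, rfl⟩ := hy
      have : c (e j) = e (j + 1) := (iterate_succ_apply' c j x).symm
      rw [this]; exact hmemO (j + 1)
    have hOpull : ∀ y ∈ s, c y ∈ O → y ∈ O := by
      intro y hy hcy
      have himg : O.image c = O := by
        apply Finset.eq_of_subset_of_card_le
        · intro z hz; simp only [mem_image] at hz; obtain ⟨w, hw, rfl⟩ := hz
          exact hOclosed w hw
        · rw [Finset.card_image_of_injOn (hinj.mono (by exact_mod_cast hOs))]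
      rw [← himg, mem_image] at hcy
      obtain ⟨z, hz, hzy⟩ := hcy
      rwa [← hinj (hOs hz) hy hzy]
    by_cases hmℓ : m < ℓ
    · -- split case: no recursion
      set A : Finset W := (Finset.range m).image e with hA
      have hAO : A ⊆ O := by
        intro y hy; simp only [hA, mem_image, mem_range] at hy
        obtain ⟨j, hj, rfl⟩ := hy; exact hmemO j
      have hAcard : A.card = m := by
        rw [hA, Finset.card_image_of_injOn, Finset.card_range]
        intro i hi j hj hij
        exact einj i (by simp at hi; omega) j (by simp at hj; omega) hij
      have hlast : e (ℓ - 1) ∉ A := by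
        intro h
        simp only [hA, mem_image, mem_range] at h
        obtain ⟨j, hj, hje⟩ := h
        have := einj j (by omega) (ℓ - 1) (by omega) hje
        omega
      set B : Finset W := s \ (insert (e (ℓ - 1)) A) with hB
      have hsub : insert (e (ℓ - 1)) A ⊆ s := by
        refine Finset.insert_subset (hOs (hmemO _)) (hAO.trans hOs)
      refine ⟨A, B, hAO.trans hOs, Finset.sdiff_subset, ?_, ?_, hAcard, ?_⟩
      · refine Finset.disjoint_left.mpr fun y hy hyB => ?_
        rw [hB, Finset.mem_sdiff] at hyB
        exact hyB.2 (Finset.mem_insert_of_mem hy)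
      · -- constraint
        intro y hy hcA
        rw [hB, Finset.mem_sdiff] at hy
        obtain ⟨hys, hyn⟩ := hy
        have hyO : y ∈ O := hOpull y hys (hAO hcA)
        simp only [hO, mem_image, mem_range] at hyO
        obtain ⟨j, hj, rfl⟩ := hyO
        have hjm : ¬ j < m := fun h =>
          hyn (Finset.mem_insert_of_mem (Finset.mem_image.mpr ⟨j, Finset.mem_range.mpr h, rfl⟩))
        have hjl : j ≠ ℓ - 1 := by
          intro h; exact hyn (by rw [h]; exact Finset.mem_insert_self _ _)
        have hstep : c (e j) = e (j + 1) := (iterate_succ_apply' c j x).symm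
        rw [hstep] at hcA
        simp only [hA, mem_image, mem_range] at hcA
        obtain ⟨j', hj', hje⟩ := hcA
        have := einj j' (by omega) (j + 1) (by omega) hje
        omega
      · have : (insert (e (ℓ - 1)) A).card = m + 1 := by
          rw [Finset.card_insert_of_notMem hlast, hAcard]
        rw [hB, Finset.card_sdiff_of_subset hsub, this]
        have := Finset.card_le_card hsub
        omega
    · -- recurse on s \ O
      push_neg at hmℓ
      set s' : Finset W := s \ O with hs'
      have hs'card : s'.card = s.card - ℓ := by
        rw [hs', Finset.card_sdiff_of_subset hOs, hOcard]
      have hs'map : ∀ y ∈ s', c y ∈ s' := by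
        intro y hy
        rw [hs', Finset.mem_sdiff] at hy ⊢
        exact ⟨hmap y hy.1, fun h => hy.2 (hOpull y hy.1 h)⟩
      have hOcards : ℓ ≤ s.card := hOcard ▸ Finset.card_le_card hOs
      obtain ⟨A', B', hA's, hB's, hdisj, hcon, hA'card, hbound⟩ :=
        ih s' (by rw [hs'card]; omega) hs'map (hinj.mono (by exact_mod_cast Finset.sdiff_subset))
          (m - ℓ) (by omega)
      refine ⟨A' ∪ O, B', Finset.union_subset (hA's.trans Finset.sdiff_subset) hOs,
        hB's.trans Finset.sdiff_subset, ?_, ?_, ?_, ?_⟩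
      · refine Finset.disjoint_union_left.mpr ⟨hdisj, ?_⟩
        refine Finset.disjoint_left.mpr fun y hy hyB => ?_
        exact (Finset.mem_sdiff.mp (hB's hyB)).2 hy
      · intro y hy
        rw [Finset.mem_union]
        rintro (h | h)
        · exact hcon y hy h
        · exact (Finset.mem_sdiff.mp (hs'map y (hB's hy))).2 h
      · rw [Finset.card_union_of_disjoint, hA'card, hOcard]
        · omega
        · refine Finset.disjoint_left.mpr fun y hy hyO => ?_
          exact (Finset.mem_sdiff.mp (hA's hy)).2 hyO
      · omega
open Finset

variable {W : Type} [DecidableEq W]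

lemma extend_matching (s t : Finset W) (hcard : s.card = t.card) (r : W → W → Prop)
    [DecidablePred fun x => ∃ y ∈ t, r x y]
    (huniq : ∀ x ∈ s, ∀ y ∈ t, ∀ y' ∈ t, r x y → r x y' → y = y')
    (huniq' : ∀ x ∈ s, ∀ x' ∈ s, ∀ y ∈ t, r x y → r x' y → x = x') :
    ∃ f : W → W, (∀ x ∈ s, f x ∈ t) ∧ Set.InjOn f ↑s ∧
      (∀ x ∈ s, ∀ y ∈ t, r x y → f x = y) := by
  classical
  set d : Finset W := s.filter (fun x => ∃ y ∈ t, r x y) with hd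
  set p : W → W := fun x => if h : ∃ y ∈ t, r x y then h.choose else x with hp
  have hpt : ∀ x ∈ d, p x ∈ t ∧ r x (p x) := by
    intro x hx
    rw [hd, mem_filter] at hx
    rw [hp]
    simp only [dif_pos hx.2]
    exact ⟨hx.2.choose_spec.1, hx.2.choose_spec.2⟩
  have hds : d ⊆ s := filter_subset _ _
  have hpinj : Set.InjOn p ↑d := by
    intro x hx x' hx' hxx
    rw [Finset.mem_coe] at hx hx'
    have h1 := hpt x hx
    have h2 := hpt x' hx'
    exact huniq' x (hds hx) x' (hds hx') (p x) h1.1 h1.2 (hxx ▸ h2.2)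
  set ri : Finset W := d.image p with hri
  have hrit : ri ⊆ t := by
    intro y hy; rw [hri, mem_image] at hy; obtain ⟨x, hx, rfl⟩ := hy
    exact (hpt x hx).1
  have hricard : ri.card = d.card := Finset.card_image_of_injOn hpinj
  have hcard2 : (s \ d).card = (t \ ri).card := by
    rw [Finset.card_sdiff_of_subset hds, Finset.card_sdiff_of_subset hrit, hcard, hricard]
  set g := Finset.equivOfCardEq hcard2 with hg
  set f : W → W := fun x =>
    if hx : x ∈ d then p x else if hx' : x ∈ s \ d then (g ⟨x, hx'⟩ : W) else x with hf
  have hfd : ∀ x ∈ d, f x = p x := fun x hx => by rw [hf]; simp [hx]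
  have hfu : ∀ (x) (hx' : x ∈ s \ d), f x = (g ⟨x, hx'⟩ : W) := by
    intro x hx'
    have : x ∉ d := (mem_sdiff.mp hx').2
    rw [hf]; simp [this, hx']
  refine ⟨f, ?_, ?_, ?_⟩
  · intro x hx
    by_cases hxd : x ∈ d
    · rw [hfd x hxd]; exact (hpt x hxd).1
    · have hx' : x ∈ s \ d := mem_sdiff.mpr ⟨hx, hxd⟩
      rw [hfu x hx']
      exact (mem_sdiff.mp (g ⟨x, hx'⟩).2).1
  · intro x hx x' hx' hxx
    simp only [Finset.mem_coe] at hx hx'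
    by_cases h1 : x ∈ d <;> by_cases h2 : x' ∈ d
    · exact hpinj (by exact_mod_cast h1) (by exact_mod_cast h2) (by rwa [hfd x h1, hfd x' h2] at hxx)
    · exfalso
      have hm2 : x' ∈ s \ d := mem_sdiff.mpr ⟨hx', h2⟩
      rw [hfd x h1, hfu x' hm2] at hxx
      have : p x ∈ ri := mem_image.mpr ⟨x, h1, rfl⟩
      have h3 : ((g ⟨x', hm2⟩ : W)) ∈ t \ ri := (g ⟨x', hm2⟩).2
      rw [← hxx] at h3
      exact (mem_sdiff.mp h3).2 this
    · exfalso
      have hm1 : x ∈ s \ d := mem_sdiff.mpr ⟨hx, h1⟩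
      rw [hfd x' h2, hfu x hm1] at hxx
      have : p x' ∈ ri := mem_image.mpr ⟨x', h2, rfl⟩
      have h3 : ((g ⟨x, hm1⟩ : W)) ∈ t \ ri := (g ⟨x, hm1⟩).2
      rw [hxx] at h3
      exact (mem_sdiff.mp h3).2 this
    · have hm1 : x ∈ s \ d := mem_sdiff.mpr ⟨hx, h1⟩
      have hm2 : x' ∈ s \ d := mem_sdiff.mpr ⟨hx', h2⟩
      rw [hfu x hm1, hfu x' hm2] at hxx
      have h4 := g.injective (Subtype.ext hxx)
      exact congrArg Subtype.val h4
  · intro x hx y hy hr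
    have hxd : x ∈ d := by rw [hd, mem_filter]; exact ⟨hx, y, hy, hr⟩
    rw [hfd x hxd]
    exact huniq x hx (p x) (hpt x hxd).1 y hy (hpt x hxd).2 hr

lemma adj_succ_fin (n : ℕ) [NeZero n] (hn : 4 ≤ n) (u : Fin n) :
    (SimpleGraph.cycleGraph n).Adj u (u + 1) := by
  rw [SimpleGraph.cycleGraph_adj']
  right
  simp [Fin.val_one', Nat.mod_eq_of_lt (show 1 < n by omega)]

lemma cycle_adj_nat (n : ℕ) [NeZero n] (hn : 4 ≤ n) (a b : ℕ) (ha : a < n) (hb : b < n)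
    (hadj : (SimpleGraph.cycleGraph n).Adj (a : Fin n) (b : Fin n)) :
    b = a + 1 ∨ a = b + 1 ∨ (a = n-1 ∧ b = 0) ∨ (b = n-1 ∧ a = 0) := by
  rw [SimpleGraph.cycleGraph_adj'] at hadj
  have key : ∀ x y : ℕ, x < n → y < n → ((x : Fin n) - (y : Fin n)).val = 1 →
      x = y + 1 ∨ (x = 0 ∧ y = n - 1) := by
    intro x y hx hy hxy
    rw [Fin.sub_def] at hxy
    simp only [Fin.val_cast_of_lt hx, Fin.val_cast_of_lt hy] at hxy
    rcases le_or_gt y x with h1 | h1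
    · rw [show n - y + x = n + (x - y) by omega, Nat.add_mod_left,
        Nat.mod_eq_of_lt (by omega)] at hxy
      omega
    · rw [Nat.mod_eq_of_lt (by omega)] at hxy
      omega
  rcases hadj with h | h
  · rcases key a b ha hb h with h' | h' <;> omega
  · rcases key b a hb ha h with h' | h' <;> omega

lemma frac_coloring (n k : ℕ) (hn : 4 ≤ n) (heven : Even n) (hk : 3 ≤ k)
    (C : DPCover (SimpleGraph.cycleGraph n)) (hC : C.IsKFold k) :
    C.HasFracColoring (((k : ℝ) - 2) / (2 * k)) := by
  classical
  haveI : NeZero n := ⟨by omega⟩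
  letI : Fintype C.W := C.Wfin
  -- lists indexed by naturals
  set Lst : ℕ → Set C.W := fun j => C.L ((j : ℕ) : Fin n) with hLst
  have hfin : ∀ j, (Lst j).Finite := fun j => Set.toFinite _
  set LF : ℕ → Finset C.W := fun j => (hfin j).toFinset with hLF
  have hmemLF : ∀ j x, x ∈ LF j ↔ x ∈ Lst j := fun j x => Set.Finite.mem_toFinset _
  have hcard : ∀ j, (LF j).card = k := by
    intro j
    rw [hLF]
    rw [← Set.ncard_eq_toFinset_card (Lst j) (hfin j)]
    exact hC ((j : ℕ) : Fin n)
  have hcastsucc : ∀ j : ℕ, ((j + 1 : ℕ) : Fin n) = (j : Fin n) + 1 := by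
    intro j; push_cast; ring
  have hadjsucc : ∀ j : ℕ, (SimpleGraph.cycleGraph n).Adj ((j : ℕ) : Fin n) ((j + 1 : ℕ) : Fin n) := by
    intro j; rw [hcastsucc j]; exact adj_succ_fin n hn _
  -- extend the matchings to injections
  have hext0 : ∀ j : ℕ, ∃ f : C.W → C.W, (∀ x ∈ LF j, f x ∈ LF (j+1)) ∧
      Set.InjOn f ↑(LF j) ∧ (∀ x ∈ LF j, ∀ y ∈ LF (j+1), C.H.Adj x y → f x = y) := by
    intro j
    apply extend_matching (LF j) (LF (j+1)) (by rw [hcard, hcard]) C.H.Adj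
    · intro x hx y hy y' hy' h h'
      exact C.matching _ _ (hadjsucc j) x ((hmemLF j x).mp hx) y ((hmemLF _ y).mp hy)
        y' ((hmemLF _ y').mp hy') h h'
    · intro x hx x' hx' y hy h h'
      exact C.matching _ _ (hadjsucc j).symm y ((hmemLF _ y).mp hy) x ((hmemLF j x).mp hx)
        x' ((hmemLF j x').mp hx') h.symm h'.symm
  choose f hfmap hfinj hfext using hext0
  -- transport maps
  set Φ : ℕ → C.W → C.W := fun j => Nat.rec (motive := fun _ => C.W → C.W) id (fun i g => f i ∘ g) j with hΦ
  have hΦ0 : ∀ x, Φ 0 x = x := fun x => rfl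
  have hΦs : ∀ j x, Φ (j+1) x = f j (Φ j x) := fun j x => rfl
  have hΦmem : ∀ j, ∀ x ∈ LF 0, Φ j x ∈ LF j := by
    intro j
    induction j with
    | zero => intro x hx; exact hx
    | succ j ih => intro x hx; rw [hΦs]; exact hfmap j _ (ih x hx)
  have hΦinj : ∀ j, Set.InjOn (Φ j) ↑(LF 0) := by
    intro j
    induction j with
    | zero => exact fun x _ y _ h => h
    | succ j ih =>
      intro x hx y hy h
      rw [hΦs, hΦs] at h
      exact ih hx hy (hfinj j (hΦmem j x hx) (hΦmem j y hy) h)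
  -- list n is list 0
  have hLstn : Lst n = Lst 0 := by
    rw [hLst]
    simp only []
    congr 1
    rw [Fin.natCast_self]
    norm_num
  have hLFn : LF n = LF 0 := by
    ext x; rw [hmemLF, hmemLF, hLstn]
  -- the permutation
  have hcmap : ∀ x ∈ LF 0, Φ n x ∈ LF 0 := by
    intro x hx; rw [← hLFn]; exact hΦmem n x hx
  obtain ⟨A, B, hAs, hBs, hABdisj, hABcon, hAcard, hBcard⟩ :=
    core (Φ n) k (LF 0) (by rw [hcard]) hcmap (hΦinj n) (k / 2) (by rw [hcard]; omega)
  -- patterns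
  set pat : ℕ → Finset C.W := fun j => if j % 2 = 0 then A else B with hpat
  have hpats : ∀ j, pat j ⊆ LF 0 := by
    intro j; rw [hpat]; dsimp only; split <;> assumption
  have hpatdisj : ∀ j, Disjoint (pat j) (pat (j+1)) := by
    intro j
    rw [hpat]; dsimp only
    rcases Nat.even_or_odd j with hj | hj
    · have h0 : j % 2 = 0 := Nat.even_iff.mp hj
      rw [if_pos h0, if_neg (by omega)]
      exact hABdisj
    · have h0 : j % 2 = 1 := Nat.odd_iff.mp hj
      rw [if_neg (by omega), if_pos (by omega)]
      exact hABdisj.symm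
  -- the quasi-independent set
  set S : Set C.W := ⋃ j ∈ Finset.range n, (Φ j '' ↑(pat j)) with hS
  have hsub : ∀ j, Φ j '' ↑(pat j) ⊆ Lst j := by
    intro j x hx
    obtain ⟨p, hp, rfl⟩ := hx
    exact (hmemLF j _).mp (hΦmem j p (hpats j hp))
  -- consecutive constraint
  have hcons : ∀ j : ℕ, ∀ x ∈ Φ j '' ↑(pat j), ∀ y ∈ Φ (j+1) '' ↑(pat (j+1)),
      C.H.Adj x y → False := by
    intro j x hx y hy hadj
    obtain ⟨p, hp, rfl⟩ := hx
    obtain ⟨q, hq, rfl⟩ := hy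
    have hxm : Φ j p ∈ LF j := hΦmem j p (hpats j hp)
    have hym : Φ (j+1) q ∈ LF (j+1) := hΦmem (j+1) q (hpats (j+1) hq)
    have he : f j (Φ j p) = Φ (j+1) q := hfext j _ hxm _ hym hadj
    rw [← hΦs j p] at he
    have : p = q := hΦinj (j+1) (hpats j hp) (hpats (j+1) hq) he
    subst this
    exact Finset.disjoint_left.mp (hpatdisj j) hp hq
  -- seam constraint
  have hseam : ∀ x ∈ Φ (n-1) '' ↑(pat (n-1)), ∀ y ∈ Φ 0 '' ↑(pat 0),
      C.H.Adj x y → False := by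
    intro x hx y hy hadj
    obtain ⟨p, hp, rfl⟩ := hx
    obtain ⟨q, hq, hyq⟩ := hy
    rw [hΦ0 q] at hyq
    subst hyq
    have hn1 : n - 1 + 1 = n := by omega
    have hxm : Φ (n-1) p ∈ LF (n-1) := hΦmem (n-1) p (hpats (n-1) hp)
    have hym : q ∈ LF (n-1+1) := by rw [hn1, hLFn]; exact hpats 0 hq
    have he : f (n-1) (Φ (n-1) p) = q := hfext (n-1) _ hxm _ hym hadj
    rw [← hΦs (n-1) p, hn1] at he
    -- q = Φ n p, p ∈ B, q ∈ A: contradiction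
    have hpB : p ∈ B := by
      have h1 : (n-1) % 2 = 1 := by
        obtain ⟨t, ht⟩ := heven; omega
      rw [hpat] at hp; dsimp only at hp; rw [if_neg (by omega)] at hp; exact hp
    have hqA : q ∈ A := by
      rw [hpat] at hq; dsimp only at hq; rw [if_pos (by omega)] at hq; exact hq
    exact hABcon p hpB (he ▸ hqA)
  -- quasi-independence
  have hqi : C.QuasiIndep S := by
    intro x hx y hy hadj
    rw [hS] at hx hy
    simp only [Set.mem_iUnion, Finset.mem_range] at hx hy
    obtain ⟨j, hj, hxj⟩ := hx
    obtain ⟨j', hj', hyj⟩ := hy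
    by_cases hjj : j = j'
    · subst hjj
      exact ⟨((j : ℕ) : Fin n), hsub j hxj, hsub j hyj⟩
    · exfalso
      have hfne : ((j : ℕ) : Fin n) ≠ ((j' : ℕ) : Fin n) := by
        intro hc
        apply hjj
        have := congrArg Fin.val hc
        rwa [Fin.val_cast_of_lt hj, Fin.val_cast_of_lt hj'] at this
      have hGadj : (SimpleGraph.cycleGraph n).Adj ((j : ℕ) : Fin n) ((j' : ℕ) : Fin n) :=
        C.cross _ _ hfne ⟨x, hsub j hxj, y, hsub j' hyj, hadj⟩
      rcases cycle_adj_nat n hn j j' hj hj' hGadj with h | h | ⟨h1, h2⟩ | ⟨h1, h2⟩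
      · exact hcons j x hxj y (h ▸ hyj) hadj
      · exact hcons j' y hyj x (h ▸ hxj) hadj.symm
      · exact hseam x (h1 ▸ hxj) y (h2 ▸ hyj) hadj
      · exact hseam y (h1 ▸ hyj) x (h2 ▸ hxj) hadj.symm
  -- counting
  refine ⟨S, hqi, ?_⟩
  intro u
  have hinter : C.L u ∩ S = Φ u.val '' ↑(pat u.val) := by
    apply Set.Subset.antisymm
    · rintro x ⟨hxL, hxS⟩
      rw [hS] at hxS
      simp only [Set.mem_iUnion, Finset.mem_range] at hxS
      obtain ⟨j, hj, hxj⟩ := hxS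
      have hxLj : x ∈ C.L ((j : ℕ) : Fin n) := hsub j hxj
      have huj : ((j : ℕ) : Fin n) = u := by
        obtain ⟨w, hw1, hw2⟩ := C.part x
        rw [hw2 _ hxLj, hw2 _ hxL]
      have : j = u.val := by
        have := congrArg Fin.val huj
        rwa [Fin.val_cast_of_lt hj] at this
      rwa [this] at hxj
    · intro x hx
      constructor
      · have h2 : x ∈ C.L (((u.val : ℕ)) : Fin n) := hsub u.val hx
        rwa [Fin.cast_val_eq_self u] at h2
      · rw [hS]
        simp only [Set.mem_iUnion, Finset.mem_range]
        exact ⟨u.val, u.isLt, hx⟩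
  rw [hinter, hC u]
  rw [Set.ncard_image_of_injOn ((hΦinj u.val).mono (by exact_mod_cast hpats u.val)),
    Set.ncard_coe_finset]
  -- arithmetic
  have hklow : k ≤ 2 * (pat u.val).card + 2 := by
    have h0 := hcard 0
    rw [hpat]; dsimp only; split
    · omega
    · omega
  have hc : (k : ℝ) ≤ 2 * ((pat u.val).card : ℝ) + 2 := by exact_mod_cast hklow
  have hkpos : (0 : ℝ) < k := by exact_mod_cast (by omega : 0 < k)
  have heq : ((k : ℝ) - 2) / (2 * k) * k = ((k : ℝ) - 2) / 2 := by
    field_simp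
  rw [heq]
  linarith
open Finset in
noncomputable def canonCover (n k : ℕ) (hn : 4 ≤ n) : DPCover (SimpleGraph.cycleGraph n) where
  W := Fin n × Fin k
  Wfin := inferInstance
  H := { Adj := fun w w' => (w.1 = w'.1 ∧ w.2 ≠ w'.2) ∨
           ((SimpleGraph.cycleGraph n).Adj w.1 w'.1 ∧ w.2 = w'.2)
         symm := ⟨by
           rintro w w' (⟨h1, h2⟩ | ⟨h1, h2⟩)
           · exact Or.inl ⟨h1.symm, h2.symm⟩
           · exact Or.inr ⟨h1.symm, h2.symm⟩⟩
         loopless := ⟨by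
           rintro w (⟨h1, h2⟩ | ⟨h1, h2⟩)
           · exact h2 rfl
           · exact (SimpleGraph.irrefl _) h1⟩ }
  L := fun u => {w | w.1 = u}
  part := fun w => ⟨w.1, rfl, fun u hu => hu.symm⟩
  clique := by
    rintro u x hx y hy hxy
    exact Or.inl ⟨hx.trans hy.symm, fun h2 => hxy (Prod.ext (hx.trans hy.symm) h2)⟩
  cross := by
    rintro u v huv ⟨x, hx, y, hy, (⟨h1, h2⟩ | ⟨h1, h2⟩)⟩
    · exact absurd (hx ▸ hy ▸ h1) huv
    · exact hx ▸ hy ▸ h1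
  matching := by
    rintro u v huv x hx y hy y' hy' (⟨h1, h2⟩ | ⟨h1, h2⟩) (⟨h1', h2'⟩ | ⟨h1', h2'⟩)
    · exact absurd (hx ▸ hy ▸ h1) huv.ne
    · exact absurd (hx ▸ hy ▸ h1) huv.ne
    · exact absurd (hx ▸ hy' ▸ h1') huv.ne
    · exact Prod.ext (hy.trans hy'.symm) (h2.symm.trans h2')

lemma canonCover_isKFold (n k : ℕ) (hn : 4 ≤ n) : (canonCover n k hn).IsKFold k := by
  intro u
  show ({w : Fin n × Fin k | w.1 = u} : Set (Fin n × Fin k)).ncard = k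
  rw [← Nat.card_coe_set_eq]
  have e : ({w : Fin n × Fin k | w.1 = u} : Set (Fin n × Fin k)) ≃ Fin k :=
    { toFun := fun w => w.1.2
      invFun := fun i => ⟨(u, i), rfl⟩
      left_inv := by rintro ⟨⟨w1, w2⟩, hw⟩; simp at hw; subst hw; rfl
      right_inv := fun i => rfl }
  rw [Nat.card_congr e, Nat.card_eq_fintype_card, Fintype.card_fin]

lemma eta_le_half (n k : ℕ) (hn : 4 ≤ n) (heven : Even n) (hk : 1 ≤ k) (η : ℝ) (hη0 : 0 ≤ η)
    (h : ∀ C : DPCover (SimpleGraph.cycleGraph n), C.IsKFold k → C.HasFracColoring η) :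
    η ≤ 1 / 2 := by
  haveI : NeZero n := ⟨by omega⟩
  classical
  obtain ⟨S, hqi, hcount⟩ := h (canonCover n k hn) (canonCover_isKFold n k hn)
  haveI : Fintype ((canonCover n k hn).W) := (canonCover n k hn).Wfin
  haveI : Fintype ↥S := Fintype.ofFinite _
  set Sf : Finset (Fin n × Fin k) := S.toFinset with hSf
  have hmemSf : ∀ w : Fin n × Fin k, w ∈ Sf ↔ w ∈ S := fun w => @Set.mem_toFinset _ S this w
  -- fiber description of L u ∩ S
  have h1 : ∀ u : Fin n, ((canonCover n k hn).L u ∩ S).ncard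
      = (Sf.filter (fun w => w.1 = u)).card := by
    intro u
    rw [← Set.ncard_coe_finset]
    congr 1
    ext w
    simp only [Finset.coe_filter, Set.mem_setOf_eq, Set.mem_inter_iff, ← hSf, hmemSf]
    show w.1 = u ∧ w ∈ S ↔ w ∈ S ∧ w.1 = u
    tauto
  have hsum1 : Sf.card = ∑ u : Fin n, (Sf.filter (fun w => w.1 = u)).card :=
    Finset.card_eq_sum_card_fiberwise (fun w _ => Finset.mem_univ _)
  have hsum2 : Sf.card = ∑ i : Fin k, (Sf.filter (fun w => w.2 = i)).card :=
    Finset.card_eq_sum_card_fiberwise (fun w _ => Finset.mem_univ _)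
  obtain ⟨t, ht⟩ := heven
  have hrow : ∀ i : Fin k, (Sf.filter (fun w => w.2 = i)).card ≤ n / 2 := by
    intro i
    have := Finset.card_range (n / 2)
    rw [← Finset.card_range (n / 2)]
    apply Finset.card_le_card_of_injOn (fun w => w.1.val / 2)
    · intro w _
      rw [Finset.mem_coe, Finset.mem_range]; dsimp only
      have := w.1.isLt
      omega
    · intro w hw w' hw' heq
      have heq' : w.1.val / 2 = w'.1.val / 2 := heq
      simp only [Finset.coe_filter, Set.mem_setOf_eq] at hw hw'
      by_cases hfst : w.1 = w'.1
      · exact Prod.ext hfst (hw.2.trans hw'.2.symm)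
      · exfalso
        have hv : w.1.val ≠ w'.1.val := fun hc => hfst (Fin.ext hc)
        -- the two first coordinates are consecutive, hence adjacent
        have hadj : (SimpleGraph.cycleGraph n).Adj w.1 w'.1 := by
          rcases Nat.lt_or_ge w.1.val w'.1.val with hlt | hge
          · have hsucc : w'.1 = w.1 + 1 := by
              apply Fin.ext
              rw [Fin.add_def]
              simp only [Fin.val_one', Nat.mod_eq_of_lt (show 1 < n by omega)]
              rw [Nat.mod_eq_of_lt (by have := w'.1.isLt; omega)]
              omega
            rw [hsucc]
            exact adj_succ_fin n hn w.1
          · have hsucc : w.1 = w'.1 + 1 := by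
              apply Fin.ext
              rw [Fin.add_def]
              simp only [Fin.val_one', Nat.mod_eq_of_lt (show 1 < n by omega)]
              rw [Nat.mod_eq_of_lt (by have := w.1.isLt; omega)]
              omega
            rw [hsucc]
            exact ((adj_succ_fin n hn w'.1)).symm
        have hadjH : (canonCover n k hn).H.Adj w w' :=
          Or.inr ⟨hadj, hw.2.trans hw'.2.symm⟩
        obtain ⟨u, hu1, hu2⟩ := hqi w ((hmemSf w).mp hw.1) w' ((hmemSf w').mp hw'.1) hadjH
        exact hfst ((show w.1 = u from hu1).trans (show w'.1 = u from hu2).symm)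
  -- total bound
  have htot : Sf.card ≤ (n / 2) * k := by
    rw [hsum2]
    calc ∑ i : Fin k, (Sf.filter (fun w => w.2 = i)).card
        ≤ ∑ _i : Fin k, (n / 2) := Finset.sum_le_sum (fun i _ => hrow i)
      _ = (n / 2) * k := by simp [mul_comm]
  -- lower bound on total
  have hlow : (n : ℝ) * (η * k) ≤ (Sf.card : ℝ) := by
    rw [hsum1]
    push_cast
    calc (n : ℝ) * (η * k) = ∑ _u : Fin n, η * k := by simp [mul_comm]
      _ ≤ ∑ u : Fin n, ((Sf.filter (fun w => w.1 = u)).card : ℝ) := by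
          apply Finset.sum_le_sum
          intro u _
          have := hcount u
          rw [canonCover_isKFold n k hn u] at this
          rw [← h1 u]
          exact this
  have hcast : ((n / 2 : ℕ) : ℝ) = (n : ℝ) / 2 := by
    have h2 : n / 2 = t := by omega
    rw [h2, ht]
    push_cast
    ring
  have hhi : (Sf.card : ℝ) ≤ (n : ℝ) / 2 * k := by
    rw [← hcast]
    exact_mod_cast (Nat.cast_le.mpr htot).trans_eq (by push_cast; ring)
  have hnk : (0 : ℝ) < (n : ℝ) * k := by
    have : (0:ℝ) < (n:ℝ) := by exact_mod_cast (by omega : 0 < n)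
    have : (0:ℝ) < (k:ℝ) := by exact_mod_cast hk
    positivity
  nlinarith [hlow.trans hhi]

/-- If `G` is a cycle of even length `n ≥ 4`, then `χ*_DP(G) = 2`. -/
theorem stmt9 (n : ℕ) (hn : 4 ≤ n) (heven : Even n) :
    chiDPStar (SimpleGraph.cycleGraph n) = 2 := by
  have hθle : ∀ k : ℕ, 1 ≤ k → thetaDP (SimpleGraph.cycleGraph n) k ≤ 1 / 2 := by
    intro k hk
    apply Real.sSup_le _ (by norm_num)
    rintro η ⟨hη0, hη1, hηall⟩
    exact eta_le_half n k hn heven hk η hη0 hηall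
  have hθge : ∀ k : ℕ, 3 ≤ k →
      ((k : ℝ) - 2) / (2 * k) ≤ thetaDP (SimpleGraph.cycleGraph n) k := by
    intro k hk
    have hk2 : (2 : ℝ) ≤ (k : ℝ) := by exact_mod_cast (by omega : 2 ≤ k)
    have hkpos : (0 : ℝ) < 2 * k := by
      have : (0 : ℝ) < (k : ℝ) := by linarith
      linarith
    apply le_csSup ⟨1, fun η hη => hη.2.1⟩
    refine ⟨by apply div_nonneg <;> linarith, by rw [div_le_one hkpos]; linarith,
      fun C hC => frac_coloring n k hn heven hk C hC⟩
  have hhalf : ENNReal.ofReal (1 / 2) = 2⁻¹ := by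
    rw [ENNReal.ofReal_div_of_pos (by norm_num)]
    norm_num
  apply le_antisymm
  · apply ENNReal.le_of_forall_pos_le_add
    intro ε hε _
    have hεpos : (0 : ℝ) < (ε : ℝ) := by exact_mod_cast hε
    set k : ℕ := ⌈(4 : ℝ) / ε⌉₊ + 3 with hkdef
    have hk3 : 3 ≤ k := by omega
    have hk1 : k ∈ {k : ℕ | 1 ≤ k} := by
      show 1 ≤ k; omega
    have hkge : 4 / (ε : ℝ) + 3 ≤ (k : ℝ) := by
      have h1 := Nat.le_ceil ((4 : ℝ) / ε)
      have : (k : ℝ) = (⌈(4 : ℝ) / ε⌉₊ : ℝ) + 3 := by rw [hkdef]; push_cast; ring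
      linarith
    have hk2 : (2 : ℝ) < (k : ℝ) := by
      have : (3 : ℝ) ≤ (k : ℝ) := by exact_mod_cast hk3
      linarith
    have hxpos : (0 : ℝ) < ((k : ℝ) - 2) / (2 * k) := by
      apply div_pos <;> linarith
    calc chiDPStar (SimpleGraph.cycleGraph n)
        ≤ (ENNReal.ofReal (thetaDP (SimpleGraph.cycleGraph n) k))⁻¹ := iInf₂_le k hk1
      _ ≤ (ENNReal.ofReal (((k : ℝ) - 2) / (2 * k)))⁻¹ := by
          exact ENNReal.inv_le_inv.mpr (ENNReal.ofReal_le_ofReal (hθge k hk3))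
      _ = ENNReal.ofReal ((((k : ℝ) - 2) / (2 * k))⁻¹) := (ENNReal.ofReal_inv_of_pos hxpos).symm
      _ = ENNReal.ofReal ((2 * k) / ((k : ℝ) - 2)) := by rw [inv_div]
      _ ≤ ENNReal.ofReal (2 + (ε : ℝ)) := by
          apply ENNReal.ofReal_le_ofReal
          rw [div_le_iff₀ (by linarith : (0 : ℝ) < (k : ℝ) - 2)]
          have hmul : (ε : ℝ) * (4 / ε + 3) ≤ (ε : ℝ) * k :=
            mul_le_mul_of_nonneg_left hkge (le_of_lt hεpos)
          have h4 : (ε : ℝ) * (4 / ε) = 4 := by field_simp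
          nlinarith
      _ = 2 + (ε : ENNReal) := by
          rw [ENNReal.ofReal_add (by norm_num) (le_of_lt hεpos),
            ENNReal.ofReal_ofNat, ENNReal.ofReal_coe_nnreal]
  · apply le_iInf₂
    intro k hk
    rw [ENNReal.le_inv_iff_le_inv, ← hhalf]
    exact ENNReal.ofReal_le_ofReal (hθle k hk)
end

section
/- If G is a cycle of even length n ≥ 4, then for every integer k ≥ 1 there exists a k-fold cover 𝓗 of G admitting no (1/2, 𝓗)-coloring; that is, θ_DP(G, k) < 1/2 for all k ≥ 1. -/
open scoped Classical

/- ## Auxiliary construction -/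

namespace Stmt10Aux

variable (n k : ℕ)

/-- the cyclic successor on `Fin n`. -/
def sc (hn : 4 ≤ n) (u : Fin n) : Fin n := ⟨(u.val + 1) % n, Nat.mod_lt _ (by omega)⟩

lemma sc_val_of_lt (hn : 4 ≤ n) (u : Fin n) (h : u.val + 1 < n) :
    (sc n hn u).val = u.val + 1 := Nat.mod_eq_of_lt h

lemma sc_val_last (hn : 4 ≤ n) (u : Fin n) (h : u.val = n - 1) :
    (sc n hn u).val = 0 := by
  simp only [sc]
  have : u.val + 1 = n := by omega
  rw [this, Nat.mod_self]

lemma sc_ne (hn : 4 ≤ n) (u : Fin n) : sc n hn u ≠ u := by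
  intro h
  have h2 := congrArg Fin.val h
  rcases Nat.lt_or_ge (u.val + 1) n with h3 | h3
  · rw [sc_val_of_lt n hn u h3] at h2; omega
  · have h4 : u.val = n - 1 := by have := u.isLt; omega
    rw [sc_val_last n hn u h4] at h2; omega

lemma sc_sc_ne (hn : 4 ≤ n) (u : Fin n) : sc n hn (sc n hn u) ≠ u := by
  intro h
  have h2 := congrArg Fin.val h
  have hu := u.isLt
  rcases Nat.lt_or_ge (u.val + 2) n with h3 | h3
  · rw [sc_val_of_lt n hn _ (by rw [sc_val_of_lt n hn u (by omega)]; omega),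
      sc_val_of_lt n hn u (by omega)] at h2
    omega
  · rcases Nat.lt_or_ge (u.val + 1) n with h4 | h4
    · rw [sc_val_last n hn _ (by rw [sc_val_of_lt n hn u h4]; omega)] at h2
      omega
    · rw [sc_val_of_lt n hn _ (by rw [sc_val_last n hn u (by omega)]; omega),
        sc_val_last n hn u (by omega)] at h2
      omega

lemma adj_sc (hn : 4 ≤ n) (u : Fin n) :
    (SimpleGraph.cycleGraph n).Adj u (sc n hn u) := by
  rw [SimpleGraph.cycleGraph_adj']
  right
  rw [Fin.sub_def]
  have hu := u.isLt
  rcases Nat.lt_or_ge (u.val + 1) n with h3 | h3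
  · have h1 : (sc n hn u).val = u.val + 1 := sc_val_of_lt n hn u h3
    simp only [h1]
    have : n - u.val + (u.val + 1) = n + 1 := by omega
    rw [this, Nat.add_mod_left, Nat.mod_eq_of_lt (by omega)]
  · have h4 : u.val = n - 1 := by omega
    have h1 : (sc n hn u).val = 0 := sc_val_last n hn u h4
    simp only [h1]
    rw [Nat.add_zero, h4]
    have : n - (n - 1) = 1 := by omega
    rw [this, Nat.mod_eq_of_lt (by omega)]

/-- matching permutation along the edge out of `u`: a shift on the last edge,
identity elsewhere. -/
def f (u : Fin n) (i : ZMod k) : ZMod k := if u.val = n - 1 then i + 1 else i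

lemma f_inj (u : Fin n) : Function.Injective (f n k u) := by
  unfold f
  split
  · exact fun a b h => by simpa using h
  · exact fun a b h => h

/-- the cover graph. -/
def Hgraph (hn : 4 ≤ n) : SimpleGraph (Fin n × ZMod k) where
  Adj p q := p ≠ q ∧ (p.1 = q.1 ∨ (q.1 = sc n hn p.1 ∧ q.2 = f n k p.1 p.2)
      ∨ (p.1 = sc n hn q.1 ∧ p.2 = f n k q.1 q.2))
  symm := by
    constructor
    rintro p q ⟨h1, h2⟩
    exact ⟨h1.symm, by tauto⟩
  loopless := ⟨fun p h => h.1 rfl⟩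

/-- The bad `k`-fold cover of the cycle. -/
noncomputable def badCover (hn : 4 ≤ n) (hk : 1 ≤ k) :
    DPCover (SimpleGraph.cycleGraph n) where
  W := Fin n × ZMod k
  Wfin := by
    haveI : NeZero k := ⟨by omega⟩
    infer_instance
  H := Hgraph n k hn
  L u := {p | p.1 = u}
  part x := ⟨x.1, rfl, fun u h => h.symm⟩
  clique u x hx y hy hxy := ⟨hxy, Or.inl (hx.trans hy.symm)⟩
  cross u v huv := by
    rintro ⟨x, hx, y, hy, hadj, hcase⟩
    simp only [Set.mem_setOf_eq] at hx hy
    subst hx; subst hy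
    rcases hcase with h | ⟨h, -⟩ | ⟨h, -⟩
    · exact absurd h huv
    · rw [h]; exact adj_sc n hn x.1
    · rw [h]; exact (adj_sc n hn y.1).symm
  matching u v hG x hx y hy y' hy' hxy hxy' := by
    simp only [Set.mem_setOf_eq] at hx hy hy'
    have hne : u ≠ v := hG.ne
    have key : ∀ z : Fin n × ZMod k, z.1 = v → (Hgraph n k hn).Adj x z →
        (v = sc n hn u ∧ z.2 = f n k u x.2) ∨ (u = sc n hn v ∧ x.2 = f n k v z.2) := by
      rintro z hz ⟨-, h | ⟨h1, h2⟩ | ⟨h1, h2⟩⟩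
      · exact absurd (hx.symm.trans (h.trans hz)) hne
      · left; rw [← hz, ← hx]; exact ⟨h1, h2⟩
      · right; rw [← hz, ← hx]; exact ⟨h1, h2⟩
    have hk1 := key y hy hxy
    have hk2 := key y' hy' hxy'
    have hnot : ¬ (v = sc n hn u ∧ u = sc n hn v) := by
      rintro ⟨h1, h2⟩
      rw [h1] at h2
      exact sc_sc_ne n hn u h2.symm
    rcases hk1 with ⟨ha1, hb1⟩ | ⟨ha1, hb1⟩ <;> rcases hk2 with ⟨ha2, hb2⟩ | ⟨ha2, hb2⟩
    · exact Prod.ext (hy.trans hy'.symm) (hb1.trans hb2.symm)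
    · exact absurd ⟨ha1, ha2⟩ hnot
    · exact absurd ⟨ha2, ha1⟩ hnot
    · exact Prod.ext (hy.trans hy'.symm) (f_inj n k v (hb1.symm.trans hb2))

lemma L_eq (hn : 4 ≤ n) (hk : 1 ≤ k) (u : Fin n) :
    (badCover n k hn hk).L u = (fun i : ZMod k => (u, i)) '' Set.univ := by
  ext p
  simp only [badCover, Set.mem_setOf_eq, Set.image_univ, Set.mem_range]
  constructor
  · intro h; exact ⟨p.2, by rw [← h]; exact rfl⟩
  · rintro ⟨i, rfl⟩; rfl

lemma badCover_isKFold (hn : 4 ≤ n) (hk : 1 ≤ k) :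
    (badCover n k hn hk).IsKFold k := by
  haveI : NeZero k := ⟨by omega⟩
  intro u
  erw [L_eq n k hn hk u, Set.ncard_image_of_injective _ (fun a b h => by
    simpa using congrArg Prod.snd h), Set.ncard_univ, Nat.card_eq_fintype_card,
    ZMod.card]

/-- The core combinatorial lemma: no quasi-independent set can meet every list in
at least `⌈k/2⌉` elements. -/
lemma core (hn : 4 ≤ n) (heven : Even n) (hk : 1 ≤ k)
    (S : Set (Fin n × ZMod k)) (hQ : (badCover n k hn hk).QuasiIndep S)
    (hcard : ∀ u : Fin n, (k + 1) / 2 ≤ ({i : ZMod k | (u, i) ∈ S}).ncard) : False := by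
  haveI : NeZero k := ⟨by omega⟩
  set c : ℕ := (k + 1) / 2 with hc
  set Su : Fin n → Set (ZMod k) := fun u => {i : ZMod k | (u, i) ∈ S} with hSu
  have hcard2 : ∀ u : Fin n, c ≤ (Su u).ncard := fun u => hcard u
  have hc2 : 2 * c = k ∨ 2 * c = k + 1 := by omega
  -- disjointness along identity edges
  have hdisj : ∀ u : Fin n, u.val + 1 < n → Disjoint (Su u) (Su (sc n hn u)) := by
    intro u hu
    rw [Set.disjoint_left]
    intro i hi hi'
    have hadj : (Hgraph n k hn).Adj (u, i) (sc n hn u, i) := by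
      refine ⟨fun h => sc_ne n hn u (congrArg Prod.fst h).symm, Or.inr (Or.inl ⟨rfl, ?_⟩)⟩
      simp only [f]
      rw [if_neg (by omega)]
    obtain ⟨w, hw1, hw2⟩ := hQ (u, i) hi (sc n hn u, i) hi' hadj
    simp only [badCover, Set.mem_setOf_eq] at hw1 hw2
    exact sc_ne n hn u (hw2.trans hw1.symm)
  -- each pair of consecutive sets has total size ≤ k
  have hbound : ∀ u : Fin n, u.val + 1 < n →
      (Su u).ncard + (Su (sc n hn u)).ncard ≤ k := by
    intro u hu
    rw [← Set.ncard_union_eq (hdisj u hu) (Set.toFinite _) (Set.toFinite _)]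
    calc (Su u ∪ Su (sc n hn u)).ncard ≤ (Set.univ : Set (ZMod k)).ncard :=
          Set.ncard_le_ncard (Set.subset_univ _) (Set.toFinite _)
      _ = k := by rw [Set.ncard_univ, Nat.card_eq_fintype_card, ZMod.card]
  set Z : Fin n := ⟨0, by omega⟩ with hZ
  have hZval : Z.val = 0 := rfl
  -- k is even and equals 2c
  have hk2c : k = 2 * c := by
    have h0 := hbound Z (by omega)
    have h1 := hcard2 Z
    have h2 := hcard2 (sc n hn Z)
    omega
  have hcpos : 1 ≤ c := by omega
  -- consecutive sets are complements
  have hcompl : ∀ u : Fin n, u.val + 1 < n → Su (sc n hn u) = (Su u)ᶜ := by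
    intro u hu
    have h1 := hcard2 u
    have h2 := hcard2 (sc n hn u)
    have h3 := hbound u hu
    have hsub : Su (sc n hn u) ⊆ (Su u)ᶜ := by
      rw [Set.subset_compl_iff_disjoint_left]
      exact hdisj u hu
    refine Set.eq_of_subset_of_ncard_le hsub ?_ (Set.toFinite _)
    have hcc : ((Su u)ᶜ).ncard = k - (Su u).ncard := by
      have := Set.ncard_add_ncard_compl (Su u) (Set.toFinite _) (Set.toFinite _)
      rw [Nat.card_eq_fintype_card, ZMod.card] at this
      omega
    omega
  -- by induction, sets alternate
  have halt : ∀ j : ℕ, ∀ h : j < n,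
      Su ⟨j, h⟩ = if Even j then Su Z else (Su Z)ᶜ := by
    intro j
    induction j with
    | zero => intro h; simp [hZ]
    | succ j ih =>
      intro h
      have hj : j < n := by omega
      have hsc : sc n hn ⟨j, hj⟩ = ⟨j + 1, h⟩ := by
        apply Fin.ext
        exact sc_val_of_lt n hn ⟨j, hj⟩ h
      rw [← hsc, hcompl ⟨j, hj⟩ h, ih hj]
      rcases Nat.even_or_odd j with he | ho
      · rw [if_pos he, if_neg (fun h => (Nat.even_add_one.mp h) he)]
      · rw [if_neg (Nat.not_even_iff_odd.mpr ho),
          if_pos (Nat.even_add_one.mpr (Nat.not_even_iff_odd.mpr ho)), compl_compl]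
  -- the last set is the complement of the first
  set E : Fin n := ⟨n - 1, by omega⟩ with hE
  have hEval : E.val = n - 1 := rfl
  have hlast : Su E = (Su Z)ᶜ := by
    rw [hE, halt (n - 1) (by omega), if_neg]
    obtain ⟨m, hm⟩ := heven
    rintro ⟨t, ht⟩
    omega
  -- the twisted edge: Su E is closed under +1
  have hstep : ∀ i : ZMod k, i ∈ Su E → i + 1 ∈ Su E := by
    intro i hi
    have hscE : sc n hn E = Z := by
      apply Fin.ext
      rw [sc_val_last n hn E hEval, hZval]
    have hadj : (Hgraph n k hn).Adj (E, i) (Z, i + 1) := by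
      refine ⟨?_, Or.inr (Or.inl ⟨hscE.symm, ?_⟩)⟩
      · intro hcontra
        have h2 := congrArg (fun p => (Prod.fst p).val) hcontra
        simp only [hEval, hZval] at h2
        omega
      · show i + 1 = f n k E i
        simp only [f, hEval, if_pos]
    have hmem : i + 1 ∉ Su Z := by
      intro hmem
      obtain ⟨w, hw1, hw2⟩ := hQ (E, i) hi (Z, i + 1) hmem hadj
      simp only [badCover, Set.mem_setOf_eq] at hw1 hw2
      have h2 := congrArg Fin.val (hw1.trans hw2.symm)
      rw [hEval, hZval] at h2
      omega
    rw [hlast]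
    exact hmem
  -- conclude : Su E is nonempty and closed under successor, hence everything
  have hne : (Su E).Nonempty := by
    rw [← Set.ncard_pos (Set.toFinite _)]
    have := hcard2 E
    omega
  obtain ⟨i₀, hi₀⟩ := hne
  have hall : ∀ t : ℕ, i₀ + (t : ZMod k) ∈ Su E := by
    intro t
    induction t with
    | zero => simpa using hi₀
    | succ t ih =>
      have heq : i₀ + ((t + 1 : ℕ) : ZMod k) = (i₀ + (t : ZMod k)) + 1 := by
        push_cast
        ring
      rw [heq]
      exact hstep _ ih
  have huniv : Su E = Set.univ := by
    ext j
    simp only [Set.mem_univ, iff_true]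
    have heq : j = i₀ + (((j - i₀).val : ℕ) : ZMod k) := by
      rw [ZMod.natCast_rightInverse (j - i₀)]
      ring
    rw [heq]
    exact hall _
  have hZempty : Su Z = ∅ := by
    have h2 : (Su Z)ᶜ = Set.univ := hlast ▸ huniv
    simpa using congrArg compl h2
  have := hcard2 Z
  rw [hZempty, Set.ncard_empty] at this
  omega

lemma L_inter_ncard (hn : 4 ≤ n) (hk : 1 ≤ k) (S : Set (Fin n × ZMod k)) (u : Fin n) :
    ((badCover n k hn hk).L u ∩ S).ncard = ({i : ZMod k | (u, i) ∈ S}).ncard := by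
  have heq : (badCover n k hn hk).L u ∩ S
      = (fun i : ZMod k => (u, i)) '' {i : ZMod k | (u, i) ∈ S} := by
    ext p
    simp only [badCover, Set.mem_inter_iff, Set.mem_setOf_eq, Set.mem_image]
    constructor
    · rintro ⟨h1, h2⟩
      refine ⟨p.2, ?_, ?_⟩
      · show (u, p.2) ∈ S
        rw [← h1]
        exact h2
      · rw [← h1]
        exact rfl
    · rintro ⟨i, hi, rfl⟩
      exact ⟨rfl, hi⟩
  erw [heq, Set.ncard_image_of_injective _ (fun a b h => by
    simpa using congrArg Prod.snd h)]

/-- Threshold lemma: the bad cover admits no `η`-fractional coloring for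
`η > (⌈k/2⌉ - 1)/k`. -/
lemma no_coloring_above (hn : 4 ≤ n) (heven : Even n) (hk : 1 ≤ k) (η : ℝ)
    (hη : (((k + 1) / 2 : ℕ) : ℝ) - 1 < η * k)
    (h : (badCover n k hn hk).HasFracColoring η) : False := by
  obtain ⟨S, hQ, hmeet⟩ := h
  refine core n k hn heven hk S hQ (fun u => ?_)
  have h1 := hmeet u
  rw [badCover_isKFold n k hn hk u, L_inter_ncard n k hn hk S u] at h1
  have h2 : (((k + 1) / 2 : ℕ) : ℝ) - 1 < (({i : ZMod k | (u, i) ∈ S}).ncard : ℝ) :=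
    lt_of_lt_of_le hη h1
  have h3 : (((k + 1) / 2 : ℕ) : ℝ) < (({i : ZMod k | (u, i) ∈ S}).ncard : ℝ) + 1 := by
    linarith
  have h4 : ((k + 1) / 2 : ℕ) < ({i : ZMod k | (u, i) ∈ S}).ncard + 1 := by
    exact_mod_cast h3
  exact Nat.lt_succ_iff.mp h4

end Stmt10Aux

/-- If `G` is a cycle of even length `n ≥ 4`, then for every integer
`k ≥ 1` there exists a `k`-fold cover `𝓗` of `G` admitting no `(1/2, 𝓗)`-coloring; that is,
`θ_DP(G, k) < 1/2` for all `k ≥ 1`. -/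



theorem stmt10 (n : ℕ) (hn : 4 ≤ n) (heven : Even n) (k : ℕ) (hk : 1 ≤ k) :
    (∃ C : DPCover (SimpleGraph.cycleGraph n), C.IsKFold k ∧
      ¬ C.HasFracColoring (1 / 2)) ∧
    thetaDP (SimpleGraph.cycleGraph n) k < 1 / 2 := by
  set c : ℕ := (k + 1) / 2 with hc
  have hkpos : (0 : ℝ) < k := by exact_mod_cast Nat.lt_of_lt_of_le Nat.zero_lt_one hk
  have hcr : 2 * ((c : ℝ) - 1) < k := by
    have h1 : 2 * c < k + 2 := by omega
    have h2 : ((2 * c : ℕ) : ℝ) < ((k + 2 : ℕ) : ℝ) := by exact_mod_cast h1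
    push_cast at h2
    linarith
  have hthr : ((c : ℝ) - 1) / k < 1 / 2 := by
    rw [div_lt_div_iff₀ hkpos (by norm_num)]
    linarith
  have hkey : ∀ η : ℝ, ((c : ℝ) - 1) / k < η →
      ¬ (Stmt10Aux.badCover n k hn hk).HasFracColoring η := by
    intro η hη h
    refine Stmt10Aux.no_coloring_above n k hn heven hk η ?_ h
    rw [div_lt_iff₀ hkpos] at hη
    exact lt_of_le_of_lt (le_refl _) hη
  refine ⟨⟨Stmt10Aux.badCover n k hn hk, Stmt10Aux.badCover_isKFold n k hn hk,
      hkey (1 / 2) hthr⟩, ?_⟩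
  have hub : ∀ η ∈ {η : ℝ | 0 ≤ η ∧ η ≤ 1 ∧
      ∀ C : DPCover (SimpleGraph.cycleGraph n), C.IsKFold k → C.HasFracColoring η},
      η ≤ ((c : ℝ) - 1) / k := by
    rintro η ⟨h0, h1, hall⟩
    by_contra hgt
    push_neg at hgt
    exact hkey η hgt (hall _ (Stmt10Aux.badCover_isKFold n k hn hk))
  have hnn : 0 ≤ ((c : ℝ) - 1) / k := by
    apply div_nonneg _ (le_of_lt hkpos)
    have h1 : 1 ≤ c := by omega
    have h2 : (1 : ℝ) ≤ (c : ℝ) := by exact_mod_cast h1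
    linarith
  refine lt_of_le_of_lt ?_ hthr
  rw [thetaDP]
  exact Real.sSup_le hub hnn
end

section
/- If G is a cycle of even length n ≥ 4 and k ≥ 1 is an odd integer, then for every k-fold cover 𝓗 of G, G admits an ((k−1)/(2k), 𝓗)-coloring; that is, θ_DP(G, k) ≥ (k−1)/(2k) for every odd k. -/
open scoped Classical

/-!
Extending every matching of the cover to a bijection between consecutive lists only adds
cross-edges, and these bijections glue to a permutation `π` of `V(H)` mapping `L(i)` onto
`L(i+1)`; any `S` with `π(S) ∩ S = ∅` is then quasi-independent. Transported back to `L(0)` along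
the powers of `π`, the whole cover is described by the permutation `σ = πⁿ` of the
`(2m+1)`-set `L(0)`.

Growing `D` along `σ` one element at a time gives `D ⊆ L(0)` of size `m` and `y ∉ D` with
`σ(D) ⊆ D ∪ {y}`; then `A = L(0) \ (D ∪ {y})` also has size `m`. Put `πⁱ(A)` on `L(i)` for even `i`
and `πⁱ(D)` for odd `i`: consecutive sets are disjoint because `A ∩ D = ∅`, and the closing edge
from `L(n-1)` (odd, as `n` is even) back to `L(0)` is harmless because `A ∩ σ(D) = ∅`.
-/

open Finset Equiv

theorem exists_equiv_extend_rel_of_card_eq {α β : Type*} [Finite α] [Finite β]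
    (h : Nat.card α = Nat.card β) {R : α → β → Prop}
    (hfun : ∀ a b b', R a b → R a b' → b = b') (hinj : ∀ a a' b, R a b → R a' b → a = a') :
    ∃ e : α ≃ β, ∀ a b, R a b → e a = b := by
  classical
  have := Fintype.ofFinite α
  have := Fintype.ofFinite β
  rw [Nat.card_eq_fintype_card, Nat.card_eq_fintype_card] at h
  cases isEmpty_or_nonempty β with
  | inl _ => exact ⟨Fintype.equivOfCardEq h, fun _ b => isEmptyElim b⟩
  | inr _ =>
    let f a := Classical.epsilon (R a)
    have hf : ∀ a b, R a b → R a (f a) := fun a b hab => Classical.epsilon_spec ⟨b, hab⟩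
    obtain ⟨g, hg⟩ := Set.MapsTo.exists_equiv_extend_of_card_eq (t := univ)
      (h.trans (card_univ (α := β)).symm) (s := {a | ∃ b, R a b})
      (fun _ _ => Finset.mem_coe.mpr (mem_univ _))
      (fun a ⟨b, hab⟩ a' ⟨b', hab'⟩ hfa =>
        hinj a a' (f a) (hf a b hab) ((congrArg (R a') hfa).mpr (hf a' b' hab')))
    refine ⟨g.trans (Equiv.subtypeUnivEquiv mem_univ), fun a b hab => ?_⟩
    exact (hg a ⟨b, hab⟩).trans (hfun a _ b (hf a b hab) hab)

theorem Equiv.Perm.exists_subset_card_eq_apply_mem_insert {α : Type*} [DecidableEq α]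
    (τ : Perm α) {X : Finset α} (hX : ∀ x ∈ X, τ x ∈ X) {s : ℕ} (hs : s < #X) :
    ∃ D ⊆ X, #D = s ∧ ∃ y ∈ X, y ∉ D ∧ ∀ x ∈ D, τ x ∈ insert y D := by
  induction s with
  | zero =>
    obtain ⟨y, hy⟩ := card_pos.mp hs
    exact ⟨∅, empty_subset _, rfl, y, hy, notMem_empty y, by simp⟩
  | succ s ih =>
    obtain ⟨D, hDX, rfl, y, hyX, hyD, hτD⟩ := ih (by omega)
    have hτD' : ∀ x ∈ insert y D, τ x ∈ insert (τ y) (insert y D) := by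
      intro x hx
      rcases mem_insert.mp hx with rfl | hx
      · exact mem_insert_self _ _
      · exact mem_insert_of_mem (hτD x hx)
    refine ⟨insert y D, insert_subset hyX hDX, card_insert_of_notMem hyD, ?_⟩
    by_cases hτy : τ y ∈ insert y D
    · obtain ⟨z, hzX, hzD⟩ := exists_mem_notMem_of_card_lt_card
        (show #(insert y D) < #X by rw [card_insert_of_notMem hyD]; exact hs)
      refine ⟨z, hzX, hzD, fun x hx => mem_insert_of_mem ?_⟩
      simpa [insert_eq_of_mem hτy] using hτD' x hx
    · exact ⟨τ y, hX y hyX, hτy, hτD'⟩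

theorem Equiv.Perm.exists_disjoint_card_eq_apply_notMem {α : Type*} [DecidableEq α]
    (τ : Perm α) {X : Finset α} (hX : ∀ x ∈ X, τ x ∈ X) {m : ℕ} (hcard : #X = 2 * m + 1) :
    ∃ A ⊆ X, ∃ D ⊆ X, #A = m ∧ #D = m ∧ _root_.Disjoint A D ∧ ∀ x ∈ D, τ x ∉ A := by
  obtain ⟨D, hDX, hDcard, y, hyX, hyD, hτD⟩ :=
    τ.exists_subset_card_eq_apply_mem_insert hX (s := m) (by omega)
  refine ⟨X \ insert y D, sdiff_subset, D, hDX, ?_, hDcard,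
    sdiff_disjoint.mono_right (subset_insert y D), fun x hx hxA => (mem_sdiff.mp hxA).2 (hτD x hx)⟩
  rw [card_sdiff_of_subset (insert_subset hyX hDX), card_insert_of_notMem hyD]
  omega

section AlternatingLift

open Fin.NatCast

variable {W : Type*} {n : ℕ} (π : Perm W) (b : W → Fin n)

-- When `A, D ⊆ b⁻¹(0)`, its trace on `b⁻¹(i)` is `πⁱ(A)` for even `i` and `πⁱ(D)` for odd `i`.
def alternatingLift (A D : Set W) : Set W :=
  {x | (π ^ (b x : ℕ))⁻¹ x ∈ if Even (b x : ℕ) then A else D}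

theorem mem_alternatingLift {A D : Set W} {x : W} :
    x ∈ alternatingLift π b A D ↔ (π ^ (b x : ℕ))⁻¹ x ∈ if Even (b x : ℕ) then A else D :=
  Iff.rfl

variable [NeZero n]

theorem apply_pow_apply_of_apply_eq_add_one (hb : ∀ x, b (π x) = b x + 1) (p : ℕ) (x : W) :
    b ((π ^ p) x) = b x + (p : Fin n) := by
  induction p with
  | zero => simp
  | succ p ih => rw [pow_succ', Perm.mul_apply, hb, ih, Nat.cast_succ, add_assoc]

variable {π b}

theorem apply_notMem_alternatingLift (heven : Even n) (hb : ∀ x, b (π x) = b x + 1)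
    {A D : Set W} (hAD : Disjoint A D) (hDA : ∀ x ∈ D, (π ^ n) x ∉ A) {x : W}
    (hx : x ∈ alternatingLift π b A D) : π x ∉ alternatingLift π b A D := by
  intro hπx
  rw [mem_alternatingLift] at hx hπx
  rw [hb] at hπx
  have hpow : (π ^ ((b x : ℕ) + 1))⁻¹ (π x) = (π ^ (b x : ℕ))⁻¹ x := by
    simp [pow_succ']
  by_cases hlt : (b x : ℕ) + 1 < n
  · rw [Fin.val_add_one_of_lt' hlt, hpow] at hπx
    by_cases he : Even (b x : ℕ)
    · simp only [he, Nat.even_add_one, not_true_eq_false, if_true, if_false] at hx hπx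
      exact Set.disjoint_left.mp hAD hx hπx
    · simp only [he, Nat.even_add_one, not_false_eq_true, if_true, if_false] at hx hπx
      exact Set.disjoint_left.mp hAD hπx hx
  · have hlast : (b x : ℕ) + 1 = n := by have := (b x).isLt; omega
    have hzero : b x + 1 = 0 := by simp [Fin.ext_iff, Fin.val_add, hlast]
    have hodd : ¬ Even (b x : ℕ) := by rw [← Nat.even_add_one, hlast]; exact heven
    have hcycle : (π ^ n) ((π ^ (b x : ℕ))⁻¹ x) = π x := by simp [← hlast, pow_succ']
    rw [hzero] at hπx
    rw [if_neg hodd] at hx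
    have hA : π x ∈ A := by simpa using hπx
    exact hDA _ hx (hcycle ▸ hA)

theorem ncard_le_ncard_inter_alternatingLift [Finite W] (hb : ∀ x, b (π x) = b x + 1)
    {A D : Set W} (hA : ∀ x ∈ A, b x = 0) (hD : ∀ x ∈ D, b x = 0) (u : Fin n) :
    (if Even (u : ℕ) then A else D).ncard ≤ ({x | b x = u} ∩ alternatingLift π b A D).ncard := by
  have hsub : (π ^ (u : ℕ)) '' (if Even (u : ℕ) then A else D) ⊆
      {x | b x = u} ∩ alternatingLift π b A D := by
    rintro _ ⟨a, ha, rfl⟩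
    have hba : b ((π ^ (u : ℕ)) a) = u := by
      have ha0 : b a = 0 := by split_ifs at ha; exacts [hA a ha, hD a ha]
      rw [apply_pow_apply_of_apply_eq_add_one π b hb, ha0, zero_add, Fin.cast_val_eq_self]
    refine ⟨hba, ?_⟩
    rw [mem_alternatingLift, hba]
    simpa using ha
  rw [← Set.ncard_image_of_injective _ (π ^ (u : ℕ)).injective]
  exact Set.ncard_le_ncard hsub

end AlternatingLift

namespace DPCover

variable {V : Type} {G : SimpleGraph V} (C : DPCover G)

instance : Fintype C.W := C.Wfin

noncomputable def vertexOf (x : C.W) : V := (C.part x).exists.choose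

variable {C}

theorem mem_L_iff {x : C.W} {u : V} : x ∈ C.L u ↔ C.vertexOf x = u :=
  ⟨fun hx => ((C.part x).unique hx (C.part x).exists.choose_spec).symm,
    by rintro rfl; exact (C.part x).exists.choose_spec⟩

theorem L_eq (u : V) : C.L u = {x | C.vertexOf x = u} := Set.ext fun _ => mem_L_iff

theorem card_vertexOf_eq {k : ℕ} (hC : C.IsKFold k) (u : V) :
    Nat.card {x // C.vertexOf x = u} = k := by
  rw [← hC u, L_eq, ← Nat.card_coe_set_eq]
  rfl

end DPCover

theorem le_thetaDP {V : Type} {G : SimpleGraph V} {k : ℕ} {η : ℝ} (h0 : 0 ≤ η) (h1 : η ≤ 1)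
    (h : ∀ C : DPCover G, C.IsKFold k → C.HasFracColoring η) : η ≤ thetaDP G k :=
  le_csSup ⟨1, fun _ hη => hη.2.1⟩ ⟨h0, h1, h⟩

theorem SimpleGraph.cycleGraph_adj_iff_eq_add_one {n : ℕ} {u v : Fin (n + 2)} :
    (cycleGraph (n + 2)).Adj u v ↔ u = v + 1 ∨ v = u + 1 := by
  rw [cycleGraph_adj, sub_eq_iff_eq_add, sub_eq_iff_eq_add, add_comm v, add_comm u]

namespace DPCover

variable {n : ℕ} {C : DPCover (SimpleGraph.cycleGraph (n + 2))}

theorem exists_perm_vertexOf_apply_eq_add_one {k : ℕ} (hC : C.IsKFold k) :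
    ∃ π : Perm C.W, (∀ x, C.vertexOf (π x) = C.vertexOf x + 1) ∧
      ∀ x y, C.H.Adj x y → C.vertexOf y = C.vertexOf x + 1 → π x = y := by
  have hadj (u : Fin (n + 2)) : (SimpleGraph.cycleGraph (n + 2)).Adj u (u + 1) :=
    SimpleGraph.cycleGraph_adj_iff_eq_add_one.mpr (Or.inr rfl)
  have hF (u : Fin (n + 2)) : ∃ e : {x // C.vertexOf x = u} ≃ {y // C.vertexOf y = u + 1},
      ∀ x y, C.H.Adj x.1 y.1 → e x = y := by
    refine exists_equiv_extend_rel_of_card_eq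
      ((card_vertexOf_eq hC u).trans (card_vertexOf_eq hC (u + 1)).symm) ?_ ?_
    · exact fun x y y' hy hy' => Subtype.ext <| C.matching u (u + 1) (hadj u) x
        (mem_L_iff.mpr x.2) y (mem_L_iff.mpr y.2) y' (mem_L_iff.mpr y'.2) hy hy'
    · exact fun x x' y hx hx' => Subtype.ext <| C.matching (u + 1) u (hadj u).symm y
        (mem_L_iff.mpr y.2) x (mem_L_iff.mpr x.2) x' (mem_L_iff.mpr x'.2) hx.symm hx'.symm
  choose F hF using hF
  refine ⟨(Equiv.sigmaFiberEquiv C.vertexOf).symm.trans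
    ((Equiv.sigmaCongr (Equiv.addRight 1) F).trans (Equiv.sigmaFiberEquiv C.vertexOf)),
    fun x => (F (C.vertexOf x) ⟨x, rfl⟩).2, fun x y hxy hy => ?_⟩
  exact congrArg Subtype.val (hF (C.vertexOf x) ⟨x, rfl⟩ ⟨y, hy⟩ hxy)

theorem quasiIndep_of_forall_apply_notMem {π : Perm C.W}
    (hπ : ∀ x y, C.H.Adj x y → C.vertexOf y = C.vertexOf x + 1 → π x = y) {S : Set C.W}
    (hS : ∀ x ∈ S, π x ∉ S) : C.QuasiIndep S := by
  intro x hx y hy hxy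
  by_cases h : C.vertexOf x = C.vertexOf y
  · exact ⟨C.vertexOf x, mem_L_iff.mpr rfl, mem_L_iff.mpr h.symm⟩
  rcases SimpleGraph.cycleGraph_adj_iff_eq_add_one.mp
    (C.cross _ _ h ⟨x, mem_L_iff.mpr rfl, y, mem_L_iff.mpr rfl, hxy⟩) with hyx | hxy'
  · exact (hS y hy (by rwa [hπ y x hxy.symm hyx])).elim
  · exact (hS x hx (by rwa [hπ x y hxy hxy'])).elim

theorem hasFracColoring_cycleGraph {m : ℕ} (heven : Even (n + 2)) (hC : C.IsKFold (2 * m + 1)) :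
    C.HasFracColoring (m / (2 * m + 1)) := by
  obtain ⟨π, hπL, hπH⟩ := exists_perm_vertexOf_apply_eq_add_one hC
  set X := (C.L 0).toFinset
  have hX0 : ∀ x ∈ X, C.vertexOf x = 0 := fun x hx => mem_L_iff.mp (Set.mem_toFinset.mp hx)
  have hX : ∀ x ∈ X, (π ^ (n + 2)) x ∈ X := by
    simp [X, mem_L_iff, apply_pow_apply_of_apply_eq_add_one π C.vertexOf hπL]
  have hXcard : #X = 2 * m + 1 := by rw [← hC 0, Set.ncard_eq_toFinset_card']
  obtain ⟨A, hAX, D, hDX, hAcard, hDcard, hAD, hDA⟩ :=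
    (π ^ (n + 2)).exists_disjoint_card_eq_apply_notMem hX hXcard
  refine ⟨alternatingLift π C.vertexOf A D, quasiIndep_of_forall_apply_notMem hπH
    fun x hx => apply_notMem_alternatingLift heven hπL (disjoint_coe.mpr hAD) hDA hx, fun u => ?_⟩
  have hm : m ≤ (C.L u ∩ alternatingLift π C.vertexOf A D).ncard := by
    have h := ncard_le_ncard_inter_alternatingLift hπL (A := A) (D := D)
      (fun x hx => hX0 x (hAX hx)) (fun x hx => hX0 x (hDX hx)) u
    rw [← L_eq] at h
    split_ifs at h <;> simpa [hAcard, hDcard] using h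
  rw [hC u, Nat.cast_add, Nat.cast_mul, Nat.cast_ofNat, Nat.cast_one,
    div_mul_cancel₀ _ (by positivity)]
  exact_mod_cast hm

end DPCover

theorem stmt11_general (n : ℕ) (hn : 4 ≤ n) (heven : Even n) (k : ℕ) (hodd : Odd k) :
    (∀ C : DPCover (SimpleGraph.cycleGraph n), C.IsKFold k →
      C.HasFracColoring (((k : ℝ) - 1) / (2 * (k : ℝ)))) ∧
    ((k : ℝ) - 1) / (2 * (k : ℝ)) ≤ thetaDP (SimpleGraph.cycleGraph n) k := by
  obtain ⟨m, rfl⟩ := hodd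
  obtain ⟨n, rfl⟩ : ∃ n', n = n' + 2 := ⟨n - 2, by omega⟩
  have hη : (((2 * m + 1 : ℕ) : ℝ) - 1) / (2 * ((2 * m + 1 : ℕ) : ℝ)) = m / (2 * m + 1) := by
    push_cast
    field_simp
    ring
  have hcol : ∀ C : DPCover (SimpleGraph.cycleGraph (n + 2)), C.IsKFold (2 * m + 1) →
      C.HasFracColoring (m / (2 * m + 1)) := fun C hC => C.hasFracColoring_cycleGraph heven hC
  rw [hη]
  exact ⟨hcol, le_thetaDP (by positivity) (div_le_one_of_le₀ (by linarith) (by positivity)) hcol⟩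

/-- If `G` is a cycle of even length `n ≥ 4` and `k ≥ 1` is odd, then
every `k`-fold cover `𝓗` of `G` admits a `((k-1)/(2k), 𝓗)`-coloring; that is,
`θ_DP(G, k) ≥ (k-1)/(2k)` for every odd `k`. -/
theorem stmt11 (n : ℕ) (hn : 4 ≤ n) (heven : Even n) (k : ℕ) (hk : 1 ≤ k) (hodd : Odd k) :
    (∀ C : DPCover (SimpleGraph.cycleGraph n), C.IsKFold k →
      C.HasFracColoring (((k : ℝ) - 1) / (2 * (k : ℝ)))) ∧
    ((k : ℝ) - 1) / (2 * (k : ℝ)) ≤ thetaDP (SimpleGraph.cycleGraph n) k :=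
  stmt11_general n hn heven k hodd
end
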